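/- arXiv:1512.03359 — 6 statements merged into one kernel-verified Lean document; each statement's English description precedes it below -/
import Mathlib

section
/- Let w : ℝ² → ℝ be nonnegative and 1-Lipschitz with respect to the L1 metric, let π : [0,1] → ℝ² be a monotone Lipschitz path, let t₀ ∈ [0,1], p = π(t₀), and let c > 0 satisfy w(p) ≥ c. If d1(π(0), p) ≥ c or d1(p, π(1)) ≥ c, then the weighted length of π satisfies ∫₀¹ w(π(t))·‖π'(t)‖₁ dt ≥ c²/2. -/
open MeasureTheory
open Filter Topology intervalIntegral

lemma lipschitz_intervalIntegrable_deriv {L : NNReal} {f : ℝ → ℝ} (hf : LipschitzWith L f)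
    (a b : ℝ) : IntervalIntegrable (deriv f) volume a b := by
  have hm : Measurable (deriv f) := measurable_deriv f
  refine (_root_.intervalIntegrable_const (c := (L:ℝ))).mono_fun hm.aestronglyMeasurable ?_
  refine Eventually.of_forall fun t => ?_
  simpa [Real.norm_eq_abs, abs_of_nonneg] using
    (Real.norm_eq_abs (deriv f t) ▸ norm_deriv_le_of_lipschitz hf (x₀ := t))

lemma lipschitz_integral_deriv {L : NNReal} {f : ℝ → ℝ} (hf : LipschitzWith L f)
    {a b : ℝ} (hab : a ≤ b) : ∫ t in a..b, deriv f t = f b - f a := by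
  have hc : Continuous f := hf.continuous
  have hint : ∀ u v : ℝ, IntervalIntegrable f volume u v := fun u v =>
    hc.intervalIntegrable u v
  set F : ℝ → ℝ := fun x => ∫ t in a..x, f t with hF
  have hFd : ∀ x : ℝ, HasDerivAt F (f x) x := fun x =>
    integral_hasDerivAt_right (hint a x)
      (hc.stronglyMeasurable.stronglyMeasurableAtFilter) hc.continuousAt
  set h : ℕ → ℝ := fun n => ((n:ℝ)+1)⁻¹ with hh
  have hhpos : ∀ n, 0 < h n := fun n => by positivity
  have hh0 : Tendsto h atTop (𝓝 0) := by
    simpa [hh] using (tendsto_one_div_add_atTop_nhds_zero_nat (𝕜 := ℝ)).comp (tendsto_id (α := ℕ))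
  -- slope convergence helper
  have slope_lim : ∀ (g : ℝ → ℝ) (x d : ℝ), HasDerivAt g d x →
      Tendsto (fun n => (g (x + h n) - g x) / h n) atTop (𝓝 d) := by
    intro g x d hg
    have T := hasDerivAt_iff_tendsto_slope.mp hg
    have hx : Tendsto (fun n => x + h n) atTop (𝓝[≠] x) := by
      apply tendsto_nhdsWithin_of_tendsto_nhds_of_eventually_within
      · simpa using (tendsto_const_nhds.add hh0)
      · exact Eventually.of_forall fun n => by
          simp only [Set.mem_compl_iff, Set.mem_singleton_iff]
          have := hhpos n; intro hcon; nlinarith [hcon]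
    have := T.comp hx
    refine this.congr fun n => ?_
    simp only [Function.comp_apply, slope_def_field]
    ring_nf
  -- each difference quotient integral
  have key1 : ∀ n, (∫ t in a..b, (f (t + h n) - f t) / h n)
      = ((F (b + h n) - F b) - (F (a + h n) - F a)) / h n := by
    intro n
    have hint1 : IntervalIntegrable (fun t => f (t + h n)) volume a b := by
      exact (hc.comp (continuous_id.add continuous_const)).intervalIntegrable a b
    have e1 : (∫ t in a..b, (f (t + h n) - f t) / h n)
        = ((∫ t in a..b, f (t + h n)) - ∫ t in a..b, f t) / h n := by
      rw [← integral_sub hint1 (hint a b)]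
      simp [div_eq_mul_inv, intervalIntegral.integral_mul_const]
    rw [e1, integral_comp_add_right]
    have e2 : (∫ t in a + h n..b + h n, f t) = F (b + h n) - F (a + h n) := by
      have := integral_add_adjacent_intervals (hint a (a + h n)) (hint (a + h n) (b + h n))
      have hFb : F (b + h n) = (∫ t in a..a + h n, f t) + ∫ t in a + h n..b + h n, f t := this.symm
      have : F (a + h n) = ∫ t in a..a + h n, f t := rfl
      rw [hFb, this]; ring
    rw [e2]
    have : F b - F a = ∫ t in a..b, f t := by
      have := integral_add_adjacent_intervals (hint a a) (hint a b)
      simp [hF]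
    rw [← this]
    ring_nf
  -- limit of RHS
  have lim1 : Tendsto (fun n => ((F (b + h n) - F b) - (F (a + h n) - F a)) / h n)
      atTop (𝓝 (f b - f a)) := by
    have l1 := slope_lim F b (f b) (hFd b)
    have l2 := slope_lim F a (f a) (hFd a)
    have := l1.sub l2
    refine this.congr fun n => ?_
    field_simp
  -- DCT
  have lim2 : Tendsto (fun n => ∫ t in a..b, (f (t + h n) - f t) / h n)
      atTop (𝓝 (∫ t in a..b, deriv f t)) := by
    apply intervalIntegral.tendsto_integral_filter_of_dominated_convergence (bound := fun _ => (L:ℝ))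
    · exact Eventually.of_forall fun n =>
        ((hc.comp (continuous_id.add continuous_const)).sub hc).div_const (h n)
          |>.aestronglyMeasurable
    · refine Eventually.of_forall fun n => Eventually.of_forall fun t _ => ?_
      have := hf.dist_le_mul (t + h n) t
      rw [Real.dist_eq, Real.dist_eq] at this
      have hpos := hhpos n
      rw [Real.norm_eq_abs, abs_div, abs_of_pos hpos]
      rw [div_le_iff₀ hpos]
      simpa [abs_of_pos hpos] using this
    · exact _root_.intervalIntegrable_const (μ := volume)
    · have hdiff : ∀ᵐ t : ℝ, DifferentiableAt ℝ f t := hf.ae_differentiableAt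
      filter_upwards [hdiff] with t ht _
      exact slope_lim f t (deriv f t) ht.hasDerivAt
  have lim1' : Tendsto (fun n => ∫ t in a..b, (f (t + h n) - f t) / h n)
      atTop (𝓝 (f b - f a)) := by
    simpa only [key1] using lim1
  exact tendsto_nhds_unique lim2 lim1'

lemma clamp_abs_sub (l h a b : ℝ) :
    |min (max a l) h - min (max b l) h| ≤ |a - b| := by
  have key : ∀ x y : ℝ, x ≤ y → min (max y l) h - min (max x l) h ≤ y - x ∧
      0 ≤ min (max y l) h - min (max x l) h := by
    intro x y hxy
    constructor <;> (simp only [min_def, max_def]; split_ifs <;> linarith)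
  rcases le_total a b with hab | hab
  · obtain ⟨h1, h2⟩ := key a b hab
    rw [abs_sub_comm, abs_of_nonneg h2, abs_sub_comm a b, abs_of_nonneg (by linarith)]
    exact h1
  · obtain ⟨h1, h2⟩ := key b a hab
    rw [abs_of_nonneg h2, abs_of_nonneg (by linarith)]
    exact h1

set_option maxHeartbeats 1000000 in
lemma aux_right
    (w : ℝ × ℝ → ℝ) (hw0 : ∀ p, 0 ≤ w p)
    (hwlip : ∀ p q : ℝ × ℝ, |w p - w q| ≤ |p.1 - q.1| + |p.2 - q.2|)
    (π : ℝ → ℝ × ℝ) (K : NNReal) (hπlip : LipschitzWith K π)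
    (hmono1 : MonotoneOn (fun t => (π t).1) (Set.Icc 0 1))
    (hmono2 : MonotoneOn (fun t => (π t).2) (Set.Icc 0 1))
    (t₀ : ℝ) (ht₀ : t₀ ∈ Set.Icc (0:ℝ) 1) (c : ℝ) (hc : 0 < c)
    (hwp : c ≤ w (π t₀))
    (hfar : c ≤ |(π t₀).1 - (π 1).1| + |(π t₀).2 - (π 1).2|) :
    c ^ 2 / 2 ≤ ∫ t in (0:ℝ)..1, w (π t) * (|(deriv π t).1| + |(deriv π t).2|) := by
  have h01 : (0:ℝ) ≤ 1 := zero_le_one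
  have h1mem : (1:ℝ) ∈ Set.Icc (0:ℝ) 1 := ⟨h01, le_rfl⟩
  -- clamp to [0,1]
  set σ : ℝ → ℝ := fun t => max (min t 1) 0 with hσ
  have hσmem : ∀ t, σ t ∈ Set.Icc (0:ℝ) 1 := fun t =>
    ⟨le_max_right _ _, max_le (min_le_right _ _) h01⟩
  have hσid : ∀ t ∈ Set.Icc (0:ℝ) 1, σ t = t := by
    rintro t ⟨h0, h1⟩
    simp [hσ, min_eq_left h1, max_eq_left h0]
  have hσmono : Monotone σ :=
    (monotone_id.min monotone_const).max monotone_const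
  have hσlip : LipschitzWith 1 σ := (LipschitzWith.id.min_const 1).max_const 0
  -- the two coordinates, extended monotonically to ℝ
  set g₁ : ℝ → ℝ := fun t => (π (σ t)).1 with hg₁
  set g₂ : ℝ → ℝ := fun t => (π (σ t)).2 with hg₂
  set f : ℝ → ℝ := fun t => g₁ t + g₂ t with hf
  have hg₁mono : Monotone g₁ := fun s t hst => hmono1 (hσmem s) (hσmem t) (hσmono hst)
  have hg₂mono : Monotone g₂ := fun s t hst => hmono2 (hσmem s) (hσmem t) (hσmono hst)
  have hfmono : Monotone f := hg₁mono.add hg₂mono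
  have hg₁lip : LipschitzWith (1 * K * 1) g₁ :=
    (LipschitzWith.prod_fst.comp hπlip).comp hσlip
  have hg₂lip : LipschitzWith (1 * K * 1) g₂ :=
    (LipschitzWith.prod_snd.comp hπlip).comp hσlip
  have hflip : LipschitzWith (1 * K * 1 + 1 * K * 1) f := hg₁lip.add hg₂lip
  clear_value σ g₁ g₂ f
  -- basic facts on [0,1]
  have hfval : ∀ t ∈ Set.Icc (0:ℝ) 1, f t = (π t).1 + (π t).2 := by
    intro t ht; simp [hf, hg₁, hg₂, hσid t ht]
  have hmono12 : ∀ s t, s ∈ Set.Icc (0:ℝ) 1 → t ∈ Set.Icc (0:ℝ) 1 → s ≤ t →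
      |(π s).1 - (π t).1| + |(π s).2 - (π t).2| = f t - f s := by
    intro s t hs ht hst
    have h1 := hmono1 hs ht hst
    have h2 := hmono2 hs ht hst
    rw [hfval s hs, hfval t ht, abs_sub_comm ((π s).1) _, abs_sub_comm ((π s).2) _,
      abs_of_nonneg (by linarith), abs_of_nonneg (by linarith)]
    ring
  -- distance from t₀ to 1 is at least c
  have hfar' : f t₀ + c ≤ f 1 := by
    have := hmono12 t₀ 1 ht₀ h1mem ht₀.2
    rw [this] at hfar; linarith
  -- find t₁ with f t₁ = f t₀ + c by IVT
  obtain ⟨t₁, ht₁mem, hft₁⟩ : ∃ t₁ ∈ Set.Icc t₀ 1, f t₁ = f t₀ + c := by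
    have hsub := intermediate_value_Icc ht₀.2 (hflip.continuous.continuousOn (s := Set.Icc t₀ 1))
    have : f t₀ + c ∈ Set.Icc (f t₀) (f 1) := ⟨by linarith, hfar'⟩
    obtain ⟨t₁, h₁, h₂⟩ := hsub this
    exact ⟨t₁, h₁, h₂⟩
  have ht₀t₁ : t₀ ≤ t₁ := ht₁mem.1
  have ht₁1 : t₁ ≤ 1 := ht₁mem.2
  have ht₁mem01 : t₁ ∈ Set.Icc (0:ℝ) 1 := ⟨le_trans ht₀.1 ht₀t₁, ht₁1⟩
  -- clamped "progress" function u and potential G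
  set u : ℝ → ℝ := fun t => min (max (f t) (f t₀)) (f t₀ + c) - f t₀ with hu
  clear_value u
  have humem : ∀ t, u t ∈ Set.Icc (0:ℝ) c := by
    intro t
    rw [hu]
    constructor
    · have : f t₀ ≤ min (max (f t) (f t₀)) (f t₀ + c) :=
        le_min (le_max_right _ _) (by linarith)
      simp only []; linarith
    · have : min (max (f t) (f t₀)) (f t₀ + c) ≤ f t₀ + c := min_le_right _ _
      simp only []; linarith
  have hulip : LipschitzWith (1 * K * 1 + 1 * K * 1) u := by
    apply LipschitzWith.of_dist_le_mul
    intro s t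
    have hd := hflip.dist_le_mul s t
    rw [Real.dist_eq] at hd ⊢
    have habs : |u s - u t| ≤ |f s - f t| := by
      simp only [hu, sub_sub_sub_cancel_right]
      exact clamp_abs_sub (f t₀) (f t₀ + c) (f s) (f t)
    exact le_trans habs hd
  set G : ℝ → ℝ := fun t => c * u t - u t ^ 2 / 2 with hG
  clear_value G
  have hGlip : LipschitzWith (c.toNNReal * (1 * K * 1 + 1 * K * 1)) G := by
    apply LipschitzWith.of_dist_le_mul
    intro s t
    have hd := hulip.dist_le_mul s t
    rw [Real.dist_eq] at hd ⊢
    obtain ⟨hs0, hsc⟩ := humem s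
    obtain ⟨ht0, htc⟩ := humem t
    have key : |G s - G t| ≤ c * |u s - u t| := by
      have : G s - G t = (u s - u t) * (c - (u s + u t) / 2) := by
        simp only [hG]; ring
      rw [this, abs_mul, mul_comm]
      apply mul_le_mul_of_nonneg_right _ (abs_nonneg _)
      rw [abs_le]; constructor <;> linarith
    calc |G s - G t| ≤ c * |u s - u t| := key
      _ ≤ c * ((1 * K * 1 + 1 * K * 1) * |s - t|) :=
          mul_le_mul_of_nonneg_left hd hc.le
      _ = ↑(c.toNNReal * (1 * K * 1 + 1 * K * 1)) * |s - t| := by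
          push_cast [Real.coe_toNNReal c hc.le]; ring
  -- values of u and G at the endpoints
  have hut₀ : u t₀ = 0 := by
    simp only [hu, max_self, min_eq_left (by linarith : f t₀ ≤ f t₀ + c), sub_self]
  have hut₁ : u t₁ = c := by
    simp only [hu, hft₁]
    rw [max_eq_left (by linarith), min_eq_right (le_refl _)]
    ring
  have hGint : ∫ t in t₀..t₁, deriv G t = c ^ 2 / 2 := by
    rw [lipschitz_integral_deriv hGlip ht₀t₁]
    simp only [hG, hut₀, hut₁]
    ring
  -- the pointwise a.e. bound
  have key : ∀ᵐ t : ℝ, t ∈ Set.Ioo t₀ t₁ →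
      deriv G t ≤ w (π t) * (|(deriv π t).1| + |(deriv π t).2|) := by
    filter_upwards [hg₁mono.ae_differentiableAt, hg₂mono.ae_differentiableAt]
      with t h1 h2 htmem
    have ht01 : t ∈ Set.Ioo (0:ℝ) 1 :=
      ⟨lt_of_le_of_lt ht₀.1 htmem.1, lt_of_lt_of_le htmem.2 ht₁1⟩
    have htIcc : t ∈ Set.Icc (0:ℝ) 1 := ⟨ht01.1.le, ht01.2.le⟩
    set d₁ := deriv g₁ t with hd₁
    set d₂ := deriv g₂ t with hd₂
    -- derivative of π at t
    have hev : ∀ᶠ s in 𝓝 t, σ s = s := by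
      filter_upwards [isOpen_Ioo.mem_nhds ht01] with s hs
      exact hσid s ⟨hs.1.le, hs.2.le⟩
    have hD1 : HasDerivAt (fun s => (π s).1) d₁ t := by
      apply h1.hasDerivAt.congr_of_eventuallyEq
      filter_upwards [hev] with s hs
      simp [hg₁, hs]
    have hD2 : HasDerivAt (fun s => (π s).2) d₂ t := by
      apply h2.hasDerivAt.congr_of_eventuallyEq
      filter_upwards [hev] with s hs
      simp [hg₂, hs]
    have hπd : HasDerivAt π (d₁, d₂) t := by
      have := hD1.prodMk hD2
      convert this using 1
    have hderivπ : deriv π t = (d₁, d₂) := hπd.deriv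
    -- derivative of G at t
    have hfd : HasDerivAt f (d₁ + d₂) t := by
      rw [hf]; exact h1.hasDerivAt.add h2.hasDerivAt
    have huev : ∀ᶠ s in 𝓝 t, u s = f s - f t₀ := by
      filter_upwards [isOpen_Ioo.mem_nhds htmem] with s hs
      have h1' : f t₀ ≤ f s := hfmono (le_of_lt hs.1)
      have h2' : f s ≤ f t₀ + c := by
        have := hfmono (le_of_lt hs.2)
        rw [hft₁] at this; linarith
      simp only [hu, max_eq_left h1', min_eq_left h2']
    have hud : HasDerivAt u (d₁ + d₂) t := by
      apply HasDerivAt.congr_of_eventuallyEq (f := fun s => f s - f t₀)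
      · exact hfd.sub_const _
      · exact huev
    have hGd : HasDerivAt G ((c * (d₁ + d₂)) - ((2:ℕ) * u t ^ (2 - 1) * (d₁ + d₂) / 2)) t := by
      rw [hG]; exact (hud.const_mul c).sub ((hud.pow 2).div_const 2)
    have hderivG : deriv G t = (c - u t) * (d₁ + d₂) := by
      rw [hGd.deriv]; push_cast; ring
    -- bounds
    have hut : u t = f t - f t₀ := by
      have h1' : f t₀ ≤ f t := hfmono htmem.1.le
      have h2' : f t ≤ f t₀ + c := by
        have := hfmono htmem.2.le
        rw [hft₁] at this; linarith
      simp only [hu, max_eq_left h1', min_eq_left h2']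
    have hwt : c - u t ≤ w (π t) := by
      have := hwlip (π t) (π t₀)
      have hdist := hmono12 t₀ t ht₀ htIcc htmem.1.le
      rw [abs_sub_comm ((π t).1) _, abs_sub_comm ((π t).2) _] at this
      rw [hdist] at this
      have habs := abs_le.mp this
      rw [hut]; linarith [habs.2, habs.1]
    have hu_le : 0 ≤ c - u t := by have := (humem t).2; linarith
    have hwnn := hw0 (π t)
    rw [hderivG, hderivπ]
    have hs_le : d₁ + d₂ ≤ |d₁| + |d₂| :=
      add_le_add (le_abs_self _) (le_abs_self _)
    have habs_nn : (0:ℝ) ≤ |d₁| + |d₂| := by positivity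
    calc (c - u t) * (d₁ + d₂) ≤ (c - u t) * (|d₁| + |d₂|) :=
          mul_le_mul_of_nonneg_left hs_le hu_le
      _ ≤ w (π t) * (|d₁| + |d₂|) := mul_le_mul_of_nonneg_right hwt habs_nn
  -- integrability of the weighted speed
  set Φ : ℝ → ℝ := fun t => w (π t) * (|(deriv π t).1| + |(deriv π t).2|) with hΦ
  have hΦmeas : AEStronglyMeasurable Φ (volume : Measure ℝ) := by
    have h1 : Continuous fun t => w (π t) :=
      (LipschitzWith.of_dist_le_mul (K := 2) (fun p q => by
        have := hwlip p q
        rw [Real.dist_eq]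
        calc |w p - w q| ≤ |p.1 - q.1| + |p.2 - q.2| := this
          _ ≤ dist p q + dist p q := by
              rw [Prod.dist_eq, Real.dist_eq, Real.dist_eq]
              exact add_le_add (le_max_left _ _) (le_max_right _ _)
          _ = 2 * dist p q := by push_cast; ring)).continuous.comp hπlip.continuous
    have h2 : Measurable (deriv π) := measurable_deriv π
    exact (h1.measurable.mul
      (((measurable_fst.comp h2).abs.add (measurable_snd.comp h2).abs))).aestronglyMeasurable
  have hΦnn : ∀ t, 0 ≤ Φ t := fun t => mul_nonneg (hw0 _) (by positivity)
  clear_value Φ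
  have hΦbdd : ∀ t ∈ Set.Icc (0:ℝ) 1, |Φ t| ≤ (w (π t₀) + 2 * K) * (2 * K) := by
    intro t ht
    have hw_le : w (π t) ≤ w (π t₀) + 2 * K := by
      have h := hwlip (π t) (π t₀)
      have hd : |(π t).1 - (π t₀).1| + |(π t).2 - (π t₀).2| ≤ 2 * K := by
        have := hπlip.dist_le_mul t t₀
        rw [Prod.dist_eq, Real.dist_eq] at this
        have h1 : |(π t).1 - (π t₀).1| ≤ K * |t - t₀| :=
          le_trans (by rw [← Real.dist_eq]; exact le_max_left _ _) this
        have h2 : |(π t).2 - (π t₀).2| ≤ K * |t - t₀| :=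
          le_trans (by rw [← Real.dist_eq]; exact le_max_right _ _) this
        have htt₀ : |t - t₀| ≤ 1 := by
          rw [abs_le]; constructor <;> [linarith [ht.1, ht₀.2]; linarith [ht.2, ht₀.1]]
        have hK1 : (K:ℝ) * |t - t₀| ≤ (K:ℝ) * 1 :=
          mul_le_mul_of_nonneg_left htt₀ K.coe_nonneg
        linarith
      have := abs_le.mp h
      linarith [this.2]
    have hderiv_le : |(deriv π t).1| + |(deriv π t).2| ≤ 2 * K := by
      have hn := norm_deriv_le_of_lipschitz hπlip (x₀ := t)
      rw [Prod.norm_def] at hn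
      have h1 : ‖(deriv π t).1‖ ≤ K := le_trans (le_max_left _ _) hn
      have h2 : ‖(deriv π t).2‖ ≤ K := le_trans (le_max_right _ _) hn
      rw [Real.norm_eq_abs] at h1 h2
      linarith
    rw [abs_of_nonneg (hΦnn t), hΦ]
    simp only []
    have hSnn : (0:ℝ) ≤ |(deriv π t).1| + |(deriv π t).2| := by positivity
    calc w (π t) * (|(deriv π t).1| + |(deriv π t).2|)
        ≤ (w (π t₀) + 2 * K) * (|(deriv π t).1| + |(deriv π t).2|) :=
          mul_le_mul_of_nonneg_right hw_le hSnn
      _ ≤ (w (π t₀) + 2 * K) * (2 * K) :=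
          mul_le_mul_of_nonneg_left hderiv_le
            (by have := hw0 (π t₀); have := K.coe_nonneg; linarith)
  have hΦint : IntervalIntegrable Φ volume 0 1 := by
    refine (_root_.intervalIntegrable_const
      (c := (w (π t₀) + 2 * K) * (2 * K))).mono_fun hΦmeas.restrict ?_
    rw [Filter.EventuallyLE, ae_restrict_iff' measurableSet_uIoc]
    refine Eventually.of_forall fun t ht => ?_
    rw [Set.uIoc_of_le h01] at ht
    have := hΦbdd t ⟨ht.1.le, ht.2⟩
    rw [Real.norm_eq_abs, Real.norm_eq_abs]
    exact le_trans this (le_abs_self _)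
  have hΦint' : IntervalIntegrable Φ volume t₀ t₁ := by
    apply hΦint.mono_set
    rw [Set.uIcc_of_le ht₀t₁, Set.uIcc_of_le h01]
    exact Set.Icc_subset_Icc ht₀.1 ht₁1
  -- conclusion
  have step1 : c ^ 2 / 2 ≤ ∫ t in t₀..t₁, Φ t := by
    rw [← hGint]
    apply intervalIntegral.integral_mono_ae_restrict ht₀t₁
      (lipschitz_intervalIntegrable_deriv hGlip t₀ t₁) hΦint'
    have hsing : ∀ᵐ t : ℝ, t ≠ t₀ ∧ t ≠ t₁ := by
      have h1 : (volume : Measure ℝ) {t₀} = 0 := Real.volume_singleton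
      have h2 : (volume : Measure ℝ) {t₁} = 0 := Real.volume_singleton
      filter_upwards [measure_eq_zero_iff_ae_notMem.mp h1, measure_eq_zero_iff_ae_notMem.mp h2]
        with t ht1 ht2
      exact ⟨ht1, ht2⟩
    rw [Filter.EventuallyLE, ae_restrict_iff' measurableSet_Icc]
    filter_upwards [key, hsing] with t hkey hne htmem
    simp only [hΦ]
    exact hkey ⟨lt_of_le_of_ne htmem.1 (Ne.symm hne.1), lt_of_le_of_ne htmem.2 hne.2⟩
  have step2 : (∫ t in t₀..t₁, Φ t) ≤ ∫ t in (0:ℝ)..1, Φ t := by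
    apply intervalIntegral.integral_mono_interval ht₀.1 ht₀t₁ ht₁1
    · exact Eventually.of_forall fun t => hΦnn t
    · exact hΦint
  exact le_trans step1 step2

/-- Lower bound for the weighted L1 length of a monotone Lipschitz path `π` through a point
`p = π t₀` of weight at least `c`, provided an endpoint is at L1 distance at least `c`
from `p`. -/
theorem weighted_length_lower_bound
    (w : ℝ × ℝ → ℝ) (hw0 : ∀ p, 0 ≤ w p)
    (hwlip : ∀ p q : ℝ × ℝ, |w p - w q| ≤ |p.1 - q.1| + |p.2 - q.2|)
    (π : ℝ → ℝ × ℝ) (K : NNReal) (hπlip : LipschitzWith K π)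
    (hmono1 : MonotoneOn (fun t => (π t).1) (Set.Icc 0 1))
    (hmono2 : MonotoneOn (fun t => (π t).2) (Set.Icc 0 1))
    (t₀ : ℝ) (ht₀ : t₀ ∈ Set.Icc (0:ℝ) 1) (c : ℝ) (hc : 0 < c)
    (hwp : c ≤ w (π t₀))
    (hfar : c ≤ |(π 0).1 - (π t₀).1| + |(π 0).2 - (π t₀).2| ∨
            c ≤ |(π t₀).1 - (π 1).1| + |(π t₀).2 - (π 1).2|) :
    c ^ 2 / 2 ≤ ∫ t in (0:ℝ)..1, w (π t) * (|(deriv π t).1| + |(deriv π t).2|) := by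
  rcases hfar with hfar | hfar
  · -- reverse the path
    set ρ : ℝ → ℝ × ℝ := fun s => -π (1 - s) with hρ
    set v : ℝ × ℝ → ℝ := fun p => w (-p) with hv
    clear_value ρ v
    have hv0 : ∀ p, 0 ≤ v p := fun p => by rw [hv]; exact hw0 _
    have hρlip : LipschitzWith K ρ := by
      have h1 : LipschitzWith 1 (fun s : ℝ => 1 - s) := by
        have := (LipschitzWith.const (α := ℝ) (1:ℝ)).sub LipschitzWith.id
        simpa using this
      have h2 : LipschitzWith K (fun s : ℝ => π (1 - s)) := by
        simpa [Function.comp_def] using hπlip.comp h1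
      have h3 : LipschitzWith 1 (Neg.neg : ℝ × ℝ → ℝ × ℝ) :=
        LipschitzWith.of_dist_le_mul fun p q => by simp [dist_neg_neg]
      simpa [hρ, Function.comp_def] using h3.comp h2
    have hmem : ∀ t : ℝ, t ∈ Set.Icc (0:ℝ) 1 → (1 - t) ∈ Set.Icc (0:ℝ) 1 := by
      rintro t ⟨h0, h1⟩; exact ⟨by linarith, by linarith⟩
    have hρmono1 : MonotoneOn (fun t => (ρ t).1) (Set.Icc 0 1) := by
      intro s hs t ht hst
      simp only [hρ, Prod.fst_neg, neg_le_neg_iff]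
      exact hmono1 (hmem t ht) (hmem s hs) (by linarith)
    have hρmono2 : MonotoneOn (fun t => (ρ t).2) (Set.Icc 0 1) := by
      intro s hs t ht hst
      simp only [hρ, Prod.snd_neg, neg_le_neg_iff]
      exact hmono2 (hmem t ht) (hmem s hs) (by linarith)
    have hvlip : ∀ p q : ℝ × ℝ, |v p - v q| ≤ |p.1 - q.1| + |p.2 - q.2| := by
      intro p q
      have h := hwlip (-p) (-q)
      have e1 : |(-p).1 - (-q).1| = |p.1 - q.1| := by
        rw [← abs_neg]; congr 1; simp; ring
      have e2 : |(-p).2 - (-q).2| = |p.2 - q.2| := by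
        rw [← abs_neg]; congr 1; simp; ring
      rw [e1, e2] at h
      rw [hv]
      exact h
    have ht₀' : (1 - t₀) ∈ Set.Icc (0:ℝ) 1 := hmem t₀ ht₀
    have hwp' : c ≤ v (ρ (1 - t₀)) := by
      simp only [hρ, hv, neg_neg]
      simpa using hwp
    have hfar2 : c ≤ |(ρ (1 - t₀)).1 - (ρ 1).1| + |(ρ (1 - t₀)).2 - (ρ 1).2| := by
      have e1 : (1:ℝ) - (1 - t₀) = t₀ := by ring
      have e0 : (1:ℝ) - 1 = 0 := by norm_num
      simp only [hρ, e1, e0, Prod.fst_neg, Prod.snd_neg, neg_sub_neg]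
      exact hfar
    have hderivρ : ∀ s : ℝ, deriv ρ s = deriv π (1 - s) := by
      intro s
      have hinner : HasDerivAt (fun u : ℝ => 1 - u) (-1) s := by
        simpa [Pi.sub_def] using ((hasDerivAt_const s (1:ℝ)).sub (hasDerivAt_id s))
      by_cases hd : DifferentiableAt ℝ π (1 - s)
      · have h2 : HasDerivAt (fun u : ℝ => π (1 - u)) ((-1:ℝ) • deriv π (1 - s)) s :=
          hd.hasDerivAt.scomp s hinner
        have h3 : HasDerivAt ρ (deriv π (1 - s)) s := by
          rw [hρ]
          have := h2.neg
          simpa [Pi.neg_def] using this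
        exact h3.deriv
      · have hnd : ¬ DifferentiableAt ℝ ρ s := by
          intro hcon
          apply hd
          have hπeq : π = fun u : ℝ => -ρ (1 - u) := by
            funext u; simp [hρ]
          rw [hπeq]
          have hinner' : DifferentiableAt ℝ (fun u : ℝ => 1 - u) (1 - s) := by
            have : HasDerivAt (fun u : ℝ => 1 - u) (-1) (1 - s) := by
              simpa [Pi.sub_def] using ((hasDerivAt_const (1 - s) (1:ℝ)).sub (hasDerivAt_id (1 - s)))
            exact this.differentiableAt
          have e : (1:ℝ) - (1 - s) = s := by ring
          have hcomp' := DifferentiableAt.comp (1 - s)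
            (show DifferentiableAt ℝ ρ ((fun u : ℝ => 1 - u) (1 - s)) by
              simp only []; rw [e]; exact hcon) hinner'
          have hcomp : DifferentiableAt ℝ (fun u : ℝ => ρ (1 - u)) (1 - s) := by
            simpa [Function.comp_def] using hcomp'
          exact hcomp.neg
        rw [deriv_zero_of_not_differentiableAt hnd, deriv_zero_of_not_differentiableAt hd]
    have hint : (∫ t in (0:ℝ)..1, v (ρ t) * (|(deriv ρ t).1| + |(deriv ρ t).2|))
        = ∫ t in (0:ℝ)..1, w (π t) * (|(deriv π t).1| + |(deriv π t).2|) := by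
      have e : ∀ t : ℝ, v (ρ t) * (|(deriv ρ t).1| + |(deriv ρ t).2|)
          = w (π (1 - t)) * (|(deriv π (1 - t)).1| + |(deriv π (1 - t)).2|) := by
        intro t
        rw [hderivρ]
        simp [hρ, hv, neg_neg]
      rw [intervalIntegral.integral_congr (g := fun t : ℝ =>
        w (π (1 - t)) * (|(deriv π (1 - t)).1| + |(deriv π (1 - t)).2|)) (fun t _ => e t)]
      have := intervalIntegral.integral_comp_sub_left (a := (0:ℝ)) (b := (1:ℝ))
        (fun t : ℝ => w (π t) * (|(deriv π t).1| + |(deriv π t).2|)) 1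
      rw [this]
      norm_num
    calc c ^ 2 / 2 ≤ ∫ t in (0:ℝ)..1, v (ρ t) * (|(deriv ρ t).1| + |(deriv ρ t).2|) :=
          aux_right v hv0 hvlip ρ K hρlip hρmono1 hρmono2 (1 - t₀) ht₀' c hc hwp' hfar2
      _ = _ := hint
  · exact aux_right w hw0 hwlip π K hπlip hmono1 hmono2 t₀ ht₀ c hc hwp hfar
end

section
/- Fix unit vectors u, v ∈ ℝ² with u + v ≠ 0 and c ∈ ℝ². For (s,t) ∈ ℝ² let α* = −⟨c + s·u − t·v, u + v⟩ / ‖u + v‖², so that (s + α*, t − α*) is the projection of (s,t) onto the monotone free-space axis along the direction (1,−1). Then the function θ ↦ ‖c + (s + θ·α*)·u − (t − θ·α*)·v‖ is nonincreasing on [0,1]; in particular w(r) ≤ w(s,t) for every point r on the parameter segment from (s,t) to its projection onto the axis. -/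
open scoped InnerProductSpace

/-- Moving a parameter point along the antidiagonal direction `(1,−1)` towards its
projection onto the monotone free-space axis does not increase the leash length:
the weight is nonincreasing along the projection segment. -/
theorem weight_antitone_towards_axis
    (u v c : EuclideanSpace ℝ (Fin 2)) (hu : ‖u‖ = 1) (hv : ‖v‖ = 1)
    (huv : u + v ≠ 0) (s t : ℝ) (αstar : ℝ)
    (hα : αstar = -⟪c + s • u - t • v, u + v⟫_ℝ / ‖u + v‖ ^ 2) :
    AntitoneOn (fun θ : ℝ => ‖c + (s + θ * αstar) • u - (t - θ * αstar) • v‖)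
      (Set.Icc 0 1) := by
  set d := c + s • u - t • v with hd
  set w := u + v with hwdef
  have hw : ‖w‖ ≠ 0 := norm_ne_zero_iff.mpr huv
  have key : ∀ θ : ℝ,
      ‖c + (s + θ * αstar) • u - (t - θ * αstar) • v‖ ^ 2
        = ‖d‖ ^ 2 + (θ ^ 2 - 2 * θ) * (⟪d, w⟫_ℝ ^ 2 / ‖w‖ ^ 2) := by
    intro θ
    have hvec : c + (s + θ * αstar) • u - (t - θ * αstar) • v
        = d + (θ * αstar) • w := by
      rw [hd, hwdef]; module
    rw [hvec, norm_add_sq_real, real_inner_smul_right, norm_smul, hα]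
    rw [Real.norm_eq_abs, mul_pow, sq_abs]
    field_simp
    ring
  intro x hx y hy hxy
  simp only
  obtain ⟨hx0, hx1⟩ := hx
  obtain ⟨hy0, hy1⟩ := hy
  have hkx := key x
  have hky := key y
  have hQ : (0:ℝ) ≤ ⟪d, w⟫_ℝ ^ 2 / ‖w‖ ^ 2 := by positivity
  have hnx := norm_nonneg (c + (s + x * αstar) • u - (t - x * αstar) • v)
  have hny := norm_nonneg (c + (s + y * αstar) • u - (t - y * αstar) • v)
  nlinarith [mul_nonneg (sub_nonneg.mpr hxy) (mul_nonneg hx0 hy0),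
    mul_nonneg (sub_nonneg.mpr hxy) hQ,
    mul_nonneg (mul_nonneg (sub_nonneg.mpr hxy) (sub_nonneg.mpr hy1)) hQ,
    mul_nonneg (mul_nonneg (sub_nonneg.mpr hxy) (sub_nonneg.mpr hx0)) hQ]
end

section
/- Fix unit vectors u, v ∈ ℝ² with u + v ≠ 0 and c ∈ ℝ², with weight w(s,t) = ‖c + s·u − t·v‖. Let a = (a1,a2), b = (b1,b2) ∈ ℝ² with a1 ≤ b1 and a2 ≤ b2, let R = [a1,b1] × [a2,b2], and let L = {(s,t) : ⟨c + s·u − t·v, u + v⟩ = 0} be the monotone free-space axis. Suppose L ∩ R = ∅, and let c* be the (unique) point of R at minimal Euclidean distance from the line L. Let π be a constant-speed Lipschitz parametrization of the polyline a → c* → b. Then for every monotone Lipschitz path ψ : [0,1] → ℝ² with ψ(0) = a and ψ(1) = b, the weighted length of π is at most that of ψ: ∫ w(π(t))·‖π'(t)‖₁ dt ≤ ∫ w(ψ(t))·‖ψ'(t)‖₁ dt. -/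
open scoped InnerProductSpace
open MeasureTheory

/-- The L1 distance on the parameter plane. -/
noncomputable def d1 (p q : ℝ × ℝ) : ℝ := |p.1 - q.1| + |p.2 - q.2|

/-- The Euclidean distance on the parameter plane. -/
noncomputable def eDist (p q : ℝ × ℝ) : ℝ := Real.sqrt ((p.1 - q.1) ^ 2 + (p.2 - q.2) ^ 2)

/-- The constant-speed (w.r.t. the L1 norm) parametrization of the
polyline `a → c1 → c2 → b`, on the time interval `[0,1]`. -/
noncomputable def polyPath (a c1 c2 b : ℝ × ℝ) (t : ℝ) : ℝ × ℝ :=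
  let l1 := d1 a c1
  let l2 := d1 c1 c2
  let l3 := d1 c2 b
  let L := l1 + l2 + l3
  if t * L ≤ l1 then a + (t * L / l1) • (c1 - a)
  else if t * L ≤ l1 + l2 then c1 + ((t * L - l1) / l2) • (c2 - c1)
  else c2 + ((t * L - l1 - l2) / l3) • (b - c2)

open scoped Topology
open Filter Set

set_option maxHeartbeats 1000000

lemma lip_ftc (f φ : ℝ → ℝ) (M : ℝ) (hfc : Continuous f)
    (hlip : ∀ x ∈ Set.Icc (0:ℝ) 2, ∀ y ∈ Set.Icc (0:ℝ) 2, |f x - f y| ≤ M * |x - y|)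
    (hd : ∀ᵐ t ∂(volume.restrict (Set.Ioc (0:ℝ) 1)), HasDerivAt f (φ t) t) :
    ∫ t in (0:ℝ)..1, φ t = f 1 - f 0 := by
  set ε : ℕ → ℝ := fun n => ((n : ℝ) + 1)⁻¹ with hε
  have hεpos : ∀ n, 0 < ε n := fun n => by positivity
  have hεle : ∀ n, ε n ≤ 1 := by
    intro n
    rw [hε]
    simp only
    rw [inv_le_one_iff₀]
    right; linarith [Nat.cast_nonneg (α := ℝ) n]
  have htendε : Tendsto ε atTop (𝓝 0) := by
    simpa [hε, one_div] using tendsto_one_div_add_atTop_nhds_zero_nat (𝕜 := ℝ)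
  set D : ℕ → ℝ → ℝ := fun n t => ((n : ℝ) + 1) * (f (t + ε n) - f t) with hD
  -- sequence tendsto within punctured nbhd
  have hseq : ∀ t : ℝ, Tendsto (fun n => t + ε n) atTop (𝓝[≠] t) := by
    intro t
    apply tendsto_nhdsWithin_of_tendsto_nhds_of_eventually_within
    · simpa using tendsto_const_nhds.add htendε
    · exact Eventually.of_forall fun n => by
        simp [Set.mem_compl_iff]; positivity
  have hslope : ∀ (g : ℝ → ℝ) (t : ℝ) (n : ℕ),
      slope g t (t + ε n) = ((n:ℝ)+1) * (g (t + ε n) - g t) := by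
    intro g t n
    rw [slope_def_field, show t + ε n - t = ((n:ℝ)+1)⁻¹ by simp [hε], div_eq_mul_inv, inv_inv, mul_comm]
  -- pointwise limit
  have hlim : ∀ᵐ t ∂(volume.restrict (Set.Ioc (0:ℝ) 1)),
      Tendsto (fun n => D n t) atTop (𝓝 (φ t)) := by
    filter_upwards [hd] with t ht
    have hs := hasDerivAt_iff_tendsto_slope.1 ht
    have := hs.comp (hseq t)
    simpa [Function.comp_def, hslope f t] using this
  -- domination
  have hM : 0 ≤ M := by
    have := hlip 0 (by norm_num) 1 (by norm_num)
    have h0 : (0:ℝ) ≤ |f 0 - f 1| := abs_nonneg _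
    rw [show |(0:ℝ) - 1| = 1 by norm_num, mul_one] at this
    linarith
  have hbound : ∀ n, ∀ᵐ t ∂(volume.restrict (Set.Ioc (0:ℝ) 1)), ‖D n t‖ ≤ M := by
    intro n
    rw [ae_restrict_iff' measurableSet_Ioc]
    refine Eventually.of_forall fun t ht => ?_
    have h1 : t + ε n ∈ Set.Icc (0:ℝ) 2 :=
      ⟨by have := ht.1; have := (hεpos n).le; linarith,
       by have := ht.2; have := hεle n; linarith⟩
    have h2 : t ∈ Set.Icc (0:ℝ) 2 := ⟨ht.1.le, by have := ht.2; linarith⟩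
    have := hlip _ h1 _ h2
    have habs : |t + ε n - t| = ε n := by
      rw [add_sub_cancel_left, abs_of_pos (hεpos n)]
    rw [habs] at this
    have : ‖D n t‖ = ((n:ℝ)+1) * |f (t + ε n) - f t| := by
      rw [hD, Real.norm_eq_abs, abs_mul,
        abs_of_nonneg (by positivity : (0:ℝ) ≤ (n:ℝ)+1)]
    rw [this]
    calc ((n:ℝ)+1) * |f (t + ε n) - f t| ≤ ((n:ℝ)+1) * (M * ε n) := by
          apply mul_le_mul_of_nonneg_left ‹|f (t + ε n) - f t| ≤ M * ε n› (by positivity)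
      _ = M := by rw [hε]; field_simp
  -- DCT
  have hDmeas : ∀ n, AEStronglyMeasurable (D n) (volume.restrict (Set.Ioc (0:ℝ) 1)) := by
    intro n
    exact (continuous_const.mul ((hfc.comp (continuous_id.add continuous_const)).sub hfc)).aestronglyMeasurable
  have hDCT := tendsto_integral_of_dominated_convergence (fun _ => M) hDmeas
    (integrable_const M) hbound hlim
  -- identify ∫ D n
  have hint : ∀ n, ∫ t in Set.Ioc (0:ℝ) 1, D n t =
      ((n:ℝ)+1) * ((∫ x in (1:ℝ)..(1 + ε n), f x) - ∫ x in (0:ℝ)..(ε n), f x) := by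
    intro n
    have hii : ∀ a b : ℝ, IntervalIntegrable f volume a b := fun a b => hfc.intervalIntegrable a b
    have hc1 : Continuous fun t : ℝ => f (t + ε n) := hfc.comp (continuous_add_right _)
    have e0 : ∫ t in Set.Ioc (0:ℝ) 1, D n t = ∫ t in (0:ℝ)..1, D n t :=
      (intervalIntegral.integral_of_le (by norm_num)).symm
    have e1 : (∫ t in (0:ℝ)..1, f (t + ε n)) = ∫ x in (0 + ε n)..(1 + ε n), f x :=
      intervalIntegral.integral_comp_add_right f (ε n)
    have c1 : (∫ x in (ε n)..(1:ℝ), f x) + (∫ x in (1:ℝ)..(1 + ε n), f x)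
        = ∫ x in (ε n)..(1 + ε n), f x :=
      intervalIntegral.integral_add_adjacent_intervals (hii _ _) (hii _ _)
    have c2 : (∫ x in (0:ℝ)..(ε n), f x) + (∫ x in (ε n)..(1:ℝ), f x)
        = ∫ x in (0:ℝ)..(1:ℝ), f x :=
      intervalIntegral.integral_add_adjacent_intervals (hii _ _) (hii _ _)
    rw [e0, hD]
    simp only
    rw [intervalIntegral.integral_const_mul,
      intervalIntegral.integral_sub (hc1.intervalIntegrable _ _) (hii 0 1), e1, zero_add]
    have : (∫ x in (ε n)..(1 + ε n), f x) - (∫ x in (0:ℝ)..1, f x)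
        = (∫ x in (1:ℝ)..(1 + ε n), f x) - ∫ x in (0:ℝ)..(ε n), f x := by linarith
    rw [this]
  -- boundary limits
  have hbdry : ∀ (c : ℝ), Tendsto (fun n : ℕ => ((n:ℝ)+1) * ∫ x in c..(c + ε n), f x) atTop (𝓝 (f c)) := by
    intro c
    have hF : HasDerivAt (fun u => ∫ x in c..u, f x) (f c) c :=
      intervalIntegral.integral_hasDerivAt_right (hfc.intervalIntegrable _ _)
        hfc.stronglyMeasurable.stronglyMeasurableAtFilter hfc.continuousAt
    have hs := (hasDerivAt_iff_tendsto_slope.1 hF).comp (hseq c)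
    have : ∀ n : ℕ, slope (fun u => ∫ x in c..u, f x) c (c + ε n)
        = ((n:ℝ)+1) * ∫ x in c..(c + ε n), f x := by
      intro n
      rw [hslope (fun u => ∫ x in c..u, f x) c n, intervalIntegral.integral_same, sub_zero]
    simpa [Function.comp_def, this] using hs
  have hDlim : Tendsto (fun n => ∫ t in Set.Ioc (0:ℝ) 1, D n t) atTop (𝓝 (f 1 - f 0)) := by
    have := (hbdry 1).sub (hbdry 0)
    simp only [zero_add] at this
    refine Tendsto.congr (fun n => ?_) this
    rw [hint n]
    ring
  have : ∫ t in Set.Ioc (0:ℝ) 1, φ t = f 1 - f 0 := tendsto_nhds_unique hDCT hDlim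
  rw [intervalIntegral.integral_of_le (by norm_num : (0:ℝ) ≤ 1)]
  exact this

-- derivative of fst/snd component
lemma hasDerivAt_fst {f : ℝ → ℝ × ℝ} {t : ℝ} (h : DifferentiableAt ℝ f t) :
    HasDerivAt (fun s => (f s).1) (deriv f t).1 t :=
  ((ContinuousLinearMap.fst ℝ ℝ ℝ).hasFDerivAt).comp_hasDerivAt t h.hasDerivAt

lemma hasDerivAt_snd {f : ℝ → ℝ × ℝ} {t : ℝ} (h : DifferentiableAt ℝ f t) :
    HasDerivAt (fun s => (f s).2) (deriv f t).2 t :=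
  ((ContinuousLinearMap.snd ℝ ℝ ℝ).hasFDerivAt).comp_hasDerivAt t h.hasDerivAt

-- derivative of a function monotone on [0,1] is nonneg inside
lemma deriv_nonneg_of_monotoneOn {f : ℝ → ℝ} {t d : ℝ} (ht : t ∈ Set.Ioo (0:ℝ) 1)
    (hm : MonotoneOn f (Set.Icc 0 1)) (hd : HasDerivAt f d t) : 0 ≤ d := by
  have hs := hasDerivAt_iff_tendsto_slope.1 hd
  have hmem : ∀ᶠ y in 𝓝[≠] t, y ∈ Set.Ioo (0:ℝ) 1 :=
    eventually_nhdsWithin_of_eventually_nhds (isOpen_Ioo.eventually_mem ht)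
  have hev : ∀ᶠ y in 𝓝[≠] t, 0 ≤ slope f t y := by
    filter_upwards [hmem, self_mem_nhdsWithin] with y hy hne
    have hyne : y ≠ t := hne
    rcases lt_or_gt_of_ne hyne with hlt | hgt
    · have : f y ≤ f t := hm (Ioo_subset_Icc_self hy) (Ioo_subset_Icc_self ht) hlt.le
      rw [slope_def_field]
      apply div_nonneg_of_nonpos <;> linarith
    · have : f t ≤ f y := hm (Ioo_subset_Icc_self ht) (Ioo_subset_Icc_self hy) hgt.le
      rw [slope_def_field]
      apply div_nonneg <;> linarith
  exact ge_of_tendsto hs hev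

-- key algebraic inequality on a diagonal slice
lemma key_ineq (u v cv : EuclideanSpace ℝ (Fin 2)) (hm : (0:ℝ) < ‖u + v‖ ^ 2)
    (p q : ℝ × ℝ) (hσ : p.1 + p.2 = q.1 + q.2)
    (hφ : ⟪cv + q.1 • u - q.2 • v, u + v⟫_ℝ ^ 2 ≤ ⟪cv + p.1 • u - p.2 • v, u + v⟫_ℝ ^ 2) :
    ‖cv + q.1 • u - q.2 • v‖ ≤ ‖cv + p.1 • u - p.2 • v‖ := by
  set X := cv + q.1 • u - q.2 • v with hX
  set d := p.1 - q.1 with hd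
  have hp1 : p.1 = q.1 + d := by ring
  have hp2 : p.2 = q.2 - d := by rw [hd]; linarith
  have hrw : cv + p.1 • u - p.2 • v = X + d • (u + v) := by
    rw [hp1, hp2, hX]; module
  have hnorm : ‖X + d • (u + v)‖ ^ 2
      = ‖X‖ ^ 2 + 2 * (d * ⟪X, u + v⟫_ℝ) + d ^ 2 * ‖u + v‖ ^ 2 := by
    rw [norm_add_sq_real, real_inner_smul_right, norm_smul]
    rw [mul_pow]
    simp [sq_abs]
  have hinner : ⟪X + d • (u + v), u + v⟫_ℝ = ⟪X, u + v⟫_ℝ + d * ‖u + v‖ ^ 2 := by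
    rw [inner_add_left, real_inner_smul_left, real_inner_self_eq_norm_sq]
  rw [hrw] at hφ ⊢
  rw [hinner] at hφ
  have hsq : ‖X‖ ^ 2 ≤ ‖X + d • (u + v)‖ ^ 2 := by
    rw [hnorm]; nlinarith [hφ, hm]
  nlinarith [norm_nonneg X, norm_nonneg (X + d • (u + v)), hsq]

-- distance from a point to the line {φ = 0}
lemma sInf_eDist_line (C α : ℝ) (hα : 0 < α) (x : ℝ × ℝ)
    (L : Set (ℝ × ℝ)) (hL : L = {q : ℝ × ℝ | C + α * q.1 - α * q.2 = 0}) :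
    sInf ((fun q => eDist x q) '' L)
      = |C + α * x.1 - α * x.2| * (Real.sqrt 2 / (2 * α)) := by
  set φx := C + α * x.1 - α * x.2 with hφx
  set k := Real.sqrt 2 / (2 * α) with hk
  set q0 : ℝ × ℝ := (x.1 - φx / (2 * α), x.2 + φx / (2 * α)) with hq0
  have hq0L : q0 ∈ L := by
    rw [hL]
    simp only [Set.mem_setOf_eq, hq0]
    have hane : α ≠ 0 := ne_of_gt hα
    field_simp
    ring
  have hval : eDist x q0 = |φx| * k := by
    rw [show eDist x q0 = Real.sqrt ((x.1 - q0.1) ^ 2 + (x.2 - q0.2) ^ 2) from rfl, hq0]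
    simp only
    have h1 : x.1 - (x.1 - φx / (2 * α)) = φx / (2 * α) := by ring
    have h2 : x.2 - (x.2 + φx / (2 * α)) = -(φx / (2 * α)) := by ring
    rw [h1, h2]
    rw [show (φx / (2 * α)) ^ 2 + (-(φx / (2 * α))) ^ 2 = 2 * (φx / (2 * α)) ^ 2 by ring]
    rw [Real.sqrt_mul (by norm_num : (0:ℝ) ≤ 2), Real.sqrt_sq_eq_abs, abs_div,
      abs_of_pos (by positivity : (0:ℝ) < 2 * α), hk]
    ring
  have hlb : ∀ y ∈ (fun q => eDist x q) '' L, |φx| * k ≤ y := by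
    rintro y ⟨q, hq, rfl⟩
    rw [hL] at hq
    have hq' : C + α * q.1 - α * q.2 = 0 := hq
    have hφeq : φx = α * ((x.1 - q.1) - (x.2 - q.2)) := by rw [hφx]; linarith [hq']
    set A := x.1 - q.1
    set B := x.2 - q.2
    have hsq : (A - B) ^ 2 ≤ 2 * (A ^ 2 + B ^ 2) := by nlinarith [sq_nonneg (A + B)]
    have h1 : |A - B| ≤ Real.sqrt 2 * Real.sqrt (A ^ 2 + B ^ 2) := by
      rw [← Real.sqrt_sq_eq_abs, ← Real.sqrt_mul (by norm_num : (0:ℝ) ≤ 2)]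
      exact Real.sqrt_le_sqrt hsq
    have h2 : |φx| = α * |A - B| := by
      rw [hφeq, abs_mul, abs_of_pos hα]
    show |φx| * k ≤ eDist x q
    rw [show eDist x q = Real.sqrt ((x.1 - q.1) ^ 2 + (x.2 - q.2) ^ 2) from rfl, h2, hk]
    have he : α * |A - B| * (Real.sqrt 2 / (2 * α)) = |A - B| * Real.sqrt 2 / 2 := by
      field_simp
    rw [he, div_le_iff₀ (by norm_num : (0:ℝ) < 2)]
    nlinarith [h1, Real.mul_self_sqrt (show (0:ℝ) ≤ 2 by norm_num), Real.sqrt_nonneg 2,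
      Real.sqrt_nonneg (A ^ 2 + B ^ 2), abs_nonneg (A - B)]
  apply le_antisymm
  · exact csInf_le ⟨|φx| * k, hlb⟩ ⟨q0, hq0L, hval⟩
  · exact le_csInf ⟨eDist x q0, ⟨q0, hq0L, rfl⟩⟩ hlb

lemma core_caseA (u v cv : EuclideanSpace ℝ (Fin 2)) (hu : ‖u‖ = 1) (hv : ‖v‖ = 1)
    (hnsq : (0:ℝ) < ‖u + v‖ ^ 2)
    (w : ℝ × ℝ → ℝ) (hw : ∀ p : ℝ × ℝ, w p = ‖cv + p.1 • u - p.2 • v‖)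
    (a b : ℝ × ℝ) (hab1 : a.1 ≤ b.1) (hab2 : a.2 ≤ b.2)
    (hsign : ∀ p ∈ Set.Icc a b, ⟪cv + p.1 • u - p.2 • v, u + v⟫_ℝ < 0)
    (ψ : ℝ → ℝ × ℝ) (K : NNReal) (hψ : LipschitzWith K ψ)
    (hm1 : MonotoneOn (fun t => (ψ t).1) (Set.Icc 0 1))
    (hm2 : MonotoneOn (fun t => (ψ t).2) (Set.Icc 0 1))
    (hψ0 : ψ 0 = a) (hψ1 : ψ 1 = b) :
    ∫ t in (0:ℝ)..1,
        w (polyPath a (b.1, a.2) (b.1, a.2) b t) *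
          (|(deriv (polyPath a (b.1, a.2) (b.1, a.2) b) t).1| +
            |(deriv (polyPath a (b.1, a.2) (b.1, a.2) b) t).2|)
      ≤ ∫ t in (0:ℝ)..1, w (ψ t) * (|(deriv ψ t).1| + |(deriv ψ t).2|) := by
  have hwnn : ∀ p, 0 ≤ w p := fun p => (hw p) ▸ norm_nonneg _
  set m : ℝ × ℝ := (b.1, a.2) with hm'
  set l1 : ℝ := b.1 - a.1 with hl1'
  set l3 : ℝ := b.2 - a.2 with hl3'
  set Λ : ℝ := l1 + l3 with hΛ'
  have hl1nn : 0 ≤ l1 := by rw [hl1']; linarith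
  have hl3nn : 0 ≤ l3 := by rw [hl3']; linarith
  have hd1am : d1 a m = l1 := by
    show |a.1 - m.1| + |a.2 - m.2| = l1
    rw [hm']
    simp only
    rw [sub_self, abs_zero, abs_sub_comm, abs_of_nonneg (by linarith : (0:ℝ) ≤ b.1 - a.1)]
    rw [hl1']; ring
  have hd1mm : d1 m m = 0 := by
    show |m.1 - m.1| + |m.2 - m.2| = 0
    simp
  have hd1mb : d1 m b = l3 := by
    show |m.1 - b.1| + |m.2 - b.2| = l3
    rw [hm']
    simp only
    rw [sub_self, abs_zero, abs_sub_comm, abs_of_nonneg (by linarith : (0:ℝ) ≤ b.2 - a.2)]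
    rw [hl3']; ring
  have hpoly : polyPath a m m b = fun s =>
      if s * Λ ≤ l1 then a + (s * Λ / l1) • (m - a)
      else m + ((s * Λ - l1) / l3) • (b - m) := by
    funext s
    simp only [polyPath, hd1am, hd1mm, hd1mb, add_zero, sub_zero, ← hΛ']
    by_cases hc : s * Λ ≤ l1
    · simp [hc]
    · simp [hc]
  rcases eq_or_lt_of_le (show (0:ℝ) ≤ Λ by linarith) with hΛ0 | hΛpos
  · -- degenerate rectangle: a = b
    have hl10 : l1 = 0 := by linarith
    have hl30 : l3 = 0 := by linarith
    have hb : b = a := Prod.ext_iff.mpr ⟨by rw [hl1'] at hl10; linarith, by rw [hl3'] at hl30; linarith⟩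
    have hma : m = a := by
      rw [hm', hb]
    have hconst : polyPath a m m b = fun _ => a := by
      funext s
      rw [hpoly, hma, hb]
      by_cases hc : s * Λ ≤ l1 <;> simp [hc]
    rw [hconst]
    have : ∀ t : ℝ, w ((fun _ => a) t) * (|(deriv (fun _ : ℝ => a) t).1| + |(deriv (fun _ : ℝ => a) t).2|) = 0 := by
      intro t
      rw [deriv_const']
      simp
    rw [intervalIntegral.integral_congr (fun t _ => this t), intervalIntegral.integral_zero]
    apply intervalIntegral.integral_nonneg (by norm_num)
    intro t _
    exact mul_nonneg (hwnn _) (by positivity)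
  · -- main case
    have hΛne : Λ ≠ 0 := ne_of_gt hΛpos
    set σa : ℝ := a.1 + a.2 with hσa'
    set σb : ℝ := b.1 + b.2 with hσb'
    have hσab : σa + Λ = σb := by rw [hσa', hσb', hΛ', hl1', hl3']; ring
    set γ : ℝ → ℝ × ℝ := fun ξ => if ξ ≤ b.1 + a.2 then ((ξ - a.2, a.2) : ℝ × ℝ) else (b.1, ξ - b.1) with hγ'
    set g : ℝ → ℝ := fun ξ => w (γ ξ) with hg'
    have hwc : Continuous w := by
       have : w = fun p : ℝ × ℝ => ‖cv + p.1 • u - p.2 • v‖ := funext hw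
       rw [this]
       exact ((continuous_const.add (continuous_fst.smul continuous_const)).sub
         (continuous_snd.smul continuous_const)).norm
    have hγc : Continuous γ := by
      rw [hγ']
      refine Continuous.if_le ?_ ?_ continuous_id continuous_const ?_
      · exact (continuous_id.sub continuous_const).prodMk continuous_const
      · exact continuous_const.prodMk (continuous_id.sub continuous_const)
      · intro ξ hξ
        rw [Prod.ext_iff]
        constructor <;> simp <;> linarith
    have hgc : Continuous g := hwc.comp hγc
    -- the inner product is affine
    have hvα : ⟪v, u + v⟫_ℝ = ⟪u, u + v⟫_ℝ := by
      rw [inner_add_right, inner_add_right, real_inner_self_eq_norm_sq,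
        real_inner_self_eq_norm_sq, hu, hv, real_inner_comm]
      ring
    set α : ℝ := ⟪u, u + v⟫_ℝ with hα'
    have h2α : α + α = ‖u + v‖ ^ 2 := by
      rw [← real_inner_self_eq_norm_sq, inner_add_left, hα', hvα]
    have hαpos : 0 < α := by nlinarith
    have hφaff : ∀ p : ℝ × ℝ, ⟪cv + p.1 • u - p.2 • v, u + v⟫_ℝ
        = ⟪cv, u + v⟫_ℝ + α * p.1 - α * p.2 := by
      intro p
      rw [inner_sub_left, inner_add_left, real_inner_smul_left, real_inner_smul_left, hvα, hα']
      ring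
    -- slice minimality
    have hγmem : ∀ ξ ∈ Set.Icc σa σb, γ ξ ∈ Set.Icc a b := by
      intro ξ hξ
      rw [hσa'] at hξ; rw [hσb'] at hξ
      simp only [hγ']
      by_cases hc : ξ ≤ b.1 + a.2
      · rw [if_pos hc, Set.mem_Icc, Prod.le_def, Prod.le_def]
        refine ⟨⟨?_, le_refl _⟩, ?_, hab2⟩ <;> simp <;> [linarith [hξ.1]; linarith]
      · push_neg at hc
        rw [if_neg (not_le.mpr hc), Set.mem_Icc, Prod.le_def, Prod.le_def]
        refine ⟨⟨hab1, ?_⟩, le_refl _, ?_⟩ <;> simp <;> [linarith; linarith [hξ.2]]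
    have hslice : ∀ p ∈ Set.Icc a b, g (p.1 + p.2) ≤ w p := by
      intro p hp
      rw [Set.mem_Icc, Prod.le_def, Prod.le_def] at hp
      obtain ⟨⟨hpa1, hpa2⟩, hpb1, hpb2⟩ := hp
      have hpmem : p ∈ Set.Icc a b := by
        rw [Set.mem_Icc, Prod.le_def, Prod.le_def]; exact ⟨⟨hpa1, hpa2⟩, hpb1, hpb2⟩
      set q : ℝ × ℝ := γ (p.1 + p.2) with hq'
      have hσmem : p.1 + p.2 ∈ Set.Icc σa σb := by
        rw [hσa', hσb']; constructor <;> [linarith; linarith]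
      have hqmem : q ∈ Set.Icc a b := hγmem _ hσmem
      have hqσ : q.1 + q.2 = p.1 + p.2 ∧ p.1 ≤ q.1 := by
        simp only [hq', hγ']
        by_cases hc : p.1 + p.2 ≤ b.1 + a.2
        · rw [if_pos hc]; constructor <;> simp <;> linarith
        · push_neg at hc
          rw [if_neg (not_le.mpr hc)]; constructor <;> simp <;> linarith
      have hφp := hsign p hpmem
      have hφq := hsign q hqmem
      have hφle : ⟪cv + p.1 • u - p.2 • v, u + v⟫_ℝ ≤ ⟪cv + q.1 • u - q.2 • v, u + v⟫_ℝ := by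
        rw [hφaff p, hφaff q]
        have h1 : q.2 - p.2 = -(q.1 - p.1) := by linarith [hqσ.1]
        nlinarith [hqσ.2, hαpos, h1]
      have hφsq : ⟪cv + q.1 • u - q.2 • v, u + v⟫_ℝ ^ 2 ≤ ⟪cv + p.1 • u - p.2 • v, u + v⟫_ℝ ^ 2 := by
        nlinarith [hφp, hφq, hφle]
      have := key_ineq u v cv hnsq p q (by linarith [hqσ.1]) hφsq
      rw [hg']
      calc w (γ (p.1 + p.2)) = w q := by rw [hq']
        _ = ‖cv + q.1 • u - q.2 • v‖ := hw q
        _ ≤ ‖cv + p.1 • u - p.2 • v‖ := this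
        _ = w p := (hw p).symm
    -- pointwise description of the polyline integrand
    have hmain : ∀ t ∈ Set.Ioc (0:ℝ) 1, t ≠ l1 / Λ →
        w (polyPath a m m b t) *
            (|(deriv (polyPath a m m b) t).1| + |(deriv (polyPath a m m b) t).2|)
          = Λ * g (σa + t * Λ) := by
      intro t ht htne
      have htΛ : t * Λ ≠ l1 := fun hc => htne ((eq_div_iff hΛne).mpr hc)
      rcases lt_or_gt_of_ne htΛ with hlt | hgt
      · -- first (horizontal) leg
        have hl1pos : 0 < l1 := lt_trans (mul_pos ht.1 hΛpos) hlt
        have hev : ∀ᶠ s in 𝓝 t, s * Λ < l1 :=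
          (isOpen_lt (continuous_id.mul continuous_const) continuous_const).eventually_mem hlt
        have heq : polyPath a m m b =ᶠ[𝓝 t] fun s => a + (s * (Λ / l1)) • (m - a) := by
          filter_upwards [hev] with s hs
          rw [hpoly]
          simp only
          rw [if_pos hs.le, mul_div_assoc]
        have hder : HasDerivAt (polyPath a m m b) ((Λ / l1) • (m - a)) t := by
          rw [heq.hasDerivAt_iff]
          exact ((hasDerivAt_mul_const (Λ / l1)).smul_const (m - a)).const_add a
        have hcomp : (Λ / l1) • (m - a) = ((Λ : ℝ), (0 : ℝ)) := by
          rw [hm', Prod.ext_iff]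
          constructor
          · show (Λ / l1) * ((b.1, a.2).1 - a.1) = Λ
            simp only
            rw [← hl1', div_mul_cancel₀ _ (ne_of_gt hl1pos)]
          · show (Λ / l1) * ((b.1, a.2).2 - a.2) = 0
            simp
        have hval : polyPath a m m b t = γ (σa + t * Λ) := by
          rw [heq.eq_of_nhds]
          simp only [hγ']
          rw [if_pos (by rw [hσa']; rw [hl1'] at hlt; linarith)]
          rw [Prod.ext_iff]
          constructor
          · show a.1 + (t * (Λ / l1)) * ((b.1, a.2).1 - a.1) = σa + t * Λ - a.2
            simp only
            rw [← hl1', hσa']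
            field_simp
            ring
          · show a.2 + (t * (Λ / l1)) * ((b.1, a.2).2 - a.2) = a.2
            simp
        rw [hval, hder.deriv, hcomp]
        simp only [abs_zero, add_zero]
        rw [abs_of_pos hΛpos]
        rw [hg']
        ring
      · -- second (vertical) leg
        have hl3pos : 0 < l3 := by
          have h1 : t * Λ ≤ Λ := by nlinarith [ht.2, hΛpos]
          have h2 : Λ = l1 + l3 := hΛ'
          linarith
        have hev : ∀ᶠ s in 𝓝 t, l1 < s * Λ :=
          (isOpen_lt continuous_const (continuous_id.mul continuous_const)).eventually_mem hgt
        have heq : polyPath a m m b =ᶠ[𝓝 t] fun s => m + (s * (Λ / l3) - l1 / l3) • (b - m) := by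
          filter_upwards [hev] with s hs
          rw [hpoly]
          simp only
          rw [if_neg (not_le.mpr hs)]
          have hl3ne : l3 ≠ 0 := ne_of_gt hl3pos
          rw [show (s * Λ - l1) / l3 = s * (Λ / l3) - l1 / l3 by field_simp]
        have hder : HasDerivAt (polyPath a m m b) ((Λ / l3) • (b - m)) t := by
          rw [heq.hasDerivAt_iff]
          exact (((hasDerivAt_mul_const (Λ / l3)).sub_const (l1 / l3)).smul_const (b - m)).const_add m
        have hcomp : (Λ / l3) • (b - m) = ((0 : ℝ), (Λ : ℝ)) := by
          rw [hm', Prod.ext_iff]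
          constructor
          · show (Λ / l3) * (b.1 - (b.1, a.2).1) = 0
            simp
          · show (Λ / l3) * (b.2 - (b.1, a.2).2) = Λ
            simp only
            rw [← hl3', div_mul_cancel₀ _ (ne_of_gt hl3pos)]
        have hval : polyPath a m m b t = γ (σa + t * Λ) := by
          rw [heq.eq_of_nhds]
          simp only [hγ']
          rw [if_neg (by rw [hσa']; rw [hl1'] at hgt; push_neg; linarith)]
          rw [Prod.ext_iff]
          constructor
          · show m.1 + (t * (Λ / l3) - l1 / l3) * (b.1 - m.1) = b.1
            rw [hm']
            simp
          · show m.2 + (t * (Λ / l3) - l1 / l3) * (b.2 - m.2) = σa + t * Λ - b.1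
            rw [hm']
            simp only
            rw [hσa', hl1']
            field_simp
            ring
        rw [hval, hder.deriv, hcomp]
        simp only [abs_zero, zero_add]
        rw [abs_of_pos hΛpos]
        rw [hg']
        ring
    -- the polyline integral equals the integral of g over the diagonal range
    have hLHS : (∫ t in (0:ℝ)..1,
          w (polyPath a m m b t) *
            (|(deriv (polyPath a m m b) t).1| + |(deriv (polyPath a m m b) t).2|))
        = ∫ x in σa..σb, g x := by
      have hne : ∀ᵐ t ∂(volume : Measure ℝ), t ≠ l1 / Λ := by
        have hset : {t : ℝ | ¬ t ≠ l1 / Λ} = {l1 / Λ} := by ext t; simp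
        rw [ae_iff, hset]
        exact measure_singleton _
      have hae : ∀ᵐ t ∂(volume : Measure ℝ), t ∈ Set.uIoc (0:ℝ) 1 →
          w (polyPath a m m b t) *
              (|(deriv (polyPath a m m b) t).1| + |(deriv (polyPath a m m b) t).2|)
            = Λ * g (σa + t * Λ) := by
        filter_upwards [hne] with t h1 h2
        rw [Set.uIoc_of_le (by norm_num : (0:ℝ) ≤ 1)] at h2
        exact hmain t h2 h1
      rw [intervalIntegral.integral_congr_ae hae]
      have hchg := intervalIntegral.integral_comp_smul_deriv
        (a := (0:ℝ)) (b := (1:ℝ)) (f := fun t : ℝ => σa + t * Λ) (f' := fun _ => Λ) (g := g)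
        (fun x _ => (hasDerivAt_mul_const Λ).const_add σa) continuousOn_const hgc
      simp only [smul_eq_mul, Function.comp] at hchg
      rw [hchg, zero_mul, add_zero, one_mul, hσab]
    -- path stays in the rectangle
    have hψmem : ∀ t ∈ Set.Icc (0:ℝ) 1, ψ t ∈ Set.Icc a b := by
      intro t ht
      have h01 : (0:ℝ) ∈ Set.Icc (0:ℝ) 1 := by norm_num
      have h11 : (1:ℝ) ∈ Set.Icc (0:ℝ) 1 := by norm_num
      rw [Set.mem_Icc, Prod.le_def, Prod.le_def]
      refine ⟨⟨?_, ?_⟩, ?_, ?_⟩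
      · rw [← hψ0]; exact hm1 h01 ht ht.1
      · rw [← hψ0]; exact hm2 h01 ht ht.1
      · rw [← hψ1]; exact hm1 ht h11 ht.2
      · rw [← hψ1]; exact hm2 ht h11 ht.2
    -- derivative bounds
    have hdb : ∀ t : ℝ, |(deriv ψ t).1| ≤ (K:ℝ) ∧ |(deriv ψ t).2| ≤ (K:ℝ) := by
      intro t
      have h := norm_deriv_le_of_lipschitz (f := ψ) (x₀ := t) hψ
      constructor
      · calc |(deriv ψ t).1| = ‖(deriv ψ t).1‖ := (Real.norm_eq_abs _).symm
          _ ≤ ‖deriv ψ t‖ := norm_fst_le _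
          _ ≤ (K:ℝ) := h
      · calc |(deriv ψ t).2| = ‖(deriv ψ t).2‖ := (Real.norm_eq_abs _).symm
          _ ≤ ‖deriv ψ t‖ := norm_snd_le _
          _ ≤ (K:ℝ) := h
    -- the diagonal coordinate along ψ
    set σψ : ℝ → ℝ := fun t => (ψ t).1 + (ψ t).2 with hσψ'
    have hψc : Continuous ψ := hψ.continuous
    have hσψc : Continuous σψ := (continuous_fst.comp hψc).add (continuous_snd.comp hψc)
    have hσψlip : ∀ x y : ℝ, |σψ x - σψ y| ≤ 2 * (K:ℝ) * |x - y| := by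
      intro x y
      have h1 : |(ψ x).1 - (ψ y).1| ≤ (K:ℝ) * |x - y| := by
        have := (LipschitzWith.prod_fst.comp hψ).dist_le_mul x y
        simpa [Real.dist_eq, Function.comp] using this
      have h2 : |(ψ x).2 - (ψ y).2| ≤ (K:ℝ) * |x - y| := by
        have := (LipschitzWith.prod_snd.comp hψ).dist_le_mul x y
        simpa [Real.dist_eq, Function.comp] using this
      calc |σψ x - σψ y| = |((ψ x).1 - (ψ y).1) + ((ψ x).2 - (ψ y).2)| := by
            rw [hσψ']; ring_nf
        _ ≤ |(ψ x).1 - (ψ y).1| + |(ψ x).2 - (ψ y).2| := abs_add_le _ _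
        _ ≤ 2 * (K:ℝ) * |x - y| := by linarith
    -- primitive of g
    set G : ℝ → ℝ := fun x => ∫ ξ in σa..x, g ξ with hG'
    have hGd : ∀ x : ℝ, HasDerivAt G (g x) x := fun x =>
      intervalIntegral.integral_hasDerivAt_right (hgc.intervalIntegrable _ _)
        hgc.stronglyMeasurable.stronglyMeasurableAtFilter hgc.continuousAt
    have hGc : Continuous G :=
      continuous_iff_continuousAt.2 fun x => (hGd x).differentiableAt.continuousAt
    set h : ℝ → ℝ := fun t => G (σψ t) with hh'
    have hhc : Continuous h := hGc.comp hσψc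
    -- bound for g on the relevant compact interval
    set lo : ℝ := σψ 0 - 2 * (K:ℝ) * 2 with hlo'
    set hi : ℝ := σψ 0 + 2 * (K:ℝ) * 2 with hhi'
    obtain ⟨Cg, hCg⟩ : ∃ C : ℝ, ∀ ξ ∈ Set.Icc lo hi, |g ξ| ≤ C := by
      obtain ⟨C, hC⟩ := (isCompact_Icc (a := lo) (b := hi)).exists_bound_of_continuousOn
        hgc.continuousOn
      exact ⟨C, fun ξ hξ => by simpa [Real.norm_eq_abs] using hC ξ hξ⟩
    have hKnn : (0:ℝ) ≤ (K:ℝ) := K.2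
    have hJ : ∀ x ∈ Set.Icc (0:ℝ) 2, σψ x ∈ Set.Icc lo hi := by
      intro x hx
      have := hσψlip x 0
      rw [sub_zero] at this
      have hxabs : |x| ≤ 2 := by rw [abs_of_nonneg hx.1]; exact hx.2
      have h1 : |σψ x - σψ 0| ≤ 2 * (K:ℝ) * 2 := by nlinarith
      have h2 := abs_le.mp h1
      rw [hlo', hhi']
      constructor <;> linarith [h2.1, h2.2]
    have hCg0 : 0 ≤ Cg := le_trans (abs_nonneg _) (hCg (σψ 0) (hJ 0 (by norm_num)))
    -- h is Lipschitz on [0,2]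
    have hhlip : ∀ x ∈ Set.Icc (0:ℝ) 2, ∀ y ∈ Set.Icc (0:ℝ) 2,
        |h x - h y| ≤ (Cg * (2 * (K:ℝ))) * |x - y| := by
      intro x hx y hy
      have hGsub : G (σψ x) - G (σψ y) = ∫ ξ in (σψ y)..(σψ x), g ξ :=
        intervalIntegral.integral_interval_sub_left (hgc.intervalIntegrable _ _)
          (hgc.intervalIntegrable _ _)
      have hx' := hJ x hx
      have hy' := hJ y hy
      have hsub : ∀ ξ ∈ Set.uIoc (σψ y) (σψ x), ‖g ξ‖ ≤ Cg := by
        intro ξ hξ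
        rw [Real.norm_eq_abs]
        apply hCg
        constructor
        · exact le_of_lt (lt_of_le_of_lt (le_min hy'.1 hx'.1) hξ.1)
        · exact hξ.2.trans (max_le hy'.2 hx'.2)
      have hbnd := intervalIntegral.norm_integral_le_of_norm_le_const hsub
      rw [show h x - h y = G (σψ x) - G (σψ y) from rfl, hGsub]
      rw [Real.norm_eq_abs] at hbnd
      calc |∫ ξ in (σψ y)..(σψ x), g ξ| ≤ Cg * |σψ x - σψ y| := hbnd
        _ ≤ Cg * (2 * (K:ℝ) * |x - y|) := mul_le_mul_of_nonneg_left (hσψlip x y) hCg0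
        _ = (Cg * (2 * (K:ℝ))) * |x - y| := by ring
    -- a.e. derivative of h
    have hdiff : ∀ᵐ t ∂(volume : Measure ℝ), DifferentiableAt ℝ ψ t := hψ.ae_differentiableAt
    set θ : ℝ → ℝ := fun t => g (σψ t) * ((deriv ψ t).1 + (deriv ψ t).2) with hθ'
    have hhd : ∀ᵐ t ∂(volume.restrict (Set.Ioc (0:ℝ) 1)), HasDerivAt h (θ t) t := by
      apply ae_restrict_of_ae
      filter_upwards [hdiff] with t ht
      have hσd : HasDerivAt σψ ((deriv ψ t).1 + (deriv ψ t).2) t :=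
        (hasDerivAt_fst ht).add (hasDerivAt_snd ht)
      exact (hGd (σψ t)).comp t hσd
    have hFTC := lip_ftc h θ (Cg * (2 * (K:ℝ))) hhc hhlip hhd
    have hσψ1 : σψ 1 = σb := by
      show (ψ 1).1 + (ψ 1).2 = σb
      rw [hψ1, hσb']
    have hσψ0 : σψ 0 = σa := by
      show (ψ 0).1 + (ψ 0).2 = σa
      rw [hψ0, hσa']
    have hval : (∫ t in (0:ℝ)..1, θ t) = G σb := by
      rw [hFTC, hh']
      simp only
      rw [hσψ1, hσψ0, hG']
      simp only
      rw [intervalIntegral.integral_same, sub_zero]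
    -- measurability of θ and of the right-hand integrand
    have hdmeas : Measurable (deriv ψ) := measurable_deriv ψ
    have hθmeas : AEStronglyMeasurable θ (volume : Measure ℝ) := by
      apply AEStronglyMeasurable.mul
      · exact ((hgc.comp hσψc).aestronglyMeasurable)
      · exact ((measurable_fst.comp hdmeas).add (measurable_snd.comp hdmeas)).aestronglyMeasurable
    obtain ⟨Cw, hCw⟩ : ∃ C : ℝ, ∀ t ∈ Set.Icc (0:ℝ) 1, |w (ψ t)| ≤ C := by
      obtain ⟨C, hC⟩ := (isCompact_Icc (a := (0:ℝ)) (b := 1)).exists_bound_of_continuousOn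
        (hwc.comp hψc).continuousOn
      exact ⟨C, fun t ht => by simpa [Real.norm_eq_abs] using hC t ht⟩
    have hIocIcc : Set.Ioc (0:ℝ) 1 ⊆ Set.Icc (0:ℝ) 1 := Set.Ioc_subset_Icc_self
    have hθint : IntervalIntegrable θ volume 0 1 := by
      rw [intervalIntegrable_iff, Set.uIoc_of_le (by norm_num : (0:ℝ) ≤ 1)]
      apply Measure.integrableOn_of_bounded (M := Cg * (2 * (K:ℝ)))
      · exact (measure_Ioc_lt_top).ne
      · exact hθmeas
      · rw [ae_restrict_iff' measurableSet_Ioc]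
        refine Eventually.of_forall fun t ht => ?_
        have h1 : |g (σψ t)| ≤ Cg := hCg _ (hJ t ⟨(hIocIcc ht).1, le_trans (hIocIcc ht).2 one_le_two⟩)
        have h2 := hdb t
        rw [Real.norm_eq_abs, hθ']
        simp only
        rw [abs_mul]
        have h3 : |(deriv ψ t).1 + (deriv ψ t).2| ≤ 2 * (K:ℝ) := by
          calc |(deriv ψ t).1 + (deriv ψ t).2| ≤ |(deriv ψ t).1| + |(deriv ψ t).2| := abs_add_le _ _
            _ ≤ 2 * (K:ℝ) := by linarith [h2.1, h2.2]
        exact mul_le_mul h1 h3 (abs_nonneg _) hCg0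
    have hRint : IntervalIntegrable (fun t => w (ψ t) * (|(deriv ψ t).1| + |(deriv ψ t).2|))
        volume 0 1 := by
      rw [intervalIntegrable_iff, Set.uIoc_of_le (by norm_num : (0:ℝ) ≤ 1)]
      apply Measure.integrableOn_of_bounded (M := Cw * (2 * (K:ℝ)))
      · exact (measure_Ioc_lt_top).ne
      · apply AEStronglyMeasurable.mul
        · exact (hwc.comp hψc).aestronglyMeasurable
        · exact ((measurable_fst.comp hdmeas).abs.add
            (measurable_snd.comp hdmeas).abs).aestronglyMeasurable
      · rw [ae_restrict_iff' measurableSet_Ioc]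
        refine Eventually.of_forall fun t ht => ?_
        have h1 : |w (ψ t)| ≤ Cw := hCw t (hIocIcc ht)
        have h2 := hdb t
        rw [Real.norm_eq_abs, abs_mul]
        have h3 : |(|(deriv ψ t).1| + |(deriv ψ t).2|)| ≤ 2 * (K:ℝ) := by
          rw [abs_of_nonneg (by positivity)]
          linarith [h2.1, h2.2]
        exact mul_le_mul h1 h3 (abs_nonneg _) (le_trans (abs_nonneg _) h1)
    -- pointwise comparison
    have hle : θ ≤ᵐ[volume.restrict (Set.Icc (0:ℝ) 1)]
        fun t => w (ψ t) * (|(deriv ψ t).1| + |(deriv ψ t).2|) := by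
      have hae : ∀ᵐ t ∂(volume.restrict (Set.Icc (0:ℝ) 1)),
          θ t ≤ w (ψ t) * (|(deriv ψ t).1| + |(deriv ψ t).2|) := by
        rw [← Measure.restrict_congr_set Ioo_ae_eq_Icc, ae_restrict_iff' measurableSet_Ioo]
        filter_upwards [hdiff] with t hdt htIoo
        have hd1 : 0 ≤ (deriv ψ t).1 :=
          deriv_nonneg_of_monotoneOn htIoo hm1 (hasDerivAt_fst hdt)
        have hd2 : 0 ≤ (deriv ψ t).2 :=
          deriv_nonneg_of_monotoneOn htIoo hm2 (hasDerivAt_snd hdt)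
        have hs := hslice (ψ t) (hψmem t (Set.Ioo_subset_Icc_self htIoo))
        calc θ t = g (σψ t) * ((deriv ψ t).1 + (deriv ψ t).2) := rfl
          _ ≤ w (ψ t) * ((deriv ψ t).1 + (deriv ψ t).2) :=
              mul_le_mul_of_nonneg_right hs (by linarith)
          _ = w (ψ t) * (|(deriv ψ t).1| + |(deriv ψ t).2|) := by
              rw [abs_of_nonneg hd1, abs_of_nonneg hd2]
      exact hae
    have hmono := intervalIntegral.integral_mono_ae_restrict
      (by norm_num : (0:ℝ) ≤ 1) hθint hRint hle
    -- conclusion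
    rw [hLHS]
    -- LHS = ∫ g over σa..σb = G σb = ∫ θ ≤ RHS
    have : (∫ x in σa..σb, g x) = ∫ t in (0:ℝ)..1, θ t := by
      rw [hval, hG']
    rw [this]
    exact hmono

lemma deriv_swap (f : ℝ → ℝ × ℝ) (t : ℝ) :
    deriv (fun s => ((f s).2, (f s).1)) t = ((deriv f t).2, (deriv f t).1) := by
  by_cases hdf : DifferentiableAt ℝ f t
  · exact ((hasDerivAt_snd hdf).prodMk (hasDerivAt_fst hdf)).deriv
  · have hnd : ¬ DifferentiableAt ℝ (fun s => ((f s).2, (f s).1)) t := by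
      intro hc
      apply hdf
      exact ((hasDerivAt_snd hc).prodMk (hasDerivAt_fst hc)).differentiableAt
    rw [deriv_zero_of_not_differentiableAt hdf, deriv_zero_of_not_differentiableAt hnd]
    rfl

lemma polyPath_swap (a c1 c2 b : ℝ × ℝ) (t : ℝ) :
    polyPath (a.2, a.1) (c1.2, c1.1) (c2.2, c2.1) (b.2, b.1) t
      = ((polyPath a c1 c2 b t).2, (polyPath a c1 c2 b t).1) := by
  have hd : ∀ p q : ℝ × ℝ, d1 (p.2, p.1) (q.2, q.1) = d1 p q := by
    intro p q
    show |p.2 - q.2| + |p.1 - q.1| = |p.1 - q.1| + |p.2 - q.2|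
    ring
  simp only [polyPath, hd]
  by_cases h1 : t * (d1 a c1 + d1 c1 c2 + d1 c2 b) ≤ d1 a c1
  · simp [h1, Prod.ext_iff]
  · by_cases h2 : t * (d1 a c1 + d1 c1 c2 + d1 c2 b) ≤ d1 a c1 + d1 c1 c2 <;>
      simp [h1, h2, Prod.ext_iff]

lemma swap_lipschitz {K : NNReal} {ψ : ℝ → ℝ × ℝ} (hψ : LipschitzWith K ψ) :
    LipschitzWith K (fun s => ((ψ s).2, (ψ s).1)) := by
  have h := (LipschitzWith.prod_snd.comp hψ).prodMk (LipschitzWith.prod_fst.comp hψ)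
  simpa using h

/-- Second case of the shortest-path lemma inside a parameter cell: if the monotone
free-space axis `L` misses the rectangle `R` spanned by `a ≤ b`, and `cstar ∈ R` is the
point of `R` at minimal Euclidean distance from `L`, then the polyline `a → cstar → b`
is a weighted shortest monotone path from `a` to `b`. -/
theorem shortest_path_in_cell_axis_missing
    (u v cv : EuclideanSpace ℝ (Fin 2)) (hu : ‖u‖ = 1) (hv : ‖v‖ = 1)
    (huv : u + v ≠ 0)
    (w : ℝ × ℝ → ℝ) (hw : ∀ p : ℝ × ℝ, w p = ‖cv + p.1 • u - p.2 • v‖)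
    (a b : ℝ × ℝ) (hab1 : a.1 ≤ b.1) (hab2 : a.2 ≤ b.2)
    (L R : Set (ℝ × ℝ))
    (hL : L = {p : ℝ × ℝ | ⟪cv + p.1 • u - p.2 • v, u + v⟫_ℝ = 0})
    (hR : R = Set.Icc a b)
    (hLR : L ∩ R = ∅)
    (cstar : ℝ × ℝ) (hcstar : cstar ∈ R)
    (hmin : ∀ p ∈ R, sInf ((fun q => eDist cstar q) '' L) ≤ sInf ((fun q => eDist p q) '' L))
    (ψ : ℝ → ℝ × ℝ) (K : NNReal) (hψ : LipschitzWith K ψ)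
    (hm1 : MonotoneOn (fun t => (ψ t).1) (Set.Icc 0 1))
    (hm2 : MonotoneOn (fun t => (ψ t).2) (Set.Icc 0 1))
    (hψ0 : ψ 0 = a) (hψ1 : ψ 1 = b) :
    ∫ t in (0:ℝ)..1,
        w (polyPath a cstar cstar b t) *
          (|(deriv (polyPath a cstar cstar b) t).1| + |(deriv (polyPath a cstar cstar b) t).2|)
      ≤ ∫ t in (0:ℝ)..1, w (ψ t) * (|(deriv ψ t).1| + |(deriv ψ t).2|) := by
  subst hR hL
  have hnsq : (0:ℝ) < ‖u + v‖ ^ 2 := pow_pos (norm_pos_iff.mpr huv) 2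
  -- affine representation of the inner product
  have hvα : ⟪v, u + v⟫_ℝ = ⟪u, u + v⟫_ℝ := by
    rw [inner_add_right, inner_add_right, real_inner_self_eq_norm_sq,
      real_inner_self_eq_norm_sq, hu, hv, real_inner_comm]
    ring
  set α : ℝ := ⟪u, u + v⟫_ℝ with hα'
  set C : ℝ := ⟪cv, u + v⟫_ℝ with hC'
  have h2α : α + α = ‖u + v‖ ^ 2 := by
    rw [← real_inner_self_eq_norm_sq, inner_add_left, hα', hvα]
  have hαpos : 0 < α := by nlinarith
  have hφaff : ∀ p : ℝ × ℝ, ⟪cv + p.1 • u - p.2 • v, u + v⟫_ℝ = C + α * p.1 - α * p.2 := by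
    intro p
    rw [inner_sub_left, inner_add_left, real_inner_smul_left, real_inner_smul_left, hvα, hα', hC']
    ring
  -- the line misses the rectangle
  have hφne : ∀ p ∈ Set.Icc a b, ⟪cv + p.1 • u - p.2 • v, u + v⟫_ℝ ≠ 0 := by
    intro p hp hzero
    have : p ∈ ({p : ℝ × ℝ | ⟪cv + p.1 • u - p.2 • v, u + v⟫_ℝ = 0} ∩ Set.Icc a b) := ⟨hzero, hp⟩
    rw [hLR] at this
    exact this
  -- sign dichotomy via IVT
  have hdich : (∀ p ∈ Set.Icc a b, ⟪cv + p.1 • u - p.2 • v, u + v⟫_ℝ < 0) ∨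
      (∀ p ∈ Set.Icc a b, 0 < ⟪cv + p.1 • u - p.2 • v, u + v⟫_ℝ) := by
    by_contra hcon
    push_neg at hcon
    obtain ⟨⟨p, hp, hp0⟩, q, hq, hq0⟩ := hcon
    set f : ℝ → ℝ := fun s => C + α * (q.1 + s * (p.1 - q.1)) - α * (q.2 + s * (p.2 - q.2)) with hf'
    have hfc : ContinuousOn f (Set.Icc 0 1) := by fun_prop
    have hf0 : f 0 ≤ 0 := by
      have := hφaff q ▸ hq0
      simp [hf']
      linarith [this]
    have hf1 : 0 ≤ f 1 := by
      have := hφaff p ▸ hp0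
      simp [hf']
      linarith [this]
    have h0mem : (0:ℝ) ∈ Set.Icc (f 0) (f 1) := ⟨hf0, hf1⟩
    obtain ⟨s, hs, hfs⟩ := intermediate_value_Icc (by norm_num : (0:ℝ) ≤ 1) hfc h0mem
    set x : ℝ × ℝ := q + s • (p - q) with hx'
    have hconv : Convex ℝ (Set.Icc a b) := by
      rw [Set.Icc_prod_eq]
      exact (convex_Icc _ _).prod (convex_Icc _ _)
    have hxmem : x ∈ Set.Icc a b := by
      have := hconv hq hp (by linarith [hs.1, hs.2] : (0:ℝ) ≤ 1 - s) (hs.1) (by ring)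
      have hxe : x = (1 - s) • q + s • p := by rw [hx']; module
      rwa [hxe]
    apply hφne x hxmem
    rw [hφaff]
    have hx1 : x.1 = q.1 + s * (p.1 - q.1) := by
      rw [hx']; simp
    have hx2 : x.2 = q.2 + s * (p.2 - q.2) := by
      rw [hx']; simp
    rw [hx1, hx2]
    exact hfs
  -- distance formula
  have hk : ∀ x : ℝ × ℝ, sInf ((fun q => eDist x q) ''
        {p : ℝ × ℝ | ⟪cv + p.1 • u - p.2 • v, u + v⟫_ℝ = 0})
      = |C + α * x.1 - α * x.2| * (Real.sqrt 2 / (2 * α)) := by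
    intro x
    apply sInf_eDist_line C α hαpos x
    ext q
    simp only [Set.mem_setOf_eq, hφaff]
  have hkpos : (0:ℝ) < Real.sqrt 2 / (2 * α) := by positivity
  rw [Set.mem_Icc, Prod.le_def, Prod.le_def] at hcstar
  rcases hdich with hneg | hpos
  · -- Case A : corner (b.1, a.2)
    have hcornermem : ((b.1, a.2) : ℝ × ℝ) ∈ Set.Icc a b := by
      rw [Set.mem_Icc, Prod.le_def, Prod.le_def]
      exact ⟨⟨hab1, le_refl _⟩, le_refl _, hab2⟩
    have hcsmem : cstar ∈ Set.Icc a b := by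
      rw [Set.mem_Icc, Prod.le_def, Prod.le_def]; exact hcstar
    have hmin' := hmin (b.1, a.2) hcornermem
    rw [hk cstar, hk (b.1, a.2)] at hmin'
    have habs : |C + α * cstar.1 - α * cstar.2| ≤ |C + α * (b.1, a.2).1 - α * (b.1, a.2).2| :=
      (mul_le_mul_iff_of_pos_right hkpos).mp hmin'
    have hφcs := hφaff cstar ▸ hneg cstar hcsmem
    have hφcorner := hφaff (b.1, a.2) ▸ hneg (b.1, a.2) hcornermem
    rw [abs_of_neg hφcs, abs_of_neg hφcorner] at habs
    have hd : b.1 - a.2 ≤ cstar.1 - cstar.2 := by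
      have h1 : α * (b.1 - a.2) ≤ α * (cstar.1 - cstar.2) := by
        simp only at habs
        linarith [habs]
      exact (mul_le_mul_iff_of_pos_left hαpos).mp h1
    have h1 : cstar.1 = b.1 := le_antisymm hcstar.2.1 (by linarith [hcstar.1.2])
    have h2 : cstar.2 = a.2 := le_antisymm (by linarith [hcstar.2.1]) hcstar.1.2
    have hcs : cstar = ((b.1, a.2) : ℝ × ℝ) := Prod.ext_iff.mpr ⟨h1, h2⟩
    rw [hcs]
    exact core_caseA u v cv hu hv hnsq w hw a b hab1 hab2 hneg ψ K hψ hm1 hm2 hψ0 hψ1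
  · -- Case B : corner (a.1, b.2); reduce to case A by swapping coordinates
    have hcornermem : ((a.1, b.2) : ℝ × ℝ) ∈ Set.Icc a b := by
      rw [Set.mem_Icc, Prod.le_def, Prod.le_def]
      exact ⟨⟨le_refl _, hab2⟩, hab1, le_refl _⟩
    have hcsmem : cstar ∈ Set.Icc a b := by
      rw [Set.mem_Icc, Prod.le_def, Prod.le_def]; exact hcstar
    have hmin' := hmin (a.1, b.2) hcornermem
    rw [hk cstar, hk (a.1, b.2)] at hmin'
    have habs : |C + α * cstar.1 - α * cstar.2| ≤ |C + α * (a.1, b.2).1 - α * (a.1, b.2).2| :=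
      (mul_le_mul_iff_of_pos_right hkpos).mp hmin'
    have hφcs := hφaff cstar ▸ hpos cstar hcsmem
    have hφcorner := hφaff (a.1, b.2) ▸ hpos (a.1, b.2) hcornermem
    rw [abs_of_pos hφcs, abs_of_pos hφcorner] at habs
    have hd : cstar.1 - cstar.2 ≤ a.1 - b.2 := by
      have h1 : α * (cstar.1 - cstar.2) ≤ α * (a.1 - b.2) := by
        simp only at habs
        linarith [habs]
      exact (mul_le_mul_iff_of_pos_left hαpos).mp h1
    have h1 : cstar.1 = a.1 := le_antisymm (by linarith [hcstar.1.2]) hcstar.1.1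
    have h2 : cstar.2 = b.2 := le_antisymm hcstar.2.2 (by linarith [hcstar.1.1])
    -- swapped data
    set ψ' : ℝ → ℝ × ℝ := fun s => ((ψ s).2, (ψ s).1) with hψ'def
    set w' : ℝ × ℝ → ℝ := fun p => w (p.2, p.1) with hw'def
    have hw' : ∀ p : ℝ × ℝ, w' p = ‖(-cv) + p.1 • v - p.2 • u‖ := by
      intro p
      rw [hw'def]
      simp only
      rw [hw, ← norm_neg]
      congr 1
      module
    have hsign' : ∀ p ∈ Set.Icc ((a.2, a.1) : ℝ × ℝ) ((b.2, b.1) : ℝ × ℝ),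
        ⟪(-cv) + p.1 • v - p.2 • u, v + u⟫_ℝ < 0 := by
      intro p hp
      rw [Set.mem_Icc, Prod.le_def, Prod.le_def] at hp
      have hmem : ((p.2, p.1) : ℝ × ℝ) ∈ Set.Icc a b := by
        rw [Set.mem_Icc, Prod.le_def, Prod.le_def]
        exact ⟨⟨hp.1.2, hp.1.1⟩, hp.2.2, hp.2.1⟩
      have := hpos (p.2, p.1) hmem
      have he : ((-cv) + p.1 • v - p.2 • u) = -(cv + (p.2, p.1).1 • u - (p.2, p.1).2 • v) := by
        simp only
        module
      rw [he, inner_neg_left, add_comm v u]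
      linarith [this]
    have hψ' : LipschitzWith K ψ' := swap_lipschitz hψ
    have hcore := core_caseA v u (-cv) hv hu (by rwa [add_comm v u]) w' hw'
      (a.2, a.1) (b.2, b.1) hab2 hab1 hsign' ψ' K hψ'
      (by exact hm2) (by exact hm1)
      (by rw [hψ'def]; simp [hψ0]) (by rw [hψ'def]; simp [hψ1])
    -- transfer back
    have hppeq : polyPath (a.2, a.1) ((b.2, b.1).1, (a.2, a.1).2) ((b.2, b.1).1, (a.2, a.1).2)
        (b.2, b.1) = fun s => ((polyPath a cstar cstar b s).2, (polyPath a cstar cstar b s).1) := by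
      funext s
      have := polyPath_swap a cstar cstar b s
      rw [h1, h2] at this
      exact this
    rw [hppeq] at hcore
    have hLHSeq : ∀ t : ℝ,
        w' ((fun s => ((polyPath a cstar cstar b s).2, (polyPath a cstar cstar b s).1)) t) *
            (|(deriv (fun s => ((polyPath a cstar cstar b s).2, (polyPath a cstar cstar b s).1)) t).1| +
              |(deriv (fun s => ((polyPath a cstar cstar b s).2, (polyPath a cstar cstar b s).1)) t).2|)
          = w (polyPath a cstar cstar b t) *
              (|(deriv (polyPath a cstar cstar b) t).1| + |(deriv (polyPath a cstar cstar b) t).2|) := by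
      intro t
      rw [deriv_swap]
      rw [hw'def]
      simp only [Prod.mk.eta]
      ring
    have hRHSeq : ∀ t : ℝ,
        w' (ψ' t) * (|(deriv ψ' t).1| + |(deriv ψ' t).2|)
          = w (ψ t) * (|(deriv ψ t).1| + |(deriv ψ t).2|) := by
      intro t
      rw [hψ'def, deriv_swap, hw'def]
      simp only [Prod.mk.eta]
      ring
    calc ∫ t in (0:ℝ)..1, w (polyPath a cstar cstar b t) *
            (|(deriv (polyPath a cstar cstar b) t).1| + |(deriv (polyPath a cstar cstar b) t).2|)
        = ∫ t in (0:ℝ)..1,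
            w' ((fun s => ((polyPath a cstar cstar b s).2, (polyPath a cstar cstar b s).1)) t) *
            (|(deriv (fun s => ((polyPath a cstar cstar b s).2, (polyPath a cstar cstar b s).1)) t).1| +
              |(deriv (fun s => ((polyPath a cstar cstar b s).2, (polyPath a cstar cstar b s).1)) t).2|) := by
          exact (intervalIntegral.integral_congr fun t _ => (hLHSeq t)).symm
      _ ≤ ∫ t in (0:ℝ)..1, w' (ψ' t) * (|(deriv ψ' t).1| + |(deriv ψ' t).2|) := hcore
      _ = ∫ t in (0:ℝ)..1, w (ψ t) * (|(deriv ψ t).1| + |(deriv ψ t).2|) :=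
          intervalIntegral.integral_congr fun t _ => (hRHSeq t)
end

section
/- Fix unit vectors u, v ∈ ℝ² with u + v ≠ 0 and c ∈ ℝ², with weight w(s,t) = ‖c + s·u − t·v‖. Let a ≤ b componentwise, R the rectangle they span, L the monotone free-space axis, and suppose L ∩ R is nonempty with componentwise least and greatest points c1 ≤ c2. Let π be a constant-speed Lipschitz parametrization of the polyline a → c1 → c2 → b. Then for every δ ≥ 0 and every monotone Lipschitz path ψ : [0,1] → ℝ² with ψ(0) = a and ψ(1) = b: ∫_{{t ∈ [0,1] : w(ψ(t)) ≤ δ}} ‖ψ'(t)‖₁ dt ≤ ∫_{{t ∈ [0,1] : w(π(t)) ≤ δ}} ‖π'(t)‖₁ dt. That is, π simultaneously maximizes, over all monotone paths from a to b and for every leash-length threshold δ, the length of the portion of the path lying in the free space {w ≤ δ}. -/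
open scoped InnerProductSpace
open MeasureTheory Filter Topology

lemma mono_ftc_le {f : ℝ → ℝ} (hf : Monotone f) (hc : Continuous f)
    {α β : ℝ} (hab : α ≤ β) :
    IntegrableOn (deriv f) (Set.Icc α β) ∧
      ∫ t in Set.Icc α β, deriv f t ≤ f β - f α := by
  set ν := hf.stieltjesFunction.measure with hν
  have hsf : ⇑hf.stieltjesFunction = f := by
    funext x
    rw [hf.stieltjesFunction_eq]
    exact rightLim_eq_of_tendsto
      ((hc.tendsto x).mono_left nhdsWithin_le_nhds)
  have hae : ∀ᵐ x, deriv f x = (ν.rnDeriv volume x).toReal := by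
    filter_upwards [hf.ae_hasDerivAt] with x hx using hx.deriv
  have hlint : ∫⁻ x in Set.Icc α β, ν.rnDeriv volume x ≤ ν (Set.Icc α β) :=
    Measure.setLIntegral_rnDeriv_le _
  have hνIcc : ν (Set.Icc α β) = ENNReal.ofReal (f β - f α) := by
    have h1 := hf.stieltjesFunction.measure_Icc α β
    have hl : Function.leftLim f α = f α :=
      leftLim_eq_of_tendsto
        ((hc.tendsto α).mono_left nhdsWithin_le_nhds)
    rw [hsf, hl] at h1
    exact h1
  have hfin : ν (Set.Icc α β) ≠ ⊤ := by rw [hνIcc]; exact ENNReal.ofReal_ne_top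
  have hint : IntegrableOn (fun x => (ν.rnDeriv volume x).toReal) (Set.Icc α β) := by
    apply integrable_toReal_of_lintegral_ne_top
      ((Measure.measurable_rnDeriv _ _).aemeasurable)
    exact (hlint.trans_lt hfin.lt_top).ne
  have hint' : IntegrableOn (deriv f) (Set.Icc α β) :=
    hint.congr (EventuallyEq.symm (ae_restrict_of_ae hae))
  refine ⟨hint', ?_⟩
  calc ∫ t in Set.Icc α β, deriv f t
      = ∫ t in Set.Icc α β, (ν.rnDeriv volume t).toReal :=
        integral_congr_ae (ae_restrict_of_ae hae)
    _ = (∫⁻ t in Set.Icc α β, ν.rnDeriv volume t).toReal := by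
        apply integral_toReal ((Measure.measurable_rnDeriv _ _).aemeasurable)
        exact ae_restrict_of_ae (Measure.rnDeriv_lt_top _ _)
    _ ≤ (ν (Set.Icc α β)).toReal := ENNReal.toReal_mono hfin hlint
    _ = f β - f α := by rw [hνIcc]; exact ENNReal.toReal_ofReal (by linarith [hf hab])

set_option maxHeartbeats 2000000 in
/-- The axis polyline `a → c1 → c2 → b` simultaneously maximizes, over all monotone
paths from `a` to `b` and for every leash-length threshold `δ ≥ 0`, the L1 length of
the portion of the path lying in the free space `{w ≤ δ}`. -/
theorem axis_path_maximizes_partial_frechet_similarity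
    (u v cv : EuclideanSpace ℝ (Fin 2)) (hu : ‖u‖ = 1) (hv : ‖v‖ = 1)
    (huv : u + v ≠ 0)
    (w : ℝ × ℝ → ℝ) (hw : ∀ p : ℝ × ℝ, w p = ‖cv + p.1 • u - p.2 • v‖)
    (a b : ℝ × ℝ) (hab1 : a.1 ≤ b.1) (hab2 : a.2 ≤ b.2)
    (L R : Set (ℝ × ℝ))
    (hL : L = {p : ℝ × ℝ | ⟪cv + p.1 • u - p.2 • v, u + v⟫_ℝ = 0})
    (hR : R = Set.Icc a b)
    (c1 c2 : ℝ × ℝ) (hc1 : c1 ∈ L ∩ R) (hc2 : c2 ∈ L ∩ R)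
    (hc1min : ∀ p ∈ L ∩ R, c1 ≤ p) (hc2max : ∀ p ∈ L ∩ R, p ≤ c2)
    (δ : ℝ) (hδ : 0 ≤ δ)
    (ψ : ℝ → ℝ × ℝ) (K : NNReal) (hψ : LipschitzWith K ψ)
    (hm1 : MonotoneOn (fun t => (ψ t).1) (Set.Icc 0 1))
    (hm2 : MonotoneOn (fun t => (ψ t).2) (Set.Icc 0 1))
    (hψ0 : ψ 0 = a) (hψ1 : ψ 1 = b) :
    ∫ t in {s : ℝ | s ∈ Set.Icc (0:ℝ) 1 ∧ w (ψ s) ≤ δ},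
        (|(deriv ψ t).1| + |(deriv ψ t).2|)
      ≤ ∫ t in {s : ℝ | s ∈ Set.Icc (0:ℝ) 1 ∧ w (polyPath a c1 c2 b s) ≤ δ},
          (|(deriv (polyPath a c1 c2 b) t).1| + |(deriv (polyPath a c1 c2 b) t).2|) := by
  classical
  -- basic memberships and order facts
  have hc1L : ⟪cv + c1.1 • u - c1.2 • v, u + v⟫_ℝ = 0 := by
    have h := hc1.1; rw [hL] at h; exact h
  have hc2L : ⟪cv + c2.1 • u - c2.2 • v, u + v⟫_ℝ = 0 := by
    have h := hc2.1; rw [hL] at h; exact h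
  have hc1R : c1 ∈ Set.Icc a b := hR ▸ hc1.2
  have hc2R : c2 ∈ Set.Icc a b := hR ▸ hc2.2
  have hac1 : a ≤ c1 := hc1R.1
  have hc1b : c1 ≤ b := hc1R.2
  have hac2 : a ≤ c2 := hc2R.1
  have hc2b : c2 ≤ b := hc2R.2
  have hc12 : c1 ≤ c2 := hc1min c2 hc2
  -- scalar geometry
  set α0 : ℝ := 1 + ⟪u, v⟫_ℝ with hα0
  have huv2 : ‖u + v‖^2 = 2 * α0 := by
    rw [norm_add_sq_real, hu, hv]; ring
  have hα0pos : 0 < α0 := by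
    have h1 : 0 < ‖u + v‖ := norm_pos_iff.mpr huv
    nlinarith
  have hexp : ∀ p : ℝ × ℝ, ⟪cv + p.1 • u - p.2 • v, u + v⟫_ℝ
      = ⟪cv, u + v⟫_ℝ + (p.1 - p.2) * α0 := by
    intro p
    have h1 : ⟪u, u + v⟫_ℝ = α0 := by
      rw [inner_add_right, real_inner_self_eq_norm_sq, hu, hα0]; ring
    have h2 : ⟪v, u + v⟫_ℝ = α0 := by
      rw [inner_add_right, real_inner_self_eq_norm_sq, hv, real_inner_comm, hα0]; ring
    rw [inner_sub_left, inner_add_left, real_inner_smul_left, real_inner_smul_left, h1, h2]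
    ring
  set k : ℝ := c1.1 - c1.2 with hk
  have hcv : ⟪cv, u + v⟫_ℝ = -(k * α0) := by
    have h := hexp c1
    rw [hc1L] at h
    rw [hk]
    linarith
  have hinner : ∀ p : ℝ × ℝ, ⟪cv + p.1 • u - p.2 • v, u + v⟫_ℝ = α0 * (p.1 - p.2 - k) := by
    intro p; rw [hexp, hcv]; ring
  have hkey : ∀ p q : ℝ × ℝ, p.1 + p.2 = q.1 + q.2 →
      0 ≤ (p.1 - q.1) * (q.1 - q.2 - k) → w q ≤ w p := by
    intro p q hsum hsign
    have hvec : cv + p.1 • u - p.2 • v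
        = (cv + q.1 • u - q.2 • v) + (p.1 - q.1) • (u + v) := by
      have h1 : p.1 = q.1 + (p.1 - q.1) := by ring
      have h2 : p.2 = q.2 - (p.1 - q.1) := by linarith
      rw [h1, h2]
      module
    have hsq : w q ^ 2 ≤ w p ^ 2 := by
      rw [hw p, hw q, hvec, norm_add_sq_real, real_inner_smul_right, hinner, norm_smul]
      rw [mul_pow, Real.norm_eq_abs, sq_abs, huv2]
      nlinarith [sq_nonneg (p.1 - q.1)]
    have hwq : 0 ≤ w p := by rw [hw]; positivity
    exact le_of_pow_le_pow_left₀ two_ne_zero hwq hsq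
  have hc2k : c2.1 - c2.2 = k := by
    have h := hinner c2
    rw [hc2L] at h
    rcases mul_eq_zero.mp h.symm with h' | h'
    · exact absurd h' hα0pos.ne'
    · linarith
  -- boundary position of c1 and c2
  have hedge1 : c1.1 = a.1 ∨ c1.2 = a.2 := by
    by_contra hcon
    push_neg at hcon
    have h1 : a.1 < c1.1 := lt_of_le_of_ne hac1.1 (Ne.symm hcon.1)
    have h2 : a.2 < c1.2 := lt_of_le_of_ne hac1.2 (Ne.symm hcon.2)
    set ε := min (c1.1 - a.1) (c1.2 - a.2) with hε
    have hεpos : 0 < ε := lt_min (by linarith) (by linarith)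
    have hε1 : ε ≤ c1.1 - a.1 := min_le_left _ _
    have hε2 : ε ≤ c1.2 - a.2 := min_le_right _ _
    have hmem : ((c1.1 - ε, c1.2 - ε) : ℝ × ℝ) ∈ L ∩ R := by
      refine ⟨?_, ?_⟩
      · rw [hL]
        show ⟪cv + (c1.1 - ε) • u - (c1.2 - ε) • v, u + v⟫_ℝ = 0
        have h := hinner (c1.1 - ε, c1.2 - ε)
        simp only at h
        rw [h, hk]
        ring
      · rw [hR]
        refine Set.mem_Icc.mpr ⟨⟨?_, ?_⟩, ⟨?_, ?_⟩⟩
        · show a.1 ≤ c1.1 - ε; linarith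
        · show a.2 ≤ c1.2 - ε; linarith
        · show c1.1 - ε ≤ b.1; linarith [hc1b.1]
        · show c1.2 - ε ≤ b.2; linarith [hc1b.2]
    have h3 := (hc1min _ hmem).1
    simp only at h3
    linarith
  have hedge2 : c2.1 = b.1 ∨ c2.2 = b.2 := by
    by_contra hcon
    push_neg at hcon
    have h1 : c2.1 < b.1 := lt_of_le_of_ne hc2b.1 hcon.1
    have h2 : c2.2 < b.2 := lt_of_le_of_ne hc2b.2 hcon.2
    set ε := min (b.1 - c2.1) (b.2 - c2.2) with hε
    have hεpos : 0 < ε := lt_min (by linarith) (by linarith)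
    have hε1 : ε ≤ b.1 - c2.1 := min_le_left _ _
    have hε2 : ε ≤ b.2 - c2.2 := min_le_right _ _
    have hmem : ((c2.1 + ε, c2.2 + ε) : ℝ × ℝ) ∈ L ∩ R := by
      refine ⟨?_, ?_⟩
      · rw [hL]
        show ⟪cv + (c2.1 + ε) • u - (c2.2 + ε) • v, u + v⟫_ℝ = 0
        have h := hinner (c2.1 + ε, c2.2 + ε)
        simp only at h
        rw [h, ← hc2k]
        ring
      · rw [hR]
        refine Set.mem_Icc.mpr ⟨⟨?_, ?_⟩, ⟨?_, ?_⟩⟩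
        · show a.1 ≤ c2.1 + ε; linarith [hac2.1]
        · show a.2 ≤ c2.2 + ε; linarith [hac2.2]
        · show c2.1 + ε ≤ b.1; linarith
        · show c2.2 + ε ≤ b.2; linarith
    have h3 := (hc2max _ hmem).1
    simp only at h3
    linarith
  -- lengths
  set l1 : ℝ := (c1.1 - a.1) + (c1.2 - a.2) with hl1
  set l2 : ℝ := (c2.1 - c1.1) + (c2.2 - c1.2) with hl2
  set l3 : ℝ := (b.1 - c2.1) + (b.2 - c2.2) with hl3
  set Λ : ℝ := l1 + l2 + l3 with hΛdef
  have hΛeq : Λ = (b.1 - a.1) + (b.2 - a.2) := by rw [hΛdef, hl1, hl2, hl3]; ring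
  have hl1nn : 0 ≤ l1 := by rw [hl1]; linarith [hac1.1, hac1.2]
  have hl2nn : 0 ≤ l2 := by rw [hl2]; linarith [hc12.1, hc12.2]
  have hl3nn : 0 ≤ l3 := by rw [hl3]; linarith [hc2b.1, hc2b.2]
  have hΛnn : 0 ≤ Λ := by rw [hΛeq]; linarith
  have hd1a : d1 a c1 = l1 := by
    simp only [d1, hl1]
    rw [abs_sub_comm a.1, abs_sub_comm a.2,
      abs_of_nonneg (by linarith [hac1.1] : (0:ℝ) ≤ c1.1 - a.1),
      abs_of_nonneg (by linarith [hac1.2] : (0:ℝ) ≤ c1.2 - a.2)]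
  have hd1b : d1 c1 c2 = l2 := by
    simp only [d1, hl2]
    rw [abs_sub_comm c1.1, abs_sub_comm c1.2,
      abs_of_nonneg (by linarith [hc12.1] : (0:ℝ) ≤ c2.1 - c1.1),
      abs_of_nonneg (by linarith [hc12.2] : (0:ℝ) ≤ c2.2 - c1.2)]
  have hd1c : d1 c2 b = l3 := by
    simp only [d1, hl3]
    rw [abs_sub_comm c2.1, abs_sub_comm c2.2,
      abs_of_nonneg (by linarith [hc2b.1] : (0:ℝ) ≤ b.1 - c2.1),
      abs_of_nonneg (by linarith [hc2b.2] : (0:ℝ) ≤ b.2 - c2.2)]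
  have hπdef : ∀ t : ℝ, polyPath a c1 c2 b t =
      if t * Λ ≤ l1 then a + (t * Λ / l1) • (c1 - a)
      else if t * Λ ≤ l1 + l2 then c1 + ((t * Λ - l1) / l2) • (c2 - c1)
      else c2 + ((t * Λ - l1 - l2) / l3) • (b - c2) := by
    intro t
    simp only [polyPath, hd1a, hd1b, hd1c, ← hΛdef]
  -- continuity / measurability
  have hwc : Continuous w := by
    have hwfun : w = fun p : ℝ × ℝ => ‖cv + p.1 • u - p.2 • v‖ := funext hw
    rw [hwfun]
    fun_prop
  have hψcont : Continuous ψ := hψ.continuous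
  have hπmeas : Measurable (polyPath a c1 c2 b) := by
    have hfun : polyPath a c1 c2 b = fun t =>
        if t * Λ ≤ l1 then a + (t * Λ / l1) • (c1 - a)
        else if t * Λ ≤ l1 + l2 then c1 + ((t * Λ - l1) / l2) • (c2 - c1)
        else c2 + ((t * Λ - l1 - l2) / l3) • (b - c2) := funext hπdef
    rw [hfun]
    apply Measurable.ite
    · exact measurableSet_le (measurable_id.mul_const Λ) measurable_const
    · fun_prop
    apply Measurable.ite
    · exact measurableSet_le (measurable_id.mul_const Λ) measurable_const
    · fun_prop
    · fun_prop
  have hEπmeas : MeasurableSet {s : ℝ | s ∈ Set.Icc (0:ℝ) 1 ∧ w (polyPath a c1 c2 b s) ≤ δ} := by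
    have hset : {s : ℝ | s ∈ Set.Icc (0:ℝ) 1 ∧ w (polyPath a c1 c2 b s) ≤ δ}
        = Set.Icc 0 1 ∩ (fun s => w (polyPath a c1 c2 b s)) ⁻¹' Set.Iic δ := rfl
    rw [hset]
    exact measurableSet_Icc.inter
      ((hwc.measurable.comp hπmeas) measurableSet_Iic)
  have hE'meas : MeasurableSet {s : ℝ | s ∈ Set.Icc (0:ℝ) 1 ∧ w (ψ s) ≤ δ} := by
    have hset : {s : ℝ | s ∈ Set.Icc (0:ℝ) 1 ∧ w (ψ s) ≤ δ}
        = Set.Icc 0 1 ∩ (fun s => w (ψ s)) ⁻¹' Set.Iic δ := rfl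
    rw [hset]
    exact measurableSet_Icc.inter
      (((hwc.comp hψcont).measurable) measurableSet_Iic)
  -- the image of ψ stays in the rectangle
  have hψR : ∀ t ∈ Set.Icc (0:ℝ) 1, ψ t ∈ Set.Icc a b := by
    intro t ht
    refine Set.mem_Icc.mpr ⟨⟨?_, ?_⟩, ⟨?_, ?_⟩⟩
    · simpa [hψ0] using hm1 (Set.left_mem_Icc.mpr zero_le_one) ht ht.1
    · simpa [hψ0] using hm2 (Set.left_mem_Icc.mpr zero_le_one) ht ht.1
    · simpa [hψ1] using hm1 ht (Set.right_mem_Icc.mpr zero_le_one) ht.2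
    · simpa [hψ1] using hm2 ht (Set.right_mem_Icc.mpr zero_le_one) ht.2
  by_cases hΛpos : 0 < Λ
  case neg =>
    -- degenerate: a = b, ψ is constant on [0,1], LHS = 0
    have hΛ0 : Λ = 0 := le_antisymm (not_lt.mp hΛpos) hΛnn
    have hba : b = a := by
      have h := hΛeq
      rw [hΛ0] at h
      have h1 : b.1 = a.1 := by linarith
      have h2 : b.2 = a.2 := by linarith
      exact Prod.ext h1 h2
    have hconst : ∀ t ∈ Set.Icc (0:ℝ) 1, ψ t = a := by
      intro t ht
      have h := hψR t ht
      rw [hba] at h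
      exact le_antisymm (h.2) (h.1)
    have hLHS : ∫ t in {s : ℝ | s ∈ Set.Icc (0:ℝ) 1 ∧ w (ψ s) ≤ δ},
        (|(deriv ψ t).1| + |(deriv ψ t).2|) = 0 := by
      rw [setIntegral_congr_ae hE'meas (g := fun _ => (0:ℝ)) ?_]
      · simp
      · have hS : volume ({0, 1} : Set ℝ) = 0 := (Set.toFinite _).measure_zero _
        filter_upwards [measure_eq_zero_iff_ae_notMem.mp hS] with t htS htE
        simp only [Set.mem_insert_iff, Set.mem_singleton_iff, not_or] at htS
        have htIoo : t ∈ Set.Ioo (0:ℝ) 1 :=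
          ⟨lt_of_le_of_ne htE.1.1 (Ne.symm htS.1), lt_of_le_of_ne htE.1.2 htS.2⟩
        have hev : ψ =ᶠ[nhds t] fun _ => a := by
          apply Filter.eventuallyEq_of_mem (Ioo_mem_nhds htIoo.1 htIoo.2)
          intro s hs
          exact hconst s (Set.Ioo_subset_Icc_self hs)
        rw [hev.deriv_eq, deriv_const]
        simp
    rw [hLHS]
    exact setIntegral_nonneg hEπmeas fun x _ => by positivity
  -- main case : Λ > 0
  -- the clamped path φ and the monotone Lipschitz function g
  set φ : ℝ → ℝ × ℝ := fun t => ψ (max 0 (min 1 t)) with hφdef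
  have hproj : ∀ t ∈ Set.Icc (0:ℝ) 1, max 0 (min 1 t) = t := by
    intro t ht; rw [min_eq_right ht.2, max_eq_right ht.1]
  have hprojmem : ∀ t : ℝ, max 0 (min 1 t) ∈ Set.Icc (0:ℝ) 1 :=
    fun t => ⟨le_max_left _ _, max_le zero_le_one (min_le_left _ _)⟩
  have hprojmono : Monotone fun t : ℝ => max 0 (min 1 t) :=
    fun s t hst => max_le_max le_rfl (min_le_min le_rfl hst)
  have hφeq : ∀ t ∈ Set.Icc (0:ℝ) 1, φ t = ψ t := by
    intro t ht
    rw [hφdef]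
    simp only
    rw [hproj t ht]
  have hφlip : LipschitzWith K φ := by
    have hpl : LipschitzWith 1 fun t : ℝ => max 0 (min 1 t) := by
      apply LipschitzWith.of_dist_le_mul
      intro x y
      rw [NNReal.coe_one, one_mul, Real.dist_eq, Real.dist_eq]
      calc |max 0 (min 1 x) - max 0 (min 1 y)|
          ≤ |min 1 x - min 1 y| := by
            simpa [max_comm] using abs_max_sub_max_le_abs (min 1 x) (min 1 y) 0
        _ ≤ |x - y| := by
            simpa using (abs_min_sub_min_le_max 1 x 1 y).trans (by simp)
    have h := hψ.comp hpl
    rw [mul_one] at h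
    exact h
  have hφm1 : Monotone fun t => (φ t).1 := fun s t hst =>
    hm1 (hprojmem s) (hprojmem t) (hprojmono hst)
  have hφm2 : Monotone fun t => (φ t).2 := fun s t hst =>
    hm2 (hprojmem s) (hprojmem t) (hprojmono hst)
  set g : ℝ → ℝ := fun t => (φ t).1 + (φ t).2 with hgdef
  have hgmono : Monotone g := fun s t hst => add_le_add (hφm1 hst) (hφm2 hst)
  have hgcont : Continuous g :=
    (continuous_fst.comp hφlip.continuous).add (continuous_snd.comp hφlip.continuous)
  -- the pointwise optimality of the polyline
  have hkey2 : ∀ t ∈ Set.Icc (0:ℝ) 1, ∀ p ∈ Set.Icc a b,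
      p.1 + p.2 = (a.1 + a.2) + t * Λ → w (polyPath a c1 c2 b t) ≤ w p := by
    intro t ht p hp hsum
    have htΛ0 : 0 ≤ t * Λ := mul_nonneg ht.1 hΛpos.le
    rw [hπdef]
    split_ifs with h1 h2
    · -- first leg
      rcases eq_or_lt_of_le hl1nn with hl10 | hl1pos
      · -- degenerate first leg : c1 = a
        have htΛ : t * Λ = 0 := le_antisymm (by rw [← hl10] at h1; exact h1) htΛ0
        have e1 : c1.1 = a.1 := by rw [hl1] at hl10; linarith [hac1.1, hac1.2]
        have e2 : c1.2 = a.2 := by rw [hl1] at hl10; linarith [hac1.1, hac1.2]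
        have hc1a : c1 = a := Prod.ext e1 e2
        rw [hc1a, sub_self, smul_zero, add_zero]
        apply hkey p a
        · rw [hsum, htΛ]; ring
        · have hz : a.1 - a.2 - k = 0 := by rw [hk, hc1a]; ring
          rw [hz, mul_zero]
      · set r := t * Λ / l1 with hr
        have hr0 : 0 ≤ r := div_nonneg htΛ0 hl1pos.le
        have hr1 : r ≤ 1 := (div_le_one hl1pos).mpr h1
        have hrl : r * l1 = t * Λ := div_mul_cancel₀ _ hl1pos.ne'
        have hq : a + r • (c1 - a) = (a.1 + r * (c1.1 - a.1), a.2 + r * (c1.2 - a.2)) := by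
          apply Prod.ext <;> simp [smul_eq_mul]
        rw [hq]
        have hsum' : p.1 + p.2 = (a.1 + r * (c1.1 - a.1)) + (a.2 + r * (c1.2 - a.2)) := by
          have hh : r * (c1.1 - a.1) + r * (c1.2 - a.2) = t * Λ := by
            rw [← hrl, hl1]; ring
          rw [hsum]; linarith
        apply hkey p _ hsum'
        show 0 ≤ (p.1 - (a.1 + r * (c1.1 - a.1))) *
          ((a.1 + r * (c1.1 - a.1)) - (a.2 + r * (c1.2 - a.2)) - k)
        rcases hedge1 with he | he
        · have hs1 : 0 ≤ p.1 - (a.1 + r * (c1.1 - a.1)) := by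
            have h0 : r * (c1.1 - a.1) = 0 := by rw [he]; ring
            rw [h0]; linarith [hp.1.1]
          have hs2 : 0 ≤ (a.1 + r * (c1.1 - a.1)) - (a.2 + r * (c1.2 - a.2)) - k := by
            have h0 : r * (c1.1 - a.1) = 0 := by rw [he]; ring
            rw [h0, hk, he]
            nlinarith [hac1.2, hr0, hr1]
          exact mul_nonneg hs1 hs2
        · have h0 : r * (c1.2 - a.2) = 0 := by rw [he]; ring
          have hs1 : p.1 - (a.1 + r * (c1.1 - a.1)) ≤ 0 := by
            have := hp.1.2
            rw [h0] at hsum'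
            linarith
          have hs2 : (a.1 + r * (c1.1 - a.1)) - (a.2 + r * (c1.2 - a.2)) - k ≤ 0 := by
            rw [h0, hk, he]
            nlinarith [hac1.1, hr0, hr1]
          linarith [mul_nonneg (neg_nonneg.mpr hs1) (neg_nonneg.mpr hs2)]
    · -- middle leg (on the axis)
      have h1' := not_le.mp h1
      have hl2pos : 0 < l2 := by linarith
      set r := (t * Λ - l1) / l2 with hr
      have hrl : r * l2 = t * Λ - l1 := div_mul_cancel₀ _ hl2pos.ne'
      have hq : c1 + r • (c2 - c1) = (c1.1 + r * (c2.1 - c1.1), c1.2 + r * (c2.2 - c1.2)) := by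
        apply Prod.ext <;> simp [smul_eq_mul]
      rw [hq]
      apply hkey
      · have hh : r * (c2.1 - c1.1) + r * (c2.2 - c1.2) = t * Λ - l1 := by
          rw [← hrl, hl2]; ring
        have hl1e : l1 = (c1.1 - a.1) + (c1.2 - a.2) := hl1
        show p.1 + p.2 = (c1.1 + r * (c2.1 - c1.1)) + (c1.2 + r * (c2.2 - c1.2))
        rw [hsum]; linarith
      · have hd : c2.1 - c2.2 = c1.1 - c1.2 := by rw [hc2k, hk]
        have hz : (c1.1 + r * (c2.1 - c1.1)) - (c1.2 + r * (c2.2 - c1.2)) - k = 0 := by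
          rw [hk]; linear_combination r * hd
        show 0 ≤ (p.1 - (c1.1 + r * (c2.1 - c1.1))) *
          ((c1.1 + r * (c2.1 - c1.1)) - (c1.2 + r * (c2.2 - c1.2)) - k)
        rw [hz, mul_zero]
    · -- last leg
      have h2' := not_le.mp h2
      have htΛ1 : t * Λ ≤ Λ := by nlinarith [mul_nonneg (sub_nonneg.mpr ht.2) hΛpos.le]
      have hl3pos : 0 < l3 := by linarith [h2', htΛ1, hΛdef.le, hΛdef.ge]
      set r := (t * Λ - l1 - l2) / l3 with hr
      have hr0 : 0 ≤ r := div_nonneg (by linarith) hl3pos.le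
      have hr1 : r ≤ 1 := (div_le_one hl3pos).mpr (by linarith [htΛ1, hΛdef.le, hΛdef.ge])
      have hrl : r * l3 = t * Λ - l1 - l2 := div_mul_cancel₀ _ hl3pos.ne'
      have hq : c2 + r • (b - c2) = (c2.1 + r * (b.1 - c2.1), c2.2 + r * (b.2 - c2.2)) := by
        apply Prod.ext <;> simp [smul_eq_mul]
      rw [hq]
      have hsum' : p.1 + p.2 = (c2.1 + r * (b.1 - c2.1)) + (c2.2 + r * (b.2 - c2.2)) := by
        have hh : r * (b.1 - c2.1) + r * (b.2 - c2.2) = t * Λ - l1 - l2 := by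
          rw [← hrl, hl3]; ring
        have hl1e : l1 = (c1.1 - a.1) + (c1.2 - a.2) := hl1
        have hl2e : l2 = (c2.1 - c1.1) + (c2.2 - c1.2) := hl2
        rw [hsum]; linarith
      apply hkey p _ hsum'
      show 0 ≤ (p.1 - (c2.1 + r * (b.1 - c2.1))) *
        ((c2.1 + r * (b.1 - c2.1)) - (c2.2 + r * (b.2 - c2.2)) - k)
      rcases hedge2 with he | he
      · have h0 : r * (b.1 - c2.1) = 0 := by rw [he]; ring
        have hs1 : p.1 - (c2.1 + r * (b.1 - c2.1)) ≤ 0 := by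
          rw [h0, he]; linarith [hp.2.1]
        have hs2 : (c2.1 + r * (b.1 - c2.1)) - (c2.2 + r * (b.2 - c2.2)) - k ≤ 0 := by
          rw [h0, ← hc2k, he]
          nlinarith [hc2b.2, hr0, hr1]
        linarith [mul_nonneg (neg_nonneg.mpr hs1) (neg_nonneg.mpr hs2)]
      · have h0 : r * (b.2 - c2.2) = 0 := by rw [he]; ring
        have hs1 : 0 ≤ p.1 - (c2.1 + r * (b.1 - c2.1)) := by
          rw [h0] at hsum'
          rw [he] at hsum'
          linarith [hp.2.2]
        have hs2 : 0 ≤ (c2.1 + r * (b.1 - c2.1)) - (c2.2 + r * (b.2 - c2.2)) - k := by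
          rw [h0, ← hc2k, he]
          nlinarith [hc2b.1, hr0, hr1]
        exact mul_nonneg hs1 hs2
  -- the projected free space G
  set G : Set ℝ := (fun p : ℝ × ℝ => p.1 + p.2) '' ({p : ℝ × ℝ | w p ≤ δ} ∩ Set.Icc a b) with hGdef
  have hGcpt : IsCompact G := by
    apply IsCompact.image ?_ (continuous_fst.add continuous_snd)
    exact IsCompact.inter_left isCompact_Icc (isClosed_le hwc continuous_const)
  have hGsub : ∀ x ∈ G, a.1 + a.2 ≤ x ∧ x ≤ (a.1 + a.2) + Λ := by
    rintro x ⟨p, ⟨hpw, hpR⟩, rfl⟩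
    constructor
    · show a.1 + a.2 ≤ p.1 + p.2
      linarith [hpR.1.1, hpR.1.2]
    · show p.1 + p.2 ≤ a.1 + a.2 + Λ
      linarith [hpR.2.1, hpR.2.2, hΛeq.le, hΛeq.ge]
  have hGconv : ∀ x y z : ℝ, x ∈ G → z ∈ G → x ≤ y → y ≤ z → y ∈ G := by
    intro x y z hx hz hxy hyz
    obtain ⟨p, ⟨hpw, hpR⟩, hpx⟩ := hx
    obtain ⟨q, ⟨hqw, hqR⟩, hqz⟩ := hz
    simp only [Set.mem_setOf_eq] at hpw hqw
    rcases eq_or_lt_of_le (hxy.trans hyz) with heq | hlt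
    · have hyx : y = x := le_antisymm (heq ▸ hyz) hxy
      rw [hyx]
      exact ⟨p, ⟨hpw, hpR⟩, hpx⟩
    · set θ : ℝ := (z - y) / (z - x) with hθ
      have hzx : 0 < z - x := by linarith
      have hθ0 : 0 ≤ θ := div_nonneg (by linarith) hzx.le
      have hθ1 : θ ≤ 1 := (div_le_one hzx).mpr (by linarith)
      have hθm : θ * (z - x) = z - y := div_mul_cancel₀ _ hzx.ne'
      refine ⟨θ • p + (1 - θ) • q, ⟨?_, ?_⟩, ?_⟩
      · show w (θ • p + (1 - θ) • q) ≤ δ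
        rw [hw]
        have h1 : (θ • p + (1 - θ) • q).1 = θ * p.1 + (1 - θ) * q.1 := by simp
        have h2 : (θ • p + (1 - θ) • q).2 = θ * p.2 + (1 - θ) * q.2 := by simp
        have hc : cv + (θ • p + (1 - θ) • q).1 • u - (θ • p + (1 - θ) • q).2 • v
            = θ • (cv + p.1 • u - p.2 • v) + (1 - θ) • (cv + q.1 • u - q.2 • v) := by
          rw [h1, h2]
          module
        rw [hc]
        have hwp : ‖cv + p.1 • u - p.2 • v‖ ≤ δ := by rw [← hw]; exact hpw
        have hwq : ‖cv + q.1 • u - q.2 • v‖ ≤ δ := by rw [← hw]; exact hqw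
        calc ‖θ • (cv + p.1 • u - p.2 • v) + (1 - θ) • (cv + q.1 • u - q.2 • v)‖
            ≤ ‖θ • (cv + p.1 • u - p.2 • v)‖ + ‖(1 - θ) • (cv + q.1 • u - q.2 • v)‖ :=
              norm_add_le _ _
          _ = θ * ‖cv + p.1 • u - p.2 • v‖ + (1 - θ) * ‖cv + q.1 • u - q.2 • v‖ := by
              rw [norm_smul, norm_smul, Real.norm_eq_abs, Real.norm_eq_abs,
                abs_of_nonneg hθ0, abs_of_nonneg (by linarith : (0:ℝ) ≤ 1 - θ)]
          _ ≤ θ * δ + (1 - θ) * δ :=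
              add_le_add (mul_le_mul_of_nonneg_left hwp hθ0)
                (mul_le_mul_of_nonneg_left hwq (by linarith : (0:ℝ) ≤ 1 - θ))
          _ = δ := by ring
      · have h1 : (θ • p + (1 - θ) • q).1 = θ * p.1 + (1 - θ) * q.1 := by simp
        have h2 : (θ • p + (1 - θ) • q).2 = θ * p.2 + (1 - θ) * q.2 := by simp
        have hθ1' : (0:ℝ) ≤ 1 - θ := by linarith
        refine Set.mem_Icc.mpr ⟨⟨?_, ?_⟩, ⟨?_, ?_⟩⟩
        · rw [h1]
          linarith [mul_le_mul_of_nonneg_left hpR.1.1 hθ0,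
            mul_le_mul_of_nonneg_left hqR.1.1 hθ1']
        · rw [h2]
          linarith [mul_le_mul_of_nonneg_left hpR.1.2 hθ0,
            mul_le_mul_of_nonneg_left hqR.1.2 hθ1']
        · rw [h1]
          linarith [mul_le_mul_of_nonneg_left hpR.2.1 hθ0,
            mul_le_mul_of_nonneg_left hqR.2.1 hθ1']
        · rw [h2]
          linarith [mul_le_mul_of_nonneg_left hpR.2.2 hθ0,
            mul_le_mul_of_nonneg_left hqR.2.2 hθ1']
      · show (θ • p + (1 - θ) • q).1 + (θ • p + (1 - θ) • q).2 = y
        have h1 : (θ • p + (1 - θ) • q).1 = θ * p.1 + (1 - θ) * q.1 := by simp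
        have h2 : (θ • p + (1 - θ) • q).2 = θ * p.2 + (1 - θ) * q.2 := by simp
        rw [h1, h2]
        have hpx' : p.1 + p.2 = x := hpx
        have hqz' : q.1 + q.2 = z := hqz
        linear_combination θ * hpx' + (1 - θ) * hqz' - hθm
  -- split on whether the ψ-free set is empty
  by_cases hEne : ({s : ℝ | s ∈ Set.Icc (0:ℝ) 1 ∧ w (ψ s) ≤ δ}).Nonempty
  case neg =>
    rw [Set.not_nonempty_iff_eq_empty.mp hEne, Measure.restrict_empty, integral_zero_measure]
    exact setIntegral_nonneg hEπmeas fun x _ => by positivity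
  obtain ⟨t₀, ht₀⟩ := hEne
  have hgψG : ∀ t ∈ Set.Icc (0:ℝ) 1, w (ψ t) ≤ δ → g t ∈ G := by
    intro t ht hwt
    refine ⟨ψ t, ⟨hwt, hψR t ht⟩, ?_⟩
    show (ψ t).1 + (ψ t).2 = g t
    rw [hgdef]
    simp only
    rw [hφeq t ht]
  set J : Set ℝ := Set.Icc 0 1 ∩ g ⁻¹' G with hJdef
  have hJclosed : IsClosed J := isClosed_Icc.inter (hGcpt.isClosed.preimage hgcont)
  have hJne : J.Nonempty := ⟨t₀, ht₀.1, hgψG t₀ ht₀.1 ht₀.2⟩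
  have hJbb : BddBelow J := BddBelow.mono Set.inter_subset_left bddBelow_Icc
  have hJba : BddAbove J := BddAbove.mono Set.inter_subset_left bddAbove_Icc
  have htαJ : sInf J ∈ J := hJclosed.csInf_mem hJne hJbb
  have htβJ : sSup J ∈ J := hJclosed.csSup_mem hJne hJba
  have htαβ : sInf J ≤ sSup J := csInf_le_csSup hJne hJbb hJba
  obtain ⟨hftc_int, hftc⟩ := mono_ftc_le hgmono hgcont htαβ
  have hGne : G.Nonempty := ⟨g t₀, hgψG t₀ ht₀.1 ht₀.2⟩
  have hpG : sInf G ∈ G := hGcpt.sInf_mem hGne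
  have hqG : sSup G ∈ G := hGcpt.sSup_mem hGne
  -- the LHS is at most sSup G - sInf G
  have hae1 : ∀ᵐ t : ℝ, t ∈ {s : ℝ | s ∈ Set.Icc (0:ℝ) 1 ∧ w (ψ s) ≤ δ} →
      |(deriv ψ t).1| + |(deriv ψ t).2| = deriv g t := by
    have hS : volume ({0, 1} : Set ℝ) = 0 := (Set.toFinite _).measure_zero _
    filter_upwards [hφlip.ae_differentiableAt, hφm1.ae_hasDerivAt, hφm2.ae_hasDerivAt,
      measure_eq_zero_iff_ae_notMem.mp hS] with t hdiff hD1 hD2 htS htE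
    simp only [Set.mem_insert_iff, Set.mem_singleton_iff, not_or] at htS
    have htIoo : t ∈ Set.Ioo (0:ℝ) 1 :=
      ⟨lt_of_le_of_ne htE.1.1 (Ne.symm htS.1), lt_of_le_of_ne htE.1.2 htS.2⟩
    have hev : ψ =ᶠ[nhds t] φ := by
      apply Filter.eventuallyEq_of_mem (Ioo_mem_nhds htIoo.1 htIoo.2)
      intro s hs
      exact (hφeq s (Set.Ioo_subset_Icc_self hs)).symm
    have hdψφ : deriv ψ t = deriv φ t := hev.deriv_eq
    have hdφ : HasDerivAt φ (deriv φ t) t := hdiff.hasDerivAt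
    have h1 : HasDerivAt (fun s => (φ s).1) ((deriv φ t).1) t := by
      simpa [Function.comp_def] using (hasFDerivAt_fst.comp t hdφ.hasFDerivAt).hasDerivAt
    have h2 : HasDerivAt (fun s => (φ s).2) ((deriv φ t).2) t := by
      simpa [Function.comp_def] using (hasFDerivAt_snd.comp t hdφ.hasFDerivAt).hasDerivAt
    have h1nn : 0 ≤ (deriv φ t).1 := by rw [h1.unique hD1]; exact ENNReal.toReal_nonneg
    have h2nn : 0 ≤ (deriv φ t).2 := by rw [h2.unique hD2]; exact ENNReal.toReal_nonneg
    have hgd : deriv g t = (deriv φ t).1 + (deriv φ t).2 := by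
      rw [hgdef]
      exact (h1.add h2).deriv
    rw [hdψφ, hgd, abs_of_nonneg h1nn, abs_of_nonneg h2nn]
  have hgd0 : ∀ᵐ t : ℝ, 0 ≤ deriv g t := by
    filter_upwards [hgmono.ae_hasDerivAt] with t ht
    rw [ht.deriv]
    exact ENNReal.toReal_nonneg
  have hE'sub : {s : ℝ | s ∈ Set.Icc (0:ℝ) 1 ∧ w (ψ s) ≤ δ} ⊆ Set.Icc (sInf J) (sSup J) := by
    intro t ht
    have htJ : t ∈ J := ⟨ht.1, hgψG t ht.1 ht.2⟩
    exact ⟨csInf_le hJbb htJ, le_csSup hJba htJ⟩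
  have hLHS : ∫ t in {s : ℝ | s ∈ Set.Icc (0:ℝ) 1 ∧ w (ψ s) ≤ δ},
      (|(deriv ψ t).1| + |(deriv ψ t).2|) ≤ sSup G - sInf G := by
    calc ∫ t in {s : ℝ | s ∈ Set.Icc (0:ℝ) 1 ∧ w (ψ s) ≤ δ},
        (|(deriv ψ t).1| + |(deriv ψ t).2|)
        = ∫ t in {s : ℝ | s ∈ Set.Icc (0:ℝ) 1 ∧ w (ψ s) ≤ δ}, deriv g t :=
          setIntegral_congr_ae hE'meas hae1
      _ ≤ ∫ t in Set.Icc (sInf J) (sSup J), deriv g t :=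
          setIntegral_mono_set hftc_int (ae_restrict_of_ae hgd0)
            (HasSubset.Subset.eventuallyLE hE'sub)
      _ ≤ g (sSup J) - g (sInf J) := hftc
      _ ≤ sSup G - sInf G := by
          have hα : sInf G ≤ g (sInf J) := csInf_le hGcpt.bddBelow htαJ.2
          have hβ : g (sSup J) ≤ sSup G := le_csSup hGcpt.bddAbove htβJ.2
          linarith
  -- the RHS is at least sSup G - sInf G
  set tp := (sInf G - (a.1 + a.2)) / Λ with htpdef
  set tq := (sSup G - (a.1 + a.2)) / Λ with htqdef
  have hpq : sInf G ≤ sSup G := csInf_le_csSup hGne hGcpt.bddBelow hGcpt.bddAbove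
  have htp0 : 0 ≤ tp := div_nonneg (by linarith [(hGsub _ hpG).1]) hΛpos.le
  have htq1 : tq ≤ 1 := (div_le_one hΛpos).mpr (by linarith [(hGsub _ hqG).2])
  have htptq : tp ≤ tq := by
    rw [htpdef, htqdef]
    gcongr
  have hIoosub : Set.Ioo tp tq ⊆
      {s : ℝ | s ∈ Set.Icc (0:ℝ) 1 ∧ w (polyPath a c1 c2 b s) ≤ δ} := by
    intro t ht
    have ht0 : 0 ≤ t := le_trans htp0 ht.1.le
    have ht1 : t ≤ 1 := le_trans ht.2.le htq1
    have hξ1 : sInf G ≤ (a.1 + a.2) + t * Λ := by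
      have h := (div_lt_iff₀ hΛpos).mp ht.1
      linarith
    have hξ2 : (a.1 + a.2) + t * Λ ≤ sSup G := by
      have h := (lt_div_iff₀ hΛpos).mp ht.2
      linarith
    have hξG : (a.1 + a.2) + t * Λ ∈ G := hGconv _ _ _ hpG hqG hξ1 hξ2
    obtain ⟨p, ⟨hpw, hpR⟩, hpξ⟩ := hξG
    simp only [Set.mem_setOf_eq] at hpw
    exact ⟨⟨ht0, ht1⟩, le_trans (hkey2 t ⟨ht0, ht1⟩ p hpR hpξ) hpw⟩
  have haeπ : ∀ᵐ t : ℝ, t ∈ {s : ℝ | s ∈ Set.Icc (0:ℝ) 1 ∧ w (polyPath a c1 c2 b s) ≤ δ} →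
      |(deriv (polyPath a c1 c2 b) t).1| + |(deriv (polyPath a c1 c2 b) t).2| = Λ := by
    have hS : volume ({0, 1, l1 / Λ, (l1 + l2) / Λ} : Set ℝ) = 0 :=
      (Set.toFinite _).measure_zero _
    filter_upwards [measure_eq_zero_iff_ae_notMem.mp hS] with t htS htE
    simp only [Set.mem_insert_iff, Set.mem_singleton_iff, not_or] at htS
    obtain ⟨ht0, ht1, htb1, htb2⟩ := htS
    have ht0' : 0 < t := lt_of_le_of_ne htE.1.1 (Ne.symm ht0)
    have ht1' : t < 1 := lt_of_le_of_ne htE.1.2 ht1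
    have hne1 : t * Λ ≠ l1 := fun h => htb1 ((eq_div_iff hΛpos.ne').mpr h)
    have hne2 : t * Λ ≠ l1 + l2 := fun h => htb2 ((eq_div_iff hΛpos.ne').mpr h)
    rcases lt_trichotomy (t * Λ) l1 with hcase | hcase | hcase
    · -- first leg
      have hl1pos : 0 < l1 := lt_trans (mul_pos ht0' hΛpos) hcase
      have hev : polyPath a c1 c2 b =ᶠ[nhds t] fun s => a + (s * (Λ / l1)) • (c1 - a) := by
        have hopen : IsOpen {s : ℝ | s * Λ < l1} :=
          isOpen_lt (continuous_id.mul continuous_const) continuous_const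
        apply Filter.eventuallyEq_of_mem (hopen.mem_nhds hcase)
        intro s hs
        rw [hπdef, if_pos (le_of_lt hs), mul_div_assoc]
      have hd : HasDerivAt (fun s : ℝ => a + (s * (Λ / l1)) • (c1 - a))
          ((Λ / l1) • (c1 - a)) t := by
        have hsc : HasDerivAt (fun s : ℝ => s * (Λ / l1)) (Λ / l1) t := by
          simpa using (hasDerivAt_id t).mul_const (Λ / l1)
        exact (hsc.smul_const (c1 - a)).const_add a
      rw [hev.deriv_eq, hd.deriv]
      have e1 : ((Λ / l1) • (c1 - a)).1 = (Λ / l1) * (c1.1 - a.1) := by simp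
      have e2 : ((Λ / l1) • (c1 - a)).2 = (Λ / l1) * (c1.2 - a.2) := by simp
      rw [e1, e2,
        abs_of_nonneg (mul_nonneg (div_nonneg hΛpos.le hl1pos.le) (by linarith [hac1.1])),
        abs_of_nonneg (mul_nonneg (div_nonneg hΛpos.le hl1pos.le) (by linarith [hac1.2]))]
      have hsum3 : (Λ / l1) * (c1.1 - a.1) + (Λ / l1) * (c1.2 - a.2) = (Λ / l1) * l1 := by
        rw [hl1]; ring
      rw [hsum3, div_mul_cancel₀ _ hl1pos.ne']
    · exact absurd hcase hne1
    · rcases lt_trichotomy (t * Λ) (l1 + l2) with hcase2 | hcase2 | hcase2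
      · -- middle leg
        have hl2pos : 0 < l2 := by linarith
        have hev : polyPath a c1 c2 b =ᶠ[nhds t]
            fun s => c1 + (s * (Λ / l2) - l1 / l2) • (c2 - c1) := by
          have hopen : IsOpen {s : ℝ | l1 < s * Λ ∧ s * Λ < l1 + l2} :=
            (isOpen_lt continuous_const (continuous_id.mul continuous_const)).inter
              (isOpen_lt (continuous_id.mul continuous_const) continuous_const)
          apply Filter.eventuallyEq_of_mem (hopen.mem_nhds ⟨hcase, hcase2⟩)
          intro s hs
          rw [hπdef, if_neg (not_le.mpr hs.1), if_pos hs.2.le, sub_div, mul_div_assoc]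
        have hd : HasDerivAt (fun s : ℝ => c1 + (s * (Λ / l2) - l1 / l2) • (c2 - c1))
            ((Λ / l2) • (c2 - c1)) t := by
          have hsc : HasDerivAt (fun s : ℝ => s * (Λ / l2) - l1 / l2) (Λ / l2) t := by
            simpa using ((hasDerivAt_id t).mul_const (Λ / l2)).sub_const (l1 / l2)
          exact (hsc.smul_const (c2 - c1)).const_add c1
        rw [hev.deriv_eq, hd.deriv]
        have e1 : ((Λ / l2) • (c2 - c1)).1 = (Λ / l2) * (c2.1 - c1.1) := by simp
        have e2 : ((Λ / l2) • (c2 - c1)).2 = (Λ / l2) * (c2.2 - c1.2) := by simp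
        rw [e1, e2,
          abs_of_nonneg (mul_nonneg (div_nonneg hΛpos.le hl2pos.le) (by linarith [hc12.1])),
          abs_of_nonneg (mul_nonneg (div_nonneg hΛpos.le hl2pos.le) (by linarith [hc12.2]))]
        have hsum3 : (Λ / l2) * (c2.1 - c1.1) + (Λ / l2) * (c2.2 - c1.2) = (Λ / l2) * l2 := by
          rw [hl2]; ring
        rw [hsum3, div_mul_cancel₀ _ hl2pos.ne']
      · exact absurd hcase2 hne2
      · -- last leg
        have htΛ1 : t * Λ < Λ := by
          have h := mul_lt_mul_of_pos_right ht1' hΛpos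
          linarith [h]
        have hl3pos : 0 < l3 := by linarith [hΛdef.le, hΛdef.ge]
        have hev : polyPath a c1 c2 b =ᶠ[nhds t]
            fun s => c2 + (s * (Λ / l3) - (l1 + l2) / l3) • (b - c2) := by
          have hopen : IsOpen {s : ℝ | l1 + l2 < s * Λ} :=
            isOpen_lt continuous_const (continuous_id.mul continuous_const)
          apply Filter.eventuallyEq_of_mem (hopen.mem_nhds hcase2)
          intro s hs
          have hs' : l1 + l2 < s * Λ := hs
          have hs1 : ¬ s * Λ ≤ l1 := not_le.mpr (by linarith)
          have hs2 : ¬ s * Λ ≤ l1 + l2 := not_le.mpr hs'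
          rw [hπdef, if_neg hs1, if_neg hs2,
            show s * Λ - l1 - l2 = s * Λ - (l1 + l2) by ring, sub_div, mul_div_assoc]
        have hd : HasDerivAt (fun s : ℝ => c2 + (s * (Λ / l3) - (l1 + l2) / l3) • (b - c2))
            ((Λ / l3) • (b - c2)) t := by
          have hsc : HasDerivAt (fun s : ℝ => s * (Λ / l3) - (l1 + l2) / l3) (Λ / l3) t := by
            simpa using ((hasDerivAt_id t).mul_const (Λ / l3)).sub_const ((l1 + l2) / l3)
          exact (hsc.smul_const (b - c2)).const_add c2
        rw [hev.deriv_eq, hd.deriv]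
        have e1 : ((Λ / l3) • (b - c2)).1 = (Λ / l3) * (b.1 - c2.1) := by simp
        have e2 : ((Λ / l3) • (b - c2)).2 = (Λ / l3) * (b.2 - c2.2) := by simp
        rw [e1, e2,
          abs_of_nonneg (mul_nonneg (div_nonneg hΛpos.le hl3pos.le) (by linarith [hc2b.1])),
          abs_of_nonneg (mul_nonneg (div_nonneg hΛpos.le hl3pos.le) (by linarith [hc2b.2]))]
        have hsum3 : (Λ / l3) * (b.1 - c2.1) + (Λ / l3) * (b.2 - c2.2) = (Λ / l3) * l3 := by
          rw [hl3]; ring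
        rw [hsum3, div_mul_cancel₀ _ hl3pos.ne']
  have hRHSeq : ∫ t in {s : ℝ | s ∈ Set.Icc (0:ℝ) 1 ∧ w (polyPath a c1 c2 b s) ≤ δ},
      (|(deriv (polyPath a c1 c2 b) t).1| + |(deriv (polyPath a c1 c2 b) t).2|)
      = (volume {s : ℝ | s ∈ Set.Icc (0:ℝ) 1 ∧ w (polyPath a c1 c2 b s) ≤ δ}).toReal * Λ := by
    rw [setIntegral_congr_ae hEπmeas haeπ, setIntegral_const, smul_eq_mul]
    rfl
  have hvol : sSup G - sInf G ≤
      (volume {s : ℝ | s ∈ Set.Icc (0:ℝ) 1 ∧ w (polyPath a c1 c2 b s) ≤ δ}).toReal * Λ := by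
    have h1 : ENNReal.ofReal (tq - tp) ≤
        volume {s : ℝ | s ∈ Set.Icc (0:ℝ) 1 ∧ w (polyPath a c1 c2 b s) ≤ δ} := by
      rw [← Real.volume_Ioo]
      exact measure_mono hIoosub
    have h2 : volume {s : ℝ | s ∈ Set.Icc (0:ℝ) 1 ∧ w (polyPath a c1 c2 b s) ≤ δ} ≠ ⊤ := by
      apply ne_of_lt
      apply lt_of_le_of_lt (measure_mono (fun s hs => hs.1))
      rw [Real.volume_Icc]
      exact ENNReal.ofReal_lt_top
    have h3 : tq - tp ≤
        (volume {s : ℝ | s ∈ Set.Icc (0:ℝ) 1 ∧ w (polyPath a c1 c2 b s) ≤ δ}).toReal := by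
      have h4 := ENNReal.toReal_mono h2 h1
      rwa [ENNReal.toReal_ofReal (by linarith)] at h4
    have h5 : Λ * (tq - tp) = sSup G - sInf G := by
      rw [htqdef, htpdef]
      field_simp
      ring
    calc sSup G - sInf G = Λ * (tq - tp) := h5.symm
      _ ≤ Λ * (volume {s : ℝ | s ∈ Set.Icc (0:ℝ) 1 ∧
            w (polyPath a c1 c2 b s) ≤ δ}).toReal := mul_le_mul_of_nonneg_left h3 hΛpos.le
      _ = (volume {s : ℝ | s ∈ Set.Icc (0:ℝ) 1 ∧
            w (polyPath a c1 c2 b s) ≤ δ}).toReal * Λ := mul_comm _ _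
  calc ∫ t in {s : ℝ | s ∈ Set.Icc (0:ℝ) 1 ∧ w (ψ s) ≤ δ},
      (|(deriv ψ t).1| + |(deriv ψ t).2|)
      ≤ sSup G - sInf G := hLHS
    _ ≤ (volume {s : ℝ | s ∈ Set.Icc (0:ℝ) 1 ∧ w (polyPath a c1 c2 b s) ≤ δ}).toReal * Λ := hvol
    _ = ∫ t in {s : ℝ | s ∈ Set.Icc (0:ℝ) 1 ∧ w (polyPath a c1 c2 b s) ≤ δ},
        (|(deriv (polyPath a c1 c2 b) t).1| + |(deriv (polyPath a c1 c2 b) t).2|) := hRHSeq.symm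
end

section
/- Let N be a positive natural number, σ > 0, and let π : [0,1] → [0, Nσ]² be a monotone Lipschitz path with π(0) = (0,0) and π(1) = (Nσ, Nσ). Then there exists a monotone Lipschitz path π̃ : [0,1] → [0, Nσ]² with π̃(0) = (0,0), π̃(1) = (Nσ, Nσ), whose image is contained in the grid lines { (x,y) ∈ [0,Nσ]² : x/σ ∈ ℤ or y/σ ∈ ℤ }, such that for every weight w : ℝ² → ℝ that is nonnegative and 1-Lipschitz with respect to the L1 metric: ∫₀¹ w(π̃(t))·‖π̃'(t)‖₁ dt ≤ ∫₀¹ w(π(t))·‖π'(t)‖₁ dt + 4Nσ². -/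
open MeasureTheory

namespace GridAux

noncomputable def XF (b : ℕ → ℝ) (N : ℕ) (σ : ℝ) (s : ℝ) : ℝ :=
  (Finset.range (N+1)).inf' (Finset.nonempty_range_iff.2 (Nat.succ_ne_zero N))
    fun j => b j + max 0 (s - 2*j*σ)

variable {b : ℕ → ℝ} {N : ℕ} {σ : ℝ}

lemma XF_le {j : ℕ} (hj : j ≤ N) (s : ℝ) : XF b N σ s ≤ b j + max 0 (s - 2*j*σ) :=
  Finset.inf'_le _ (Finset.mem_range.2 (Nat.lt_succ_of_le hj))

lemma le_XF {c s : ℝ} (h : ∀ j ≤ N, c ≤ b j + max 0 (s - 2*j*σ)) : c ≤ XF b N σ s :=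
  Finset.le_inf' _ _ fun j hj => h j (Nat.lt_succ_iff.1 (Finset.mem_range.1 hj))

lemma XF_exists (s : ℝ) : ∃ j ≤ N, XF b N σ s = b j + max 0 (s - 2*j*σ) := by
  obtain ⟨j, hj, h⟩ := Finset.exists_mem_eq_inf' (Finset.nonempty_range_iff.2 (Nat.succ_ne_zero N))
    (fun j => b j + max 0 (s - 2*j*σ))
  exact ⟨j, Nat.lt_succ_iff.1 (Finset.mem_range.1 hj), h⟩

lemma XF_mono : Monotone (XF b N σ) := by
  intro s s' hss
  apply le_XF
  intro j hj
  exact (XF_le hj s).trans (by gcongr)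

lemma XF_lip {s s' : ℝ} (h : s ≤ s') : XF b N σ s' ≤ XF b N σ s + (s' - s) := by
  obtain ⟨j, hj, hx⟩ := XF_exists (b := b) (N := N) (σ := σ) s
  refine (XF_le hj s').trans ?_
  rw [hx]
  have : max 0 (s' - 2*j*σ) ≤ max 0 (s - 2*j*σ) + (s' - s) := by
    rcases le_or_gt (s' - 2*j*σ) 0 with h2 | h2
    · rw [max_eq_left h2]
      have := le_max_left (0:ℝ) (s - 2*j*σ); linarith
    · rw [max_eq_right h2.le]
      have := le_max_right (0:ℝ) (s - 2*j*σ); linarith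
  linarith

noncomputable def tau (π : ℝ → ℝ × ℝ) (σ : ℝ) (k : ℕ) : ℝ :=
  sInf {u : ℝ | u ∈ Set.Icc (0:ℝ) 1 ∧ 2*k*σ ≤ (π u).1 + (π u).2}

noncomputable def xg (π : ℝ → ℝ × ℝ) (σ : ℝ) (N : ℕ) (k : ℕ) : ℝ :=
  σ * ⌊(π (tau π σ (min k N))).1 / σ⌋

noncomputable def c01 (t : ℝ) : ℝ := max 0 (min t 1)

noncomputable def Sf (π : ℝ → ℝ × ℝ) (t : ℝ) : ℝ :=
  (π (c01 t)).1 + (π (c01 t)).2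

noncomputable def pit (π : ℝ → ℝ × ℝ) (σ : ℝ) (N : ℕ) : ℝ → ℝ × ℝ :=
  fun t => (XF (xg π σ N) N σ (Sf π t), Sf π t - XF (xg π σ N) N σ (Sf π t))

lemma c01_mem (t : ℝ) : c01 t ∈ Set.Icc (0:ℝ) 1 :=
  ⟨le_max_left _ _, max_le (by norm_num) (min_le_right _ _)⟩

lemma c01_of_mem {t : ℝ} (ht : t ∈ Set.Icc (0:ℝ) 1) : c01 t = t := by
  rw [c01, min_eq_left ht.2, max_eq_right ht.1]

lemma c01_mono : Monotone c01 := fun a b h => by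
  apply max_le_max le_rfl (min_le_min h le_rfl)

lemma c01_lip (a b : ℝ) : |c01 a - c01 b| ≤ |a - b| := by
  have h1 : |c01 a - c01 b| ≤ |min a 1 - min b 1| := by
    rw [c01, c01, max_comm 0 (min a 1), max_comm 0 (min b 1)]
    exact abs_max_sub_max_le_abs _ _ _
  have h2 : |min a 1 - min b 1| ≤ |a - b| := by
    have h := abs_min_sub_min_le_max a 1 b 1
    simpa [sup_eq_left.2 (abs_nonneg (a - b))] using h
  exact h1.trans h2

end GridAux

set_option maxHeartbeats 1000000 in
open GridAux in
/-- Grid-snapping lemma for the graph `G1`: every monotone Lipschitz path across the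
square `[0, Nσ]²` can be replaced by a monotone staircase path on the grid lines of
mesh size `σ` whose weighted L1 length, for every nonnegative weight that is
1-Lipschitz w.r.t. the L1 metric, exceeds the original one by at most `4Nσ²`. -/
theorem grid_staircase_approximation
    (N : ℕ) (hN : 0 < N) (σ : ℝ) (hσ : 0 < σ)
    (π : ℝ → ℝ × ℝ) (K : NNReal) (hπ : LipschitzWith K π)
    (hm1 : MonotoneOn (fun t => (π t).1) (Set.Icc 0 1))
    (hm2 : MonotoneOn (fun t => (π t).2) (Set.Icc 0 1))
    (hmaps : ∀ t ∈ Set.Icc (0:ℝ) 1,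
      π t ∈ Set.Icc ((0:ℝ), (0:ℝ)) ((N:ℝ) * σ, (N:ℝ) * σ))
    (hπ0 : π 0 = (0, 0)) (hπ1 : π 1 = ((N:ℝ) * σ, (N:ℝ) * σ)) :
    ∃ (πt : ℝ → ℝ × ℝ) (K' : NNReal), LipschitzWith K' πt ∧
      MonotoneOn (fun t => (πt t).1) (Set.Icc 0 1) ∧
      MonotoneOn (fun t => (πt t).2) (Set.Icc 0 1) ∧
      πt 0 = (0, 0) ∧ πt 1 = ((N:ℝ) * σ, (N:ℝ) * σ) ∧
      (∀ t ∈ Set.Icc (0:ℝ) 1,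
        πt t ∈ Set.Icc ((0:ℝ), (0:ℝ)) ((N:ℝ) * σ, (N:ℝ) * σ) ∧
        ((∃ k : ℤ, (πt t).1 = (k : ℝ) * σ) ∨ (∃ k : ℤ, (πt t).2 = (k : ℝ) * σ))) ∧
      ∀ w : ℝ × ℝ → ℝ, (∀ p, 0 ≤ w p) →
        (∀ p q : ℝ × ℝ, |w p - w q| ≤ |p.1 - q.1| + |p.2 - q.2|) →
        ∫ t in (0:ℝ)..1, w (πt t) * (|(deriv πt t).1| + |(deriv πt t).2|)
          ≤ (∫ t in (0:ℝ)..1, w (π t) * (|(deriv π t).1| + |(deriv π t).2|))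
            + 4 * (N:ℝ) * σ ^ 2 := by
  classical
  set x : ℝ → ℝ := fun t => (π t).1 with hxdef
  set y : ℝ → ℝ := fun t => (π t).2 with hydef
  set S : ℝ → ℝ := fun t => x t + y t with hSdef
  have hπc : Continuous π := hπ.continuous
  have hSc : Continuous S := by
    apply Continuous.add
    · exact (continuous_fst.comp hπc)
    · exact (continuous_snd.comp hπc)
  have hx0 : x 0 = 0 := by simp [hxdef, hπ0]
  have hy0 : y 0 = 0 := by simp [hydef, hπ0]
  have hx1 : x 1 = N*σ := by simp [hxdef, hπ1]
  have hy1 : y 1 = N*σ := by simp [hydef, hπ1]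
  have hS0 : S 0 = 0 := by simp [hSdef, hx0, hy0]
  have hS1 : S 1 = 2*N*σ := by rw [hSdef]; simp only [hx1, hy1]; ring
  have hSmono : MonotoneOn S (Set.Icc 0 1) := fun a ha b hb hab =>
    add_le_add (hm1 ha hb hab) (hm2 ha hb hab)
  have hxr : ∀ t ∈ Set.Icc (0:ℝ) 1, 0 ≤ x t ∧ x t ≤ N*σ ∧ 0 ≤ y t ∧ y t ≤ N*σ := by
    intro t ht
    obtain ⟨h1, h2⟩ := hmaps t ht
    exact ⟨h1.1, h2.1, h1.2, h2.2⟩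
  have hSr : ∀ t ∈ Set.Icc (0:ℝ) 1, 0 ≤ S t ∧ S t ≤ 2*N*σ := by
    intro t ht
    obtain ⟨a1, a2, a3, a4⟩ := hxr t ht
    constructor <;> [skip; skip] <;> simp only [hSdef] <;> linarith
  -- tau facts
  have htau : ∀ k : ℕ, k ≤ N → tau π σ k ∈ Set.Icc (0:ℝ) 1 ∧ S (tau π σ k) = 2*k*σ ∧
      ∀ t ∈ Set.Icc (0:ℝ) 1, 2*k*σ ≤ S t → tau π σ k ≤ t := by
    intro k hk
    have hAeq : {u : ℝ | u ∈ Set.Icc (0:ℝ) 1 ∧ 2*k*σ ≤ (π u).1 + (π u).2}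
        = {u : ℝ | u ∈ Set.Icc (0:ℝ) 1 ∧ 2*k*σ ≤ S u} := rfl
    set A := {u : ℝ | u ∈ Set.Icc (0:ℝ) 1 ∧ 2*k*σ ≤ S u} with hA
    have htaueq : tau π σ k = sInf A := by rw [tau, hAeq]
    have hA1 : (1:ℝ) ∈ A := by
      refine ⟨Set.right_mem_Icc.2 zero_le_one, ?_⟩
      rw [hS1]
      have : (k:ℝ) ≤ N := by exact_mod_cast hk
      nlinarith
    have hbdd : BddBelow A := ⟨0, fun u hu => hu.1.1⟩
    have hclosed : IsClosed A := by
      refine IsClosed.inter isClosed_Icc ?_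
      exact isClosed_le continuous_const hSc
    have hmem : tau π σ k ∈ A := htaueq ▸ hclosed.csInf_mem ⟨1, hA1⟩ hbdd
    have hle : ∀ t ∈ Set.Icc (0:ℝ) 1, 2*k*σ ≤ S t → tau π σ k ≤ t := by
      intro t ht h2
      rw [htaueq]
      exact csInf_le hbdd ⟨ht, h2⟩
    refine ⟨hmem.1, ?_, hle⟩
    have h0mem : (0:ℝ) ≤ tau π σ k := hmem.1.1
    have := intermediate_value_Icc h0mem (hSc.continuousOn)
    have hval : 2*k*σ ∈ Set.Icc (S 0) (S (tau π σ k)) := by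
      refine ⟨?_, hmem.2⟩
      rw [hS0]; positivity
    obtain ⟨u, hu, hSu⟩ := this hval
    have hu1 : u ∈ Set.Icc (0:ℝ) 1 := ⟨hu.1, hu.2.trans hmem.1.2⟩
    have h1 : tau π σ k ≤ u := hle u hu1 hSu.ge
    have h2 : u = tau π σ k := le_antisymm hu.2 h1
    rw [← h2, hSu]
  -- matching facts
  have hmatch1 : ∀ k, k ≤ N → ∀ t ∈ Set.Icc (0:ℝ) 1, 2*k*σ ≤ S t →
      x (tau π σ k) ≤ x t ∧ x t - x (tau π σ k) ≤ S t - 2*k*σ := by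
    intro k hk t ht h2
    obtain ⟨hτmem, hτval, hτmin⟩ := htau k hk
    have hτt : tau π σ k ≤ t := hτmin t ht h2
    have h1 : x (tau π σ k) ≤ x t := hm1 hτmem ht hτt
    have h3 : y (tau π σ k) ≤ y t := hm2 hτmem ht hτt
    have : S t - 2*k*σ = (x t - x (tau π σ k)) + (y t - y (tau π σ k)) := by
      rw [← hτval]; simp [hSdef]; ring
    constructor
    · exact h1
    · linarith
  have hmatch2 : ∀ k, k ≤ N → ∀ t ∈ Set.Icc (0:ℝ) 1, S t ≤ 2*k*σ →
      x t ≤ x (tau π σ k) ∧ x (tau π σ k) - x t ≤ 2*k*σ - S t := by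
    intro k hk t ht h2
    obtain ⟨hτmem, hτval, hτmin⟩ := htau k hk
    rcases le_or_gt t (tau π σ k) with hc | hc
    · have h1 : x t ≤ x (tau π σ k) := hm1 ht hτmem hc
      have h3 : y t ≤ y (tau π σ k) := hm2 ht hτmem hc
      have : 2*k*σ - S t = (x (tau π σ k) - x t) + (y (tau π σ k) - y t) := by
        rw [← hτval]; simp [hSdef]; ring
      exact ⟨h1, by linarith⟩
    · have h1 : x (tau π σ k) ≤ x t := hm1 hτmem ht hc.le
      have h3 : y (tau π σ k) ≤ y t := hm2 hτmem ht hc.le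
      have h4 : S (tau π σ k) ≤ S t := hSmono hτmem ht hc.le
      have h5 : S t = x t + y t := rfl
      have h6 : S (tau π σ k) = x (tau π σ k) + y (tau π σ k) := rfl
      rw [hτval] at h4 h6
      constructor <;> linarith
  -- xg facts
  set b : ℕ → ℝ := xg π σ N with hbdef
  have hbk : ∀ k, k ≤ N → b k = σ * ⌊x (tau π σ k) / σ⌋ := by
    intro k hk
    rw [hbdef, xg, min_eq_left hk]
  have hb_lb : ∀ k, k ≤ N → b k ≤ x (tau π σ k) ∧ x (tau π σ k) < b k + σ := by
    intro k hk
    rw [hbk k hk]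
    constructor
    · rw [mul_comm]
      exact (le_div_iff₀ hσ).1 (Int.floor_le _)
    · have := Int.lt_floor_add_one (x (tau π σ k) / σ)
      rw [div_lt_iff₀ hσ] at this
      linarith
  have hb_mono : ∀ j k, j ≤ k → k ≤ N → b j ≤ b k := by
    intro j k hjk hk
    have hj : j ≤ N := hjk.trans hk
    obtain ⟨hτmem, hτval, _⟩ := htau k hk
    have h2 : 2*(j:ℝ)*σ ≤ S (tau π σ k) := by
      rw [hτval]
      have : (j:ℝ) ≤ k := by exact_mod_cast hjk
      nlinarith
    have hxx : x (tau π σ j) ≤ x (tau π σ k) := (hmatch1 j hj _ hτmem h2).1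
    rw [hbk j hj, hbk k hk]
    have h3 : ⌊x (tau π σ j) / σ⌋ ≤ ⌊x (tau π σ k) / σ⌋ := Int.floor_le_floor (by gcongr)
    have h4 : ((⌊x (tau π σ j) / σ⌋:ℝ)) ≤ (⌊x (tau π σ k) / σ⌋:ℝ) := by exact_mod_cast h3
    nlinarith
  have hb_step : ∀ k, k < N → b (k+1) ≤ b k + 2*σ := by
    intro k hk
    have hk' : k ≤ N := hk.le
    have hk1 : k + 1 ≤ N := hk
    obtain ⟨hτmem, hτval, _⟩ := htau (k+1) hk1
    have h2 : 2*(k:ℝ)*σ ≤ S (tau π σ (k+1)) := by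
      rw [hτval]; push_cast; nlinarith
    have hdiff : x (tau π σ (k+1)) - x (tau π σ k) ≤ 2*σ := by
      have := (hmatch1 k hk' _ hτmem h2).2
      rw [hτval] at this
      push_cast at this ⊢
      linarith
    have h1 : x (tau π σ (k+1)) / σ ≤ x (tau π σ k) / σ + 2 := by
      rw [div_add' _ _ _ hσ.ne']
      gcongr
      linarith
    have h2' : ⌊x (tau π σ (k+1)) / σ⌋ ≤ ⌊x (tau π σ k) / σ⌋ + 2 := by
      have h5 := Int.floor_le_floor h1
      rwa [show ((2:ℝ)) = ((2:ℤ):ℝ) by norm_num, Int.floor_add_intCast] at h5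
    rw [hbk _ hk1, hbk _ hk']
    have h4 : ((⌊x (tau π σ (k+1)) / σ⌋:ℝ)) ≤ (⌊x (tau π σ k) / σ⌋:ℝ) + 2 := by exact_mod_cast h2'
    nlinarith
  have hb0 : b 0 = 0 := by
    obtain ⟨hτmem, hτval, _⟩ := htau 0 (Nat.zero_le N)
    have hr := hxr _ hτmem
    have hx0' : x (tau π σ 0) = 0 := by
      have : S (tau π σ 0) = 0 := by rw [hτval]; ring
      have h5 : S (tau π σ 0) = x (tau π σ 0) + y (tau π σ 0) := rfl
      linarith [hr.1, hr.2.2.1]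
    rw [hbk 0 (Nat.zero_le N), hx0']
    simp
  have hbN : b N = N*σ := by
    obtain ⟨hτmem, hτval, _⟩ := htau N le_rfl
    have hr := hxr _ hτmem
    have hxN' : x (tau π σ N) = N*σ := by
      have h5 : S (tau π σ N) = x (tau π σ N) + y (tau π σ N) := rfl
      rw [hτval] at h5
      linarith [hr.2.1, hr.2.2.2]
    have hq : (N:ℝ)*σ/σ = (N:ℝ) := by field_simp
    rw [hbk N le_rfl, hxN', hq, Int.floor_natCast]
    push_cast; ring
  have hb_nn : ∀ j, j ≤ N → 0 ≤ b j := fun j hj => hb0 ▸ hb_mono 0 j (Nat.zero_le j) hj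
  have hb_ge : ∀ j, j ≤ N → (N:ℝ)*σ ≤ b j + 2*((N:ℝ)-j)*σ := by
    intro j hj
    have key : ∀ m, j ≤ m → m ≤ N → b m ≤ b j + 2*((m:ℝ)-j)*σ := by
      intro m
      induction m with
      | zero => intro h1 _; interval_cases j; simp
      | succ n ih =>
        intro h1 h2
        rcases Nat.lt_or_ge j (n+1) with hc | hc
        · have hjn : j ≤ n := Nat.lt_succ_iff.1 hc
          have := ih hjn (Nat.le_of_succ_le h2)
          have hs := hb_step n (Nat.lt_of_succ_le h2)
          push_cast
          push_cast at this
          linarith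
        · have : j = n + 1 := le_antisymm h1 hc
          subst this
          simp
    have := key N hj le_rfl
    rw [hbN] at this
    linarith
  -- X facts
  set X : ℝ → ℝ := XF b N σ with hXdef
  have hX0 : X 0 = 0 := by
    apply le_antisymm
    · have h := XF_le (b:=b) (σ:=σ) (Nat.zero_le N) 0
      simpa [hb0] using h
    · apply le_XF
      intro j hj
      have h1 := hb_nn j hj
      have h2 := le_max_left (0:ℝ) (0 - 2*j*σ)
      linarith
  have hXN : X (2*N*σ) = N*σ := by
    apply le_antisymm
    · have h := XF_le (b:=b) (σ:=σ) (le_refl N) (2*N*σ)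
      simpa [hbN] using h
    · apply le_XF
      intro j hj
      have h1 := hb_ge j hj
      have hjN : (j:ℝ) ≤ N := by exact_mod_cast hj
      have h2 : max 0 (2*N*σ - 2*j*σ) = 2*N*σ - 2*j*σ := max_eq_right (by nlinarith)
      rw [h2]; linarith
  have hXmono : Monotone X := XF_mono
  have hXlip : ∀ s s' : ℝ, s ≤ s' → X s' ≤ X s + (s' - s) := fun s s' h => XF_lip h
  have hXnn : ∀ s, 0 ≤ s → 0 ≤ X s := fun s hs => hX0 ▸ hXmono hs
  have hXle : ∀ s, s ≤ 2*N*σ → X s ≤ N*σ := fun s hs => hXN ▸ hXmono hs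
  have hgrid : ∀ s : ℝ, (∃ k:ℤ, X s = k*σ) ∨ (∃ k:ℤ, s - X s = k*σ) := by
    intro s
    obtain ⟨j, hj, hXs⟩ := XF_exists (b:=b) (N:=N) (σ:=σ) s
    rcases le_or_gt (s - 2*j*σ) 0 with hc | hc
    · left
      refine ⟨⌊x (tau π σ j) / σ⌋, ?_⟩
      rw [hXdef, hXs, max_eq_left hc, hbk j hj]; ring
    · right
      refine ⟨2*j - ⌊x (tau π σ j) / σ⌋, ?_⟩
      rw [hXdef, hXs, max_eq_right hc.le, hbk j hj]; push_cast; ring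
  -- error bound
  have herr : ∀ t ∈ Set.Icc (0:ℝ) 1, |X (S t) - x t| ≤ σ := by
    intro t ht
    obtain ⟨hS_nn, hS_le⟩ := hSr t ht
    rw [abs_le]
    constructor
    · have hlow : x t - σ ≤ X (S t) := by
        apply le_XF
        intro j hj
        rcases le_or_gt (S t) (2*j*σ) with hc | hc
        · have h1 := (hmatch2 j hj t ht hc).1
          have h2 := (hb_lb j hj).2
          have h3 := le_max_left (0:ℝ) (S t - 2*j*σ)
          linarith
        · have h1 := (hmatch1 j hj t ht hc.le).2
          have h2 := (hb_lb j hj).2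
          rw [max_eq_right (by linarith)]
          linarith
      linarith
    · rcases eq_or_lt_of_le hS_le with hEq | hLt
      · have hxt : x t = N*σ := by
          have h5 : S t = x t + y t := rfl
          obtain ⟨a1,a2,a3,a4⟩ := hxr t ht
          linarith [hEq ▸ h5]
        rw [hEq, hXN, hxt]
        simp [hσ.le]
      · set k : ℕ := ⌊S t / (2*σ)⌋₊ with hkdef
        have h2σ : (0:ℝ) < 2*σ := by linarith
        have hdiv_nn : 0 ≤ S t / (2*σ) := div_nonneg hS_nn h2σ.le
        have hk2 : 2*(k:ℝ)*σ ≤ S t := by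
          have h6 : (k:ℝ) ≤ S t / (2*σ) := Nat.floor_le hdiv_nn
          rw [le_div_iff₀ h2σ] at h6
          linarith
        have hk3 : S t < 2*((k:ℝ)+1)*σ := by
          have h6 : S t / (2*σ) < (k:ℝ) + 1 := Nat.lt_floor_add_one _
          rw [div_lt_iff₀ h2σ] at h6
          linarith
        have hkN : k + 1 ≤ N := by
          have : S t / (2*σ) < N := by
            rw [div_lt_iff₀ h2σ]
            linarith
          have hkn : k < N := Nat.floor_lt hdiv_nn |>.2 (by linarith [this])
          exact hkn
        have hkN' : k ≤ N := Nat.le_of_succ_le hkN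
        rcases le_or_gt (S t - 2*k*σ) σ with hDle | hDgt
        · have h1 := XF_le (b:=b) (σ:=σ) hkN' (S t)
          have h2 := (hb_lb k hkN').1
          have h3 := (hmatch1 k hkN' t ht hk2).1
          rw [max_eq_right (by linarith)] at h1
          linarith
        · have h1 := XF_le (b:=b) (σ:=σ) hkN (S t)
          have hcast : 2*((k+1:ℕ):ℝ)*σ = 2*((k:ℝ)+1)*σ := by push_cast; ring
          have h2 := (hb_lb (k+1) hkN).1
          have h3 := (hmatch2 (k+1) hkN t ht (by rw [hcast]; linarith)).2
          rw [max_eq_left (by rw [hcast]; linarith)] at h1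
          rw [hcast] at h3
          linarith
  -- path basics
  have hKnn : (0:ℝ) ≤ (K:ℝ) := K.coe_nonneg
  have hSf_eq : ∀ t ∈ Set.Icc (0:ℝ) 1, Sf π t = S t := by
    intro t ht
    rw [Sf, c01_of_mem ht]
  have hSf_mem : ∀ t : ℝ, 0 ≤ Sf π t ∧ Sf π t ≤ 2*N*σ := fun t => hSr (c01 t) (c01_mem t)
  have hSf_mono : Monotone (Sf π) := fun a c hac =>
    hSmono (c01_mem a) (c01_mem c) (c01_mono hac)
  have hu_eq : ∀ t, (pit π σ N t).1 = X (Sf π t) := fun t => rfl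
  have hv_eq : ∀ t, (pit π σ N t).2 = Sf π t - X (Sf π t) := fun t => rfl
  have hcomp : ∀ a c : ℝ, |x (c01 a) - x (c01 c)| ≤ K*|a-c| ∧ |y (c01 a) - y (c01 c)| ≤ K*|a-c| := by
    intro a c
    have hπd := hπ.dist_le_mul (c01 a) (c01 c)
    rw [Real.dist_eq] at hπd
    have hca := c01_lip a c
    have h1 : dist (x (c01 a)) (x (c01 c)) ≤ dist (π (c01 a)) (π (c01 c)) := by
      rw [Prod.dist_eq]; exact le_max_left _ _
    have h2 : dist (y (c01 a)) (y (c01 c)) ≤ dist (π (c01 a)) (π (c01 c)) := by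
      rw [Prod.dist_eq]; exact le_max_right _ _
    rw [Real.dist_eq] at h1 h2
    have hm : (K:ℝ) * |c01 a - c01 c| ≤ K * |a - c| :=
      mul_le_mul_of_nonneg_left hca hKnn
    exact ⟨h1.trans (hπd.trans hm), h2.trans (hπd.trans hm)⟩
  have hSf_abs : ∀ a c : ℝ, |Sf π a - Sf π c| ≤ 2*K*|a-c| := by
    intro a c
    obtain ⟨h1, h2⟩ := hcomp a c
    have heq : Sf π a - Sf π c = (x (c01 a) - x (c01 c)) + (y (c01 a) - y (c01 c)) := by
      rw [Sf, Sf]; ring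
    rw [heq]
    calc |(x (c01 a) - x (c01 c)) + (y (c01 a) - y (c01 c))|
        ≤ |x (c01 a) - x (c01 c)| + |y (c01 a) - y (c01 c)| := abs_add_le _ _
      _ ≤ 2*K*|a-c| := by linarith
  have hXabs : ∀ s s' : ℝ, |X s - X s'| ≤ |s - s'| := by
    have key : ∀ s s' : ℝ, s ≤ s' → |X s - X s'| ≤ |s - s'| := by
      intro s s' h
      have h1 := hXmono h
      have h2 := hXlip s s' h
      rw [abs_sub_comm, abs_of_nonneg (sub_nonneg.2 h1), abs_sub_comm,
        abs_of_nonneg (sub_nonneg.2 h)]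
      linarith
    intro s s'
    rcases le_total s s' with h | h
    · exact key s s' h
    · rw [abs_sub_comm, abs_sub_comm s s']; exact key s' s h
  have hVabs : ∀ s s' : ℝ, |(s - X s) - (s' - X s')| ≤ |s - s'| := by
    have key : ∀ s s' : ℝ, s ≤ s' → |(s - X s) - (s' - X s')| ≤ |s - s'| := by
      intro s s' h
      have h1 := hXmono h
      have h2 := hXlip s s' h
      rw [abs_sub_comm, abs_of_nonneg (by linarith), abs_sub_comm,
        abs_of_nonneg (sub_nonneg.2 h)]
      linarith
    intro s s'
    rcases le_total s s' with h | h
    · exact key s s' h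
    · rw [abs_sub_comm, abs_sub_comm s s']; exact key s' s h
  have hpit_lip : LipschitzWith (2*K) (pit π σ N) := by
    apply LipschitzWith.of_dist_le_mul
    intro a c
    rw [Prod.dist_eq]
    have hcast : ((2*K : NNReal):ℝ) = 2*(K:ℝ) := by push_cast; ring
    rw [hcast, Real.dist_eq]
    apply max_le
    · rw [hu_eq, hu_eq, Real.dist_eq]
      have h1 := hXabs (Sf π a) (Sf π c)
      have h2 := hSf_abs a c
      linarith
    · rw [hv_eq, hv_eq, Real.dist_eq]
      exact (hVabs _ _).trans (hSf_abs a c)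
  have hu_mono : Monotone (fun t => (pit π σ N t).1) := by
    intro a c h
    simp only [hu_eq]
    exact hXmono (hSf_mono h)
  have hv_mono : Monotone (fun t => (pit π σ N t).2) := by
    intro a c h
    have h1 := hXlip (Sf π a) (Sf π c) (hSf_mono h)
    simp only [hv_eq]
    linarith
  have hSf0 : Sf π 0 = 0 := by rw [hSf_eq 0 ⟨le_rfl, zero_le_one⟩]; exact hS0
  have hSf1 : Sf π 1 = 2*N*σ := by rw [hSf_eq 1 ⟨zero_le_one, le_rfl⟩]; exact hS1
  have hpit0 : pit π σ N 0 = (0,0) := by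
    have hp : pit π σ N 0 = (X (Sf π 0), Sf π 0 - X (Sf π 0)) := rfl
    rw [hp, hSf0, hX0]
    norm_num
  have hpit1 : pit π σ N 1 = ((N:ℝ)*σ, (N:ℝ)*σ) := by
    have hp : pit π σ N 1 = (X (Sf π 1), Sf π 1 - X (Sf π 1)) := rfl
    rw [hp, hSf1, hXN]
    norm_num
    ring
  have hval : ∀ t : ℝ, 0 ≤ X (Sf π t) ∧ X (Sf π t) ≤ N*σ ∧
      0 ≤ Sf π t - X (Sf π t) ∧ Sf π t - X (Sf π t) ≤ N*σ := by
    intro t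
    obtain ⟨ha, hb⟩ := hSf_mem t
    refine ⟨hXnn _ ha, hXle _ hb, ?_, ?_⟩
    · have := hXlip 0 (Sf π t) ha
      rw [hX0] at this
      linarith
    · have := hXlip (Sf π t) (2*N*σ) hb
      rw [hXN] at this
      linarith
  refine ⟨pit π σ N, 2*K, hpit_lip, hu_mono.monotoneOn _, hv_mono.monotoneOn _,
    hpit0, hpit1, ?_, ?_⟩
  · intro t ht
    obtain ⟨ha, hb, hc, hd⟩ := hval t
    constructor
    · exact ⟨⟨ha, hc⟩, ⟨hb, hd⟩⟩
    · rcases hgrid (Sf π t) with ⟨k, hk⟩ | ⟨k, hk⟩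
      · exact Or.inl ⟨k, (hu_eq t).trans hk⟩
      · exact Or.inr ⟨k, (hv_eq t).trans hk⟩
  · intro w hw0 hwlip
    -- continuity of w
    have hwc : Continuous w := by
      have : LipschitzWith 2 w := by
        apply LipschitzWith.of_dist_le_mul
        intro p q
        rw [Real.dist_eq, Prod.dist_eq, Real.dist_eq, Real.dist_eq]
        have h0 := hwlip p q
        have h1 := le_max_left |p.1 - q.1| |p.2 - q.2|
        have h2 := le_max_right |p.1 - q.1| |p.2 - q.2|
        push_cast
        linarith
      exact this.continuous
    -- monotone coordinate functions and their rnDerivs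
    have hxcm : Monotone (fun t => x (c01 t)) := fun a c h =>
      hm1 (c01_mem a) (c01_mem c) (c01_mono h)
    have hycm : Monotone (fun t => y (c01 t)) := fun a c h =>
      hm2 (c01_mem a) (c01_mem c) (c01_mono h)
    set ru : ℝ → ℝ := fun t =>
      (Measure.rnDeriv hu_mono.stieltjesFunction.measure volume t).toReal with hrudef
    set rv : ℝ → ℝ := fun t =>
      (Measure.rnDeriv hv_mono.stieltjesFunction.measure volume t).toReal with hrvdef
    set rx : ℝ → ℝ := fun t =>
      (Measure.rnDeriv hxcm.stieltjesFunction.measure volume t).toReal with hrxdef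
    set ry : ℝ → ℝ := fun t =>
      (Measure.rnDeriv hycm.stieltjesFunction.measure volume t).toReal with hrydef
    have hud : ∀ᵐ t, HasDerivAt (fun t => (pit π σ N t).1) (ru t) t := hu_mono.ae_hasDerivAt
    have hvd : ∀ᵐ t, HasDerivAt (fun t => (pit π σ N t).2) (rv t) t := hv_mono.ae_hasDerivAt
    have hxd : ∀ᵐ t, HasDerivAt (fun t => x (c01 t)) (rx t) t := hxcm.ae_hasDerivAt
    have hyd : ∀ᵐ t, HasDerivAt (fun t => y (c01 t)) (ry t) t := hycm.ae_hasDerivAt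
    have hπd : ∀ᵐ t, DifferentiableAt ℝ π t := hπ.ae_differentiableAt
    have hru_nn : ∀ t, 0 ≤ ru t := fun t => ENNReal.toReal_nonneg
    have hrv_nn : ∀ t, 0 ≤ rv t := fun t => ENNReal.toReal_nonneg
    have hrx_nn : ∀ t, 0 ≤ rx t := fun t => ENNReal.toReal_nonneg
    have hry_nn : ∀ t, 0 ≤ ry t := fun t => ENNReal.toReal_nonneg
    -- deriv of pit a.e.
    have hderiv_pit : ∀ᵐ t, deriv (pit π σ N) t = (ru t, rv t) := by
      filter_upwards [hud, hvd] with t h1 h2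
      have h3 : HasDerivAt (fun s => ((pit π σ N s).1, (pit π σ N s).2)) (ru t, rv t) t :=
        h1.prodMk h2
      have h4 : (fun s => ((pit π σ N s).1, (pit π σ N s).2)) = pit π σ N := rfl
      rw [h4] at h3
      exact h3.deriv
    -- sum identity a.e.
    have hsum : ∀ᵐ t, ru t + rv t = rx t + ry t := by
      filter_upwards [hud, hvd, hxd, hyd] with t h1 h2 h3 h4
      have h5 : HasDerivAt (Sf π) (ru t + rv t) t := by
        have h := h1.add h2
        have heq : (fun s => (pit π σ N s).1 + (pit π σ N s).2) = Sf π := by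
          funext s
          rw [hu_eq, hv_eq]
          ring
        rw [← heq]; exact h
      have h6 : HasDerivAt (Sf π) (rx t + ry t) t := h3.add h4
      exact h5.unique h6
    -- relation between deriv π and rx, ry on the interior
    have hinterior : ∀ᵐ t, t ∈ Set.Ioo (0:ℝ) 1 →
        (deriv π t).1 = rx t ∧ (deriv π t).2 = ry t := by
      filter_upwards [hπd, hxd, hyd] with t hdπ h3 h4 hmem
      have hnb : Set.Ioo (0:ℝ) 1 ∈ nhds t := isOpen_Ioo.mem_nhds hmem
      have hdd := hdπ.hasDerivAt
      have hdx : HasDerivAt (fun s => (π s).1) (deriv π t).1 t :=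
        (ContinuousLinearMap.fst ℝ ℝ ℝ).hasFDerivAt.comp_hasDerivAt t hdd
      have hdy : HasDerivAt (fun s => (π s).2) (deriv π t).2 t :=
        (ContinuousLinearMap.snd ℝ ℝ ℝ).hasFDerivAt.comp_hasDerivAt t hdd
      have hev : (fun s => x (c01 s)) =ᶠ[nhds t] (fun s => (π s).1) := by
        filter_upwards [hnb] with s hs
        rw [c01_of_mem ⟨hs.1.le, hs.2.le⟩]
      have hev2 : (fun s => y (c01 s)) =ᶠ[nhds t] (fun s => (π s).2) := by
        filter_upwards [hnb] with s hs
        rw [c01_of_mem ⟨hs.1.le, hs.2.le⟩]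
      have hdx' : HasDerivAt (fun s => x (c01 s)) (deriv π t).1 t := by
        apply HasDerivAt.congr_of_eventuallyEq hdx hev
      have hdy' : HasDerivAt (fun s => y (c01 s)) (deriv π t).2 t := by
        apply HasDerivAt.congr_of_eventuallyEq hdy hev2
      exact ⟨hdx'.unique h3, hdy'.unique h4⟩
    -- w comparison on [0,1]
    have hwcomp : ∀ t ∈ Set.Icc (0:ℝ) 1, w (pit π σ N t) ≤ w (π t) + 2*σ := by
      intro t ht
      have h1 := hwlip (pit π σ N t) (π t)
      have h2 : (pit π σ N t).1 - (π t).1 = X (S t) - x t := by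
        rw [hu_eq, hSf_eq t ht]
      have h3 : (pit π σ N t).2 - (π t).2 = -(X (S t) - x t) := by
        rw [hv_eq, hSf_eq t ht]
        have : S t = x t + y t := rfl
        rw [this]; ring
      rw [h2, h3, abs_neg] at h1
      have h4 := herr t ht
      have h6 := le_abs_self (w (pit π σ N t) - w (π t))
      linarith
    -- a.e. membership in the open interval
    have hae_Ioo : ∀ᵐ t ∂(volume.restrict (Set.Ioc (0:ℝ) 1)), t ∈ Set.Ioo (0:ℝ) 1 := by
      have h1 : ∀ᵐ t ∂(volume.restrict (Set.Ioc (0:ℝ) 1)), t ∈ Set.Ioc (0:ℝ) 1 :=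
        ae_restrict_mem measurableSet_Ioc
      have h2 : ∀ᵐ (t:ℝ), t ≠ (1:ℝ) := by
        rw [ae_iff]
        have : {a : ℝ | ¬ a ≠ 1} = {(1:ℝ)} := by ext a; simp
        rw [this]
        exact Real.volume_singleton
      filter_upwards [h1, ae_restrict_of_ae h2] with t ht hne
      exact ⟨ht.1, lt_of_le_of_ne ht.2 hne⟩
    -- integrability of the rnDeriv densities
    have hIntOn : ∀ (f : ℝ → ℝ) (hf : Monotone f),
        IntegrableOn (fun t => (Measure.rnDeriv hf.stieltjesFunction.measure volume t).toReal)
          (Set.Ioc (0:ℝ) 1) volume := by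
      intro f hf
      apply integrable_toReal_of_lintegral_ne_top
      · exact (Measure.measurable_rnDeriv _ _).aemeasurable
      · have hfin : hf.stieltjesFunction.measure (Set.Ioc (0:ℝ) 1) ≠ ⊤ := by
          rw [StieltjesFunction.measure_Ioc]
          exact ENNReal.ofReal_ne_top
        exact (Measure.lintegral_rnDeriv_lt_top_of_measure_ne_top volume hfin).ne
    -- integral value bound
    have hIntVal : ∀ (f : ℝ → ℝ) (hf : Monotone f),
        (∫ t in Set.Ioc (0:ℝ) 1,
          (Measure.rnDeriv hf.stieltjesFunction.measure volume t).toReal) ≤ f 2 - f 0 := by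
      intro f hf
      have hfin : hf.stieltjesFunction.measure (Set.Ioc (0:ℝ) 1) ≠ ⊤ := by
        rw [StieltjesFunction.measure_Ioc]
        exact ENNReal.ofReal_ne_top
      have h1 : hf.stieltjesFunction 1 ≤ f 2 := by
        rw [hf.stieltjesFunction_eq]
        exact hf.rightLim_le one_lt_two
      have h2 : f 0 ≤ hf.stieltjesFunction 0 := by
        rw [hf.stieltjesFunction_eq]
        exact hf.le_rightLim le_rfl
      have h0 : hf.stieltjesFunction 0 ≤ hf.stieltjesFunction 1 :=
        hf.stieltjesFunction.mono (by norm_num)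
      calc (∫ t in Set.Ioc (0:ℝ) 1,
            (Measure.rnDeriv hf.stieltjesFunction.measure volume t).toReal)
          ≤ (hf.stieltjesFunction.measure (Set.Ioc (0:ℝ) 1)).toReal :=
            Measure.setIntegral_toReal_rnDeriv_le hfin
        _ ≤ f 2 - f 0 := by
            rw [StieltjesFunction.measure_Ioc]
            rcases le_total (hf.stieltjesFunction 1 - hf.stieltjesFunction 0) 0 with hc | hc
            · rw [ENNReal.ofReal_of_nonpos hc]
              simp only [ENNReal.toReal_zero]
              linarith
            · rw [ENNReal.toReal_ofReal hc]
              linarith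
    have hc012 : c01 2 = 1 := by rw [c01]; norm_num
    have hc010 : c01 0 = 0 := by rw [c01]; norm_num
    have hIx : (∫ t in Set.Ioc (0:ℝ) 1, rx t) ≤ N*σ := by
      have h := hIntVal _ hxcm
      simp only [hc012, hc010] at h
      rw [hx1, hx0] at h
      simpa using h
    have hIy : (∫ t in Set.Ioc (0:ℝ) 1, ry t) ≤ N*σ := by
      have h := hIntVal _ hycm
      simp only [hc012, hc010] at h
      rw [hy1, hy0] at h
      simpa using h
    have hIntxy : IntegrableOn (fun t => rx t + ry t) (Set.Ioc (0:ℝ) 1) volume :=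
      (hIntOn _ hxcm).add (hIntOn _ hycm)
    have hIntuv : IntegrableOn (fun t => ru t + rv t) (Set.Ioc (0:ℝ) 1) volume :=
      (hIntOn _ hu_mono).add (hIntOn _ hv_mono)
    -- boundedness of the weights
    have hwpit_bdd : ∀ t:ℝ, ‖w (pit π σ N t)‖ ≤ w (0,0) + 2*(N*σ) := by
      intro t
      obtain ⟨ha, hb, hc, hd⟩ := hval t
      have h1 := hwlip (pit π σ N t) (0,0)
      have h2 := le_abs_self (w (pit π σ N t) - w (0,0))
      have h3 : |(pit π σ N t).1 - ((0,0):ℝ×ℝ).1| ≤ N*σ := by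
        rw [hu_eq]
        simp only
        rw [sub_zero, abs_of_nonneg ha]
        exact hb
      have h4 : |(pit π σ N t).2 - ((0,0):ℝ×ℝ).2| ≤ N*σ := by
        rw [hv_eq]
        simp only
        rw [sub_zero, abs_of_nonneg hc]
        exact hd
      rw [Real.norm_eq_abs, abs_of_nonneg (hw0 _)]
      linarith
    have hwπc_bdd : ∀ t:ℝ, ‖w (π (c01 t))‖ ≤ w (0,0) + 2*(N*σ) := by
      intro t
      obtain ⟨hl, hr⟩ := hmaps (c01 t) (c01_mem t)
      have h1 := hwlip (π (c01 t)) (0,0)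
      have h2 := le_abs_self (w (π (c01 t)) - w (0,0))
      have h3 : |(π (c01 t)).1 - ((0,0):ℝ×ℝ).1| ≤ N*σ := by
        simp only
        rw [sub_zero, abs_of_nonneg hl.1]
        exact hr.1
      have h4 : |(π (c01 t)).2 - ((0,0):ℝ×ℝ).2| ≤ N*σ := by
        simp only
        rw [sub_zero, abs_of_nonneg hl.2]
        exact hr.2
      rw [Real.norm_eq_abs, abs_of_nonneg (hw0 _)]
      linarith
    have hc01c : Continuous c01 := continuous_const.max (continuous_id.min continuous_const)
    have hwπc_meas : AEStronglyMeasurable (fun t => w (π (c01 t)))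
        (volume.restrict (Set.Ioc (0:ℝ) 1)) :=
      (hwc.comp (hπc.comp hc01c)).aestronglyMeasurable
    have hwpit_meas : AEStronglyMeasurable (fun t => w (pit π σ N t))
        (volume.restrict (Set.Ioc (0:ℝ) 1)) :=
      (hwc.comp hpit_lip.continuous).aestronglyMeasurable
    -- integrability of all four integrands
    have hF2int : IntegrableOn (fun t => (w (π (c01 t)) + 2*σ) * (rx t + ry t))
        (Set.Ioc (0:ℝ) 1) volume := by
      apply Integrable.bdd_mul (c := w (0,0) + 2*(N*σ) + 2*σ) hIntxy (hwπc_meas.add aestronglyMeasurable_const)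
      refine Filter.Eventually.of_forall (fun t => ?_)
      have h1 := hwπc_bdd t
      rw [Real.norm_eq_abs] at h1
      have h2 := abs_add_le (w (π (c01 t))) (2*σ)
      have h3 : |2*σ| = 2*σ := abs_of_nonneg (by linarith)
      show ‖w (π (c01 t)) + 2*σ‖ ≤ w (0,0) + 2*((N:ℝ)*σ) + 2*σ
      rw [Real.norm_eq_abs]
      linarith
    have hG2int : IntegrableOn (fun t => w (π (c01 t)) * (rx t + ry t))
        (Set.Ioc (0:ℝ) 1) volume :=
      Integrable.bdd_mul hIntxy hwπc_meas (Filter.Eventually.of_forall hwπc_bdd)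
    have hHint : IntegrableOn (fun t => (2*σ) * (rx t + ry t)) (Set.Ioc (0:ℝ) 1) volume :=
      hIntxy.const_mul _
    -- a.e. rewriting of the integrands
    have hFaeq : (fun t => w (pit π σ N t) * (|(deriv (pit π σ N) t).1| + |(deriv (pit π σ N) t).2|))
        =ᵐ[volume.restrict (Set.Ioc (0:ℝ) 1)] (fun t => w (pit π σ N t) * (ru t + rv t)) := by
      refine ae_restrict_of_ae ?_
      filter_upwards [hderiv_pit] with t h
      rw [h]
      simp only
      rw [abs_of_nonneg (hru_nn t), abs_of_nonneg (hrv_nn t)]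
    have hFint : IntegrableOn (fun t => w (pit π σ N t) *
        (|(deriv (pit π σ N) t).1| + |(deriv (pit π σ N) t).2|)) (Set.Ioc (0:ℝ) 1) volume :=
      (Integrable.bdd_mul hIntuv hwpit_meas (Filter.Eventually.of_forall hwpit_bdd)).congr hFaeq.symm
    have hGaeq : (fun t => w (π t) * (|(deriv π t).1| + |(deriv π t).2|))
        =ᵐ[volume.restrict (Set.Ioc (0:ℝ) 1)] (fun t => w (π (c01 t)) * (rx t + ry t)) := by
      filter_upwards [ae_restrict_of_ae hinterior, hae_Ioo] with t h hIoo'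
      obtain ⟨h1, h2⟩ := h hIoo'
      rw [c01_of_mem ⟨hIoo'.1.le, hIoo'.2.le⟩, ← h1, ← h2,
        abs_of_nonneg (h1 ▸ hrx_nn t), abs_of_nonneg (h2 ▸ hry_nn t)]
    have hGint : IntegrableOn (fun t => w (π t) * (|(deriv π t).1| + |(deriv π t).2|))
        (Set.Ioc (0:ℝ) 1) volume := hG2int.congr hGaeq.symm
    -- a.e. comparison
    have hle : (fun t => w (pit π σ N t) * (|(deriv (pit π σ N) t).1| + |(deriv (pit π σ N) t).2|))
        ≤ᵐ[volume.restrict (Set.Ioc (0:ℝ) 1)]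
        (fun t => (w (π (c01 t)) + 2*σ) * (rx t + ry t)) := by
      filter_upwards [hFaeq, ae_restrict_of_ae hsum, hae_Ioo] with t h1 h2 hIoo'
      rw [h1, h2, c01_of_mem ⟨hIoo'.1.le, hIoo'.2.le⟩]
      exact mul_le_mul_of_nonneg_right (hwcomp t ⟨hIoo'.1.le, hIoo'.2.le⟩)
        (add_nonneg (hrx_nn t) (hry_nn t))
    -- assembling
    rw [intervalIntegral.integral_of_le zero_le_one, intervalIntegral.integral_of_le zero_le_one]
    have step1 := integral_mono_ae hFint hF2int hle
    have step2 : (∫ t in Set.Ioc (0:ℝ) 1, (w (π (c01 t)) + 2*σ) * (rx t + ry t))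
        = (∫ t in Set.Ioc (0:ℝ) 1, w (π (c01 t)) * (rx t + ry t))
          + ∫ t in Set.Ioc (0:ℝ) 1, (2*σ) * (rx t + ry t) := by
      rw [← integral_add hG2int hHint]
      exact integral_congr_ae (Filter.Eventually.of_forall fun t => by ring)
    have step3 : (∫ t in Set.Ioc (0:ℝ) 1, (2*σ) * (rx t + ry t)) ≤ 4*(N:ℝ)*σ^2 := by
      rw [integral_const_mul]
      have hsplit := integral_add (hIntOn _ hxcm) (hIntOn _ hycm)
      rw [hsplit]
      nlinarith [hIx, hIy, hσ.le]
    have step4 : (∫ t in Set.Ioc (0:ℝ) 1, w (π (c01 t)) * (rx t + ry t))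
        = ∫ t in Set.Ioc (0:ℝ) 1, w (π t) * (|(deriv π t).1| + |(deriv π t).2|) :=
      (integral_congr_ae hGaeq).symm
    linarith
end

section
/- Let a1, a2, b1, b2 ∈ ℝ², let δ ≥ 0 and D > 0 with 2δ < D, and suppose ‖a1 − b1‖ ≤ δ, ‖a2 − b2‖ ≤ δ, and ‖a2 − a1‖ ≥ D. Then the (undirected) angle θ between the vectors a2 − a1 and b2 − b1 satisfies sin θ ≤ 2δ / D. -/
/-- If the endpoints of the segment `a1a2` are matched to the endpoints of the segment
`b1b2` by leashes of length at most `δ`, and `‖a2 − a1‖ ≥ D > 2δ`, then the sine of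
the angle between the two segment directions is at most `2δ/D`. -/
theorem sin_angle_le_of_short_leashes
    (a1 a2 b1 b2 : EuclideanSpace ℝ (Fin 2)) (δ D : ℝ)
    (hδ : 0 ≤ δ) (hD : 0 < D) (hδD : 2 * δ < D)
    (h1 : ‖a1 - b1‖ ≤ δ) (h2 : ‖a2 - b2‖ ≤ δ) (h3 : D ≤ ‖a2 - a1‖) :
    Real.sin (InnerProductGeometry.angle (a2 - a1) (b2 - b1)) ≤ 2 * δ / D := by
  set u := a2 - a1 with hu
  set v := b2 - b1 with hv
  have huv : ‖u - v‖ ≤ 2 * δ := by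
    have : u - v = (a2 - b2) - (a1 - b1) := by simp [hu, hv]; abel
    rw [this]
    calc ‖(a2 - b2) - (a1 - b1)‖ ≤ ‖a2 - b2‖ + ‖a1 - b1‖ := norm_sub_le _ _
      _ ≤ 2 * δ := by linarith
  have hup : 0 < ‖u‖ := lt_of_lt_of_le hD h3
  have hvp : 0 < ‖v‖ := by
    have h4 := norm_sub_norm_le u v
    linarith
  have key : Real.sin (InnerProductGeometry.angle u v) * (‖u‖ * ‖v‖) =
      Real.sqrt ((inner ℝ (u) (u) : ℝ) * (inner ℝ (v) (v) : ℝ) - (inner ℝ (u) (v) : ℝ) * (inner ℝ (u) (v) : ℝ)) :=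
    InnerProductGeometry.sin_angle_mul_norm_mul_norm u v
  -- bound the discriminant
  have hdisc : (inner ℝ (u) (u) : ℝ) * (inner ℝ (v) (v) : ℝ) - (inner ℝ (u) (v) : ℝ) * (inner ℝ (u) (v) : ℝ) ≤ (inner ℝ (v) (v) : ℝ) * (2 * δ)^2 := by
    have hexp : (inner ℝ (u - v) (u - v) : ℝ) = (inner ℝ (u) (u) : ℝ) - 2 * (inner ℝ (u) (v) : ℝ) + (inner ℝ (v) (v) : ℝ) := by
      rw [inner_sub_sub_self]; rw [real_inner_comm v u]; ring
    have hle : (inner ℝ (u - v) (u - v) : ℝ) ≤ (2 * δ)^2 := by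
      rw [real_inner_self_eq_norm_sq]
      have h2δ : 0 ≤ 2 * δ := by linarith
      exact pow_le_pow_left₀ (norm_nonneg _) huv 2
    have hsq : 0 ≤ ((inner ℝ (v) (v) : ℝ) - (inner ℝ (u) (v) : ℝ))^2 := sq_nonneg _
    have hvnn : 0 ≤ (inner ℝ (v) (v) : ℝ) := real_inner_self_nonneg
    nlinarith [mul_le_mul_of_nonneg_left hle hvnn]
  have hsqrt : Real.sqrt ((inner ℝ (u) (u) : ℝ) * (inner ℝ (v) (v) : ℝ) - (inner ℝ (u) (v) : ℝ) * (inner ℝ (u) (v) : ℝ)) ≤ ‖v‖ * (2 * δ) := by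
    have : (inner ℝ (v) (v) : ℝ) * (2 * δ)^2 = (‖v‖ * (2 * δ))^2 := by
      rw [real_inner_self_eq_norm_sq]; ring
    calc Real.sqrt ((inner ℝ (u) (u) : ℝ) * (inner ℝ (v) (v) : ℝ) - (inner ℝ (u) (v) : ℝ) * (inner ℝ (u) (v) : ℝ))
        ≤ Real.sqrt ((‖v‖ * (2 * δ))^2) := Real.sqrt_le_sqrt (by rw [← this]; exact hdisc)
      _ = ‖v‖ * (2 * δ) := Real.sqrt_sq (by positivity)
  have hsin : Real.sin (InnerProductGeometry.angle u v) ≤ 2 * δ / ‖u‖ := by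
    rw [le_div_iff₀ hup]
    have hk := key.le.trans hsqrt
    nlinarith [hk, hvp]
  calc Real.sin (InnerProductGeometry.angle u v) ≤ 2 * δ / ‖u‖ := hsin
    _ ≤ 2 * δ / D := by
      apply div_le_div_of_nonneg_left (by linarith) hD h3
end
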